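/- Let Q and Q' be subpolygons of P of type 2Co with up-right cut direction whose origin points o and o' lie on the same vertical grid line of the canonical grid, with kitty corners κ of o and κ' of o'. Then for any fixed grid point p in (Q1κ ∪ Q4κ) ∩ (Q1κ' ∪ Q4κ'), at most one of (Q, o, p) and (Q', o', p) is a candidate triplet. -/

import Mathlib

open Set

noncomputable section

/-- A point in the plane. -/
abbrev Point : Type := ℝ × ℝ

/-- The closed axis-aligned rectangle with opposite corners `a` and `b`. -/
def rectCC (a b : Point) : Set Point :=
  Set.Icc (min a.1 b.1) (max a.1 b.1) ×ˢ Set.Icc (min a.2 b.2) (max a.2 b.2)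

/-- A nondegenerate axis-aligned rectangle. -/
def IsRect (S : Set Point) : Prop :=
  ∃ a b : Point, a.1 < b.1 ∧ a.2 < b.2 ∧ S = rectCC a b

/-- A set which is a nondegenerate line segment. -/
def NondegSegment (S : Set Point) : Prop :=
  ∃ p q : Point, p ≠ q ∧ S = segment ℝ p q

/-- A compact regular-closed region whose boundary is a finite union of
axis-parallel segments: a rectilinear (sub)polygon region. -/
def IsRectilinearRegion (S : Set Point) : Prop :=
  IsCompact S ∧ S = closure (interior S) ∧
  ∃ E : Finset (Point × Point),
    (∀ e ∈ E, e.1.1 = e.2.1 ∨ e.1.2 = e.2.2) ∧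
    frontier S = ⋃ e ∈ E, segment ℝ e.1 e.2

/-- An axis-aligned rectilinear simple polygon with `n` vertices and no holes in
the plane, given by its cyclic vertex sequence together with the closed region
it bounds: consecutive edges are axis-parallel and alternate between horizontal
and vertical, nonadjacent edges are disjoint (simplicity), and the boundary of
the region is the union of the edges (a single cycle, hence no holes). -/
structure RectPoly where
  n : ℕ
  n_ge : 4 ≤ n
  vtx : ZMod n → Point
  inj : Function.Injective vtx
  edge_axis : ∀ i : ZMod n,
    (vtx i).1 = (vtx (i + 1)).1 ∨ (vtx i).2 = (vtx (i + 1)).2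
  edge_alt : ∀ i : ZMod n,
    ¬(((vtx i).1 = (vtx (i + 1)).1) ↔ ((vtx (i + 1)).1 = (vtx (i + 2)).1))
  simple : ∀ i j : ZMod n, i ≠ j → j ≠ i + 1 → i ≠ j + 1 →
    Disjoint (segment ℝ (vtx i) (vtx (i + 1))) (segment ℝ (vtx j) (vtx (j + 1)))
  carrier : Set Point
  compact' : IsCompact carrier
  regular' : carrier = closure (interior carrier)
  boundary' : frontier carrier = ⋃ i : ZMod n, segment ℝ (vtx i) (vtx (i + 1))

/-- The closed quadrant at `v` with horizontal direction `sx` (`true` = right)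
and vertical direction `sy` (`true` = up). -/
def quadrant (v : Point) (sx sy : Bool) : Set Point :=
  {p | (if sx then v.1 ≤ p.1 else p.1 ≤ v.1) ∧ (if sy then v.2 ≤ p.2 else p.2 ≤ v.2)}

/-- `v` is a convex vertex of the region `S`: near `v`, the region `S` is a
single quadrant at `v`. -/
def IsConvexVertex (S : Set Point) (v : Point) : Prop :=
  ∃ sx sy : Bool, ∃ ε > (0 : ℝ), ∀ p ∈ Metric.ball v ε, (p ∈ S ↔ p ∈ quadrant v sx sy)

/-- `v` is a reflex vertex of the region `S`: near `v`, the region `S` is the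
complement of an open quadrant at `v`. -/
def IsReflexVertex (S : Set Point) (v : Point) : Prop :=
  ∃ sx sy : Bool, ∃ ε > (0 : ℝ), ∀ p ∈ Metric.ball v ε,
    (p ∈ S ↔ p ∉ interior (quadrant v sx sy))

/-- An axis-parallel cut, recorded by its two endpoints. -/
structure Cut where
  a : Point
  b : Point
  axis : a.1 = b.1 ∨ a.2 = b.2
  ne : a ≠ b

/-- The closed segment of a cut. -/
def Cut.closedSeg (c : Cut) : Set Point := segment ℝ c.a c.b

/-- The open segment of a cut (a cut is an open line segment). -/
def Cut.openSeg (c : Cut) : Set Point := openSegment ℝ c.a c.b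

/-- The length of a cut. -/
def Cut.len (c : Cut) : ℝ := dist c.a c.b

/-- A cut is a vertex cut (v-cut) of the region `S` if it is incident to a
reflex vertex of `S`. -/
def IsVCutOf (S : Set Point) (c : Cut) : Prop :=
  IsReflexVertex S c.a ∨ IsReflexVertex S c.b

/-- A cut is an anchored cut (a-cut) of the region `S` if it is incident to
the boundary of `S`. -/
def IsACutOf (S : Set Point) (c : Cut) : Prop :=
  c.a ∈ frontier S ∨ c.b ∈ frontier S

/-- A partition of the region `Q` into interior-disjoint rectilinear pieces,
induced by a cutset of pairwise disjoint open axis-parallel cuts drawn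
inside `Q`. -/
structure CutPartition (Q : Set Point) where
  cuts : Finset Cut
  pieces : Finset (Set Point)
  cuts_sub : ∀ c ∈ cuts, Cut.openSeg c ⊆ interior Q
  cuts_disj : ∀ c ∈ cuts, ∀ c' ∈ cuts, c ≠ c' →
    Disjoint (Cut.openSeg c) (Cut.openSeg c')
  pieces_rectilinear : ∀ S ∈ pieces, IsRectilinearRegion S
  pieces_cover : ⋃₀ (↑pieces : Set (Set Point)) = Q
  pieces_disjoint : ∀ S ∈ pieces, ∀ T ∈ pieces, S ≠ T →
    Disjoint (interior S) (interior T)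
  induced : ∀ S ∈ pieces, frontier S ⊆ frontier Q ∪ ⋃ c ∈ cuts, Cut.closedSeg c
  cuts_used : ∀ c ∈ cuts, Cut.openSeg c ⊆ ⋃ S ∈ pieces, frontier S

/-- A rectangular partition of the region `Q`: a partition of `Q` into
axis-aligned rectangles. -/
structure RectPartition (Q : Set Point) extends CutPartition Q where
  pieces_rect : ∀ S ∈ pieces, IsRect S

/-- The ink (total length of the cuts) of a rectangular partition. -/
def ink {Q : Set Point} (Prt : RectPartition Q) : ℝ := ∑ c ∈ Prt.cuts, Cut.len c

/-- The minimum ink over all rectangular partitions of the region `Q`. -/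
def minInk (Q : Set Point) : ℝ :=
  sInf {r : ℝ | ∃ Prt : RectPartition Q, ink Prt = r}

/-- An i-partition: a rectangular partition of minimum total cut length. -/
def IsIPartition {Q : Set Point} (Prt : RectPartition Q) : Prop :=
  ∀ Prt' : RectPartition Q, ink Prt ≤ ink Prt'

/-- The width (smaller side length) of an axis-aligned rectangle. -/
def rectWidth (S : Set Point) : ℝ :=
  sSup {w : ℝ | ∃ a b : Point, a.1 < b.1 ∧ a.2 < b.2 ∧ S = rectCC a b ∧
    w = min (b.1 - a.1) (b.2 - a.2)}

/-- The width of a rectangular partition: the minimum width of its rectangles. -/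
def partWidth {Q : Set Point} (Prt : RectPartition Q) : ℝ :=
  sInf (rectWidth '' (↑Prt.pieces : Set (Set Point)))

/-- A rectangular partition is under the vertex incidence if all its cuts are
v-cuts. -/
def VertexIncident {Q : Set Point} (Prt : RectPartition Q) : Prop :=
  ∀ c ∈ Prt.cuts, IsVCutOf Q c

/-- A rectangular partition is under the boundary incidence if all its cuts are
a-cuts. -/
def BoundaryIncident {Q : Set Point} (Prt : RectPartition Q) : Prop :=
  ∀ c ∈ Prt.cuts, IsACutOf Q c

/-- A vt-partition: among all rectangular partitions under the vertex
incidence, it maximizes the width, and among those it has the fewest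
rectangles. -/
def IsVTPartition {Q : Set Point} (Prt : RectPartition Q) : Prop :=
  VertexIncident Prt ∧
  (∀ Prt' : RectPartition Q, VertexIncident Prt' → partWidth Prt' ≤ partWidth Prt) ∧
  (∀ Prt' : RectPartition Q, VertexIncident Prt' → partWidth Prt' = partWidth Prt →
    Prt.pieces.card ≤ Prt'.pieces.card)

/-- An at-partition: among all rectangular partitions under the boundary
incidence, it maximizes the width, and among those it has the fewest
rectangles. -/
def IsATPartition {Q : Set Point} (Prt : RectPartition Q) : Prop :=
  BoundaryIncident Prt ∧
  (∀ Prt' : RectPartition Q, BoundaryIncident Prt' → partWidth Prt' ≤ partWidth Prt) ∧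
  (∀ Prt' : RectPartition Q, BoundaryIncident Prt' → partWidth Prt' = partWidth Prt →
    Prt.pieces.card ≤ Prt'.pieces.card)

/-- A uni-rectangle partition of `Q` for the rectangle `rectCC a b`:
a partition of `Q` containing the rectangle as a piece, whose cutset
determines the rectangle from `Q` (every cut meets the boundary of the
rectangle in a nondegenerate segment). -/
structure UniRectPartition (Q : Set Point) (a b : Point) extends CutPartition Q where
  rect_mem : rectCC a b ∈ pieces
  determines : ∀ c ∈ cuts, NondegSegment (Cut.closedSeg c ∩ frontier (rectCC a b))

/-- The ink of a uni-rectangle partition: the total length of its cuts plus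
the sum of the minimum inks of its pieces. -/
def uniInk {Q : Set Point} {a b : Point} (U : UniRectPartition Q a b) : ℝ :=
  (∑ c ∈ U.cuts, Cut.len c) + ∑ S ∈ U.pieces, minInk S

/-- A `k`-cut subpolygon of `P`: its boundary consists of a portion of the
boundary of `P` together with a chain of `k` boundary cuts contained in the
interior of `P`, alternating between horizontal and vertical, whose extreme
endpoints lie on the boundary of `P`. -/
structure KCutSub (P : RectPoly) (k : ℕ) where
  region : Set Point
  sub : region ⊆ P.carrier
  rectilinear : IsRectilinearRegion region
  cuts : Fin k → Cut
  cuts_interior : ∀ i, Cut.openSeg (cuts i) ⊆ interior P.carrier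
  chain : ∀ i : Fin k, ∀ h : (i : ℕ) + 1 < k, (cuts i).b = (cuts ⟨(i : ℕ) + 1, h⟩).a
  alt : ∀ i : Fin k, ∀ h : (i : ℕ) + 1 < k,
    ¬(((cuts i).a.1 = (cuts i).b.1) ↔
      ((cuts ⟨(i : ℕ) + 1, h⟩).a.1 = (cuts ⟨(i : ℕ) + 1, h⟩).b.1))
  cuts_bd : ∀ i, Cut.closedSeg (cuts i) ⊆ frontier region
  bd_rest : frontier region ⊆ frontier P.carrier ∪ ⋃ i, Cut.closedSeg (cuts i)
  ends_bd : ∀ h : 0 < k, (cuts ⟨0, h⟩).a ∈ frontier P.carrier ∧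
    (cuts ⟨k - 1, Nat.sub_lt h Nat.one_pos⟩).b ∈ frontier P.carrier

/-- A region which is `P` itself or a 1-cut or a 2-cut subpolygon of `P`. -/
def IsLe2CutRegion (P : RectPoly) (S : Set Point) : Prop :=
  S = P.carrier ∨ (∃ Q : KCutSub P 1, Q.region = S) ∨ ∃ Q : KCutSub P 2, Q.region = S

/-- The origin point of a 2-cut subpolygon: the endpoint shared by its two
boundary cuts. -/
def KCutSub.origin {P : RectPoly} (Q : KCutSub P 2) : Point := (Q.cuts 0).b

/-- Type 2C: the shared endpoint of the two boundary cuts is a convex vertex. -/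
def Type2C {P : RectPoly} (Q : KCutSub P 2) : Prop := IsConvexVertex Q.region Q.origin

/-- Type 2R: the shared endpoint of the two boundary cuts is a reflex vertex. -/
def Type2R {P : RectPoly} (Q : KCutSub P 2) : Prop := IsReflexVertex Q.region Q.origin

/-- Type 1R (degenerate 1-cut subpolygon): the two edges of `P` connected by
the boundary cut are collinear with the cut. -/
def Type1R {P : RectPoly} (Q : KCutSub P 1) : Prop :=
  ∃ i j : ZMod P.n,
    (Q.cuts 0).a ∈ segment ℝ (P.vtx i) (P.vtx (i + 1)) ∧
    (Q.cuts 0).b ∈ segment ℝ (P.vtx j) (P.vtx (j + 1)) ∧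
    Collinear ℝ ({P.vtx i, P.vtx (i + 1), P.vtx j, P.vtx (j + 1),
      (Q.cuts 0).a, (Q.cuts 0).b} : Set Point)

/-- Type 1C: a 1-cut subpolygon which is not of type 1R. -/
def Type1C {P : RectPoly} (Q : KCutSub P 1) : Prop := ¬ Type1R Q

/-- A grid point of the canonical grid of `P` (induced by the lines through
the edges of `P`). -/
def IsGridPoint (P : RectPoly) (p : Point) : Prop :=
  (∃ i, (P.vtx i).1 = p.1) ∧ (∃ j, (P.vtx j).2 = p.2)

/-- `κ` is the kitty corner of the origin point `o` for the region `S`: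
`o`, `t = (κ.1, o.2)`, `κ`, `t' = (o.1, κ.2)` are the corners of `rectCC o κ`,
and `o t`, `o t'` are edges of `S` (they lie on the boundary of `S` and end at
vertices of `S`). -/
def IsKittyCornerAt (S : Set Point) (o κ : Point) : Prop :=
  κ.1 ≠ o.1 ∧ κ.2 ≠ o.2 ∧
  segment ℝ o (κ.1, o.2) ⊆ frontier S ∧
  segment ℝ o (o.1, κ.2) ⊆ frontier S ∧
  (IsConvexVertex S (κ.1, o.2) ∨ IsReflexVertex S (κ.1, o.2)) ∧
  (IsConvexVertex S (o.1, κ.2) ∨ IsReflexVertex S (o.1, κ.2))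

/-- The cut direction of a 2-cut subpolygon is up-right: one boundary cut lies
above the origin point and the other lies to its right. -/
def UpRight {P : RectPoly} (Q : KCutSub P 2) : Prop :=
  ((∀ p ∈ Cut.openSeg (Q.cuts 0), Q.origin.2 < p.2) ∧
    (∀ p ∈ Cut.openSeg (Q.cuts 1), Q.origin.1 < p.1)) ∨
  ((∀ p ∈ Cut.openSeg (Q.cuts 0), Q.origin.1 < p.1) ∧
    (∀ p ∈ Cut.openSeg (Q.cuts 1), Q.origin.2 < p.2))

/-- Top-right closed quadrant at `v`. -/
def quadTR (v : Point) : Set Point := {p | v.1 ≤ p.1 ∧ v.2 ≤ p.2}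

/-- Top-left closed quadrant at `v`. -/
def quadTL (v : Point) : Set Point := {p | p.1 ≤ v.1 ∧ v.2 ≤ p.2}

/-- Bottom-left closed quadrant at `v`. -/
def quadBL (v : Point) : Set Point := {p | p.1 ≤ v.1 ∧ p.2 ≤ v.2}

/-- Bottom-right closed quadrant at `v`. -/
def quadBR (v : Point) : Set Point := {p | v.1 ≤ p.1 ∧ p.2 ≤ v.2}

/-- A side of `rectCC o p` incident to `p` intersects the boundary of the
region `S` in a nondegenerate line segment. -/
def SideRule (S : Set Point) (o p : Point) : Prop :=
  NondegSegment (segment ℝ p (o.1, p.2) ∩ frontier S) ∨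
  NondegSegment (segment ℝ p (p.1, o.2) ∩ frontier S)

/-- The 2-cut property for a uni-rectangle partition: every piece other than
the determined rectangle is a ≤2-cut subpolygon of `P`. -/
def TwoCutProperty (P : RectPoly) {Q : Set Point} {a b : Point}
    (U : UniRectPartition Q a b) : Prop :=
  ∀ S ∈ U.pieces, S ≠ rectCC a b → IsLe2CutRegion P S

/-- The common part of being a candidate triplet `(Qr, o, p)`: `p` is a grid
point, `rectCC o p ⊆ Qr`, and there is a uni-rectangle partition of `Qr`
determining `rectCC o p` by v-cuts all of whose other pieces are ≤2-cut
subpolygons of `P`. -/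
def CandidateBase (P : RectPoly) (Qr : Set Point) (o p : Point) : Prop :=
  IsGridPoint P p ∧ rectCC o p ⊆ Qr ∧
  ∃ U : UniRectPartition Qr o p,
    (∀ c ∈ U.cuts, IsVCutOf Qr c) ∧ TwoCutProperty P U

/-- Candidate triplet of type 2C. -/
def Candidate2C (P : RectPoly) (Q : KCutSub P 2) (p : Point) : Prop :=
  Type2C Q ∧ CandidateBase P Q.region Q.origin p ∧
  (SideRule Q.region Q.origin p ∨
    ∀ κ, IsKittyCornerAt Q.region Q.origin κ → p ∉ interior (rectCC Q.origin κ))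

/-- `p` lies in a quadrant at `o` which neither contains `κ` nor is opposite
to the quadrant containing `κ`. -/
def Rule2R (o κ p : Point) : Prop :=
  (κ ∈ quadTR o ∧ p ∈ quadTL o ∪ quadBR o) ∨
  (κ ∈ quadTL o ∧ p ∈ quadTR o ∪ quadBL o) ∨
  (κ ∈ quadBL o ∧ p ∈ quadTL o ∪ quadBR o) ∨
  (κ ∈ quadBR o ∧ p ∈ quadTR o ∪ quadBL o)

/-- Candidate triplet of type 2R. -/
def Candidate2R (P : RectPoly) (Q : KCutSub P 2) (p : Point) : Prop :=
  Type2R Q ∧ CandidateBase P Q.region Q.origin p ∧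
  (SideRule Q.region Q.origin p ∨
    ∀ κ, IsKittyCornerAt Q.region Q.origin κ → Rule2R Q.origin κ p)

/-- Type 2Ch (half-open): one of the two corners of `rectCC o κ` other than
`o` and `κ` is convex and the other is reflex. -/
def Type2Ch {P : RectPoly} (Q : KCutSub P 2) : Prop :=
  Type2C Q ∧ ∃ κ, IsKittyCornerAt Q.region Q.origin κ ∧
    ((IsConvexVertex Q.region (κ.1, Q.origin.2) ∧
        IsReflexVertex Q.region (Q.origin.1, κ.2)) ∨
      (IsReflexVertex Q.region (κ.1, Q.origin.2) ∧
        IsConvexVertex Q.region (Q.origin.1, κ.2)))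

/-- Type 2Co (open): both corners of `rectCC o κ` other than `o` and `κ` are
reflex vertices of `Q`. -/
def Type2Co {P : RectPoly} (Q : KCutSub P 2) : Prop :=
  Type2C Q ∧ ∃ κ, IsKittyCornerAt Q.region Q.origin κ ∧
    IsReflexVertex Q.region (κ.1, Q.origin.2) ∧
    IsReflexVertex Q.region (Q.origin.1, κ.2)

/-- Vertex type convex-reflex (for up-right cut direction): the bottom-right
corner of `rectCC o κ` is convex and the top-left corner is reflex. -/
def VertexTypeConvexReflex {P : RectPoly} (Q : KCutSub P 2) : Prop :=
  ∃ κ, IsKittyCornerAt Q.region Q.origin κ ∧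
    IsConvexVertex Q.region (κ.1, Q.origin.2) ∧
    IsReflexVertex Q.region (Q.origin.1, κ.2)

/-- `p` is cut-visible for the 2-cut subpolygon `Q`: `p` has an orthogonal
projection onto one of the boundary cuts of `Q`. -/
def CutVisible {P : RectPoly} (Q : KCutSub P 2) (p : Point) : Prop :=
  ∃ i : Fin 2,
    ((Q.cuts i).a.1 = (Q.cuts i).b.1 ∧
      (((Q.cuts i).a.1, p.2) : Point) ∈ Cut.closedSeg (Q.cuts i)) ∨
    ((Q.cuts i).a.2 = (Q.cuts i).b.2 ∧
      ((p.1, (Q.cuts i).a.2) : Point) ∈ Cut.closedSeg (Q.cuts i))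

/-- An origin point of a type-1C subpolygon: an endpoint of its boundary cut
lying at a convex vertex of the subpolygon. -/
def Origin1C {P : RectPoly} (Q : KCutSub P 1) (o : Point) : Prop :=
  (o = (Q.cuts 0).a ∨ o = (Q.cuts 0).b) ∧ IsConvexVertex Q.region o

/-- An origin point of a type-1R subpolygon: a grid point contained in the
subpolygon lying on the grid line through its boundary cut. -/
def Origin1R {P : RectPoly} (Q : KCutSub P 1) (o : Point) : Prop :=
  IsGridPoint P o ∧ o ∈ Q.region ∧
  Collinear ℝ ({(Q.cuts 0).a, (Q.cuts 0).b, o} : Set Point)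

/-- Candidate triplet of type 1C (treating the subpolygon as a type-2C one,
with the kitty corner defined accordingly). -/
def Candidate1C (P : RectPoly) (Q : KCutSub P 1) (o p : Point) : Prop :=
  Type1C Q ∧ Origin1C Q o ∧ CandidateBase P Q.region o p ∧
  (SideRule Q.region o p ∨
    ∀ κ, IsKittyCornerAt Q.region o κ → p ∉ interior (rectCC o κ))

/-- Candidate triplet of type 1R: the boundary cut intersects the boundary of
`rectCC o p` in a nondegenerate line segment. -/
def Candidate1R (P : RectPoly) (Q : KCutSub P 1) (o p : Point) : Prop :=
  Type1R Q ∧ Origin1R Q o ∧ CandidateBase P Q.region o p ∧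
  NondegSegment (Cut.closedSeg (Q.cuts 0) ∩ frontier (rectCC o p))


/-! ### Helper lemmas -/

section Helpers
open Metric


private lemma comb_le {a b x y M : ℝ} (ha : 0 ≤ a) (hb : 0 ≤ b) (hab : a + b = 1)
    (hx : x ≤ M) (hy : y ≤ M) : a * x + b * y ≤ M := by
  have t1 : a * x ≤ a * M := mul_le_mul_of_nonneg_left hx ha
  have t2 : b * y ≤ b * M := mul_le_mul_of_nonneg_left hy hb
  have t3 : a * M + b * M = M := by rw [← add_mul, hab, one_mul]
  linarith

private lemma le_comb {a b x y m : ℝ} (ha : 0 ≤ a) (hb : 0 ≤ b) (hab : a + b = 1)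
    (hx : m ≤ x) (hy : m ≤ y) : m ≤ a * x + b * y := by
  have t1 : a * m ≤ a * x := mul_le_mul_of_nonneg_left hx ha
  have t2 : b * m ≤ b * y := mul_le_mul_of_nonneg_left hy hb
  have t3 : a * m + b * m = m := by rw [← add_mul, hab, one_mul]
  linarith


private lemma lt_comb {a b x y : ℝ} (hb : 0 < b) (hab : a + b = 1) (hxy : x < y) :
    x < a * x + b * y := by
  have e : a * x + b * x = x := by rw [← add_mul, hab, one_mul]
  have f : b * x < b * y := by exact mul_lt_mul_of_pos_left hxy hb
  linarith

private lemma comb_lt {a b x y : ℝ} (ha : 0 < a) (hab : a + b = 1) (hxy : x < y) :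
    a * x + b * y < y := by
  have e : a * y + b * y = y := by rw [← add_mul, hab, one_mul]
  have f : a * x < a * y := by exact mul_lt_mul_of_pos_left hxy ha
  linarith

lemma mem_ball_pt {z c : Point} {r : ℝ} :
    z ∈ ball c r ↔ |z.1 - c.1| < r ∧ |z.2 - c.2| < r := by
  rw [mem_ball, Prod.dist_eq, max_lt_iff, Real.dist_eq, Real.dist_eq]

lemma seg_fst_eq {p q : Point} (h : p.1 = q.1) {z : Point} (hz : z ∈ segment ℝ p q) :
    z.1 = p.1 := by
  obtain ⟨a, b, ha, hb, hab, rfl⟩ := hz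
  show a * p.1 + b * q.1 = p.1
  rw [← h, ← add_mul, hab, one_mul]

lemma seg_snd_eq {p q : Point} (h : p.2 = q.2) {z : Point} (hz : z ∈ segment ℝ p q) :
    z.2 = p.2 := by
  obtain ⟨a, b, ha, hb, hab, rfl⟩ := hz
  show a * p.2 + b * q.2 = p.2
  rw [← h, ← add_mul, hab, one_mul]

lemma mem_seg_vert {p q : Point} (h : p.1 = q.1) {z : Point} :
    z ∈ segment ℝ p q ↔ z.1 = p.1 ∧ z.2 ∈ Icc (min p.2 q.2) (max p.2 q.2) := by
  constructor
  · intro hz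
    refine ⟨seg_fst_eq h hz, ?_⟩
    obtain ⟨a, b, ha, hb, hab, rfl⟩ := hz
    constructor
    · exact le_comb ha hb hab (min_le_left p.2 q.2) (min_le_right p.2 q.2)
    · exact comb_le ha hb hab (le_max_left p.2 q.2) (le_max_right p.2 q.2)
  · rintro ⟨h1, h2⟩
    have h3 : z.2 ∈ segment ℝ p.2 q.2 := by
      rw [segment_eq_uIcc, uIcc]; exact h2
    obtain ⟨a, b, ha, hb, hab, hz2⟩ := h3
    refine ⟨a, b, ha, hb, hab, ?_⟩
    apply Prod.ext
    · show a * p.1 + b * q.1 = z.1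
      rw [← h, ← add_mul, hab, one_mul, h1]
    · exact hz2

lemma mem_seg_horiz {p q : Point} (h : p.2 = q.2) {z : Point} :
    z ∈ segment ℝ p q ↔ z.2 = p.2 ∧ z.1 ∈ Icc (min p.1 q.1) (max p.1 q.1) := by
  constructor
  · intro hz
    refine ⟨seg_snd_eq h hz, ?_⟩
    obtain ⟨a, b, ha, hb, hab, rfl⟩ := hz
    constructor
    · exact le_comb ha hb hab (min_le_left p.1 q.1) (min_le_right p.1 q.1)
    · exact comb_le ha hb hab (le_max_left p.1 q.1) (le_max_right p.1 q.1)
  · rintro ⟨h1, h2⟩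
    have h3 : z.1 ∈ segment ℝ p.1 q.1 := by
      rw [segment_eq_uIcc, uIcc]; exact h2
    obtain ⟨a, b, ha, hb, hab, hz1⟩ := h3
    refine ⟨a, b, ha, hb, hab, ?_⟩
    apply Prod.ext
    · exact hz1
    · show a * p.2 + b * q.2 = z.2
      rw [← h, ← add_mul, hab, one_mul, h1]

lemma mem_oseg_vert {p q : Point} (h : p.1 = q.1) (hne : p.2 < q.2) {z : Point} :
    z ∈ openSegment ℝ p q ↔ z.1 = p.1 ∧ z.2 ∈ Ioo p.2 q.2 := by
  constructor
  · rintro ⟨a, b, ha, hb, hab, rfl⟩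
    refine ⟨?_, ?_, ?_⟩
    · show a * p.1 + b * q.1 = p.1
      rw [← h, ← add_mul, hab, one_mul]
    · exact lt_comb hb hab hne
    · exact comb_lt ha hab hne
  · rintro ⟨h1, h2⟩
    have h3 : z.2 ∈ openSegment ℝ p.2 q.2 := by
      rw [openSegment_eq_Ioo hne]; exact h2
    obtain ⟨a, b, ha, hb, hab, hz2⟩ := h3
    refine ⟨a, b, ha, hb, hab, ?_⟩
    apply Prod.ext
    · show a * p.1 + b * q.1 = z.1
      rw [← h, ← add_mul, hab, one_mul, h1]
    · exact hz2

lemma mem_oseg_horiz {p q : Point} (h : p.2 = q.2) (hne : p.1 < q.1) {z : Point} :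
    z ∈ openSegment ℝ p q ↔ z.2 = p.2 ∧ z.1 ∈ Ioo p.1 q.1 := by
  constructor
  · rintro ⟨a, b, ha, hb, hab, rfl⟩
    refine ⟨?_, ?_, ?_⟩
    · show a * p.2 + b * q.2 = p.2
      rw [← h, ← add_mul, hab, one_mul]
    · exact lt_comb hb hab hne
    · exact comb_lt ha hab hne
  · rintro ⟨h1, h2⟩
    have h3 : z.1 ∈ openSegment ℝ p.1 q.1 := by
      rw [openSegment_eq_Ioo hne]; exact h2
    obtain ⟨a, b, ha, hb, hab, hz1⟩ := h3
    refine ⟨a, b, ha, hb, hab, ?_⟩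
    apply Prod.ext
    · exact hz1
    · show a * p.2 + b * q.2 = z.2
      rw [← h, ← add_mul, hab, one_mul, h1]

/-- Quadrants as product sets. -/
lemma quadrant_eq_prod (v : Point) (sx sy : Bool) :
    quadrant v sx sy =
      (if sx then Ici v.1 else Iic v.1) ×ˢ (if sy then Ici v.2 else Iic v.2) := by
  ext z
  cases sx <;> cases sy <;>
      simp only [quadrant, if_true, if_false, Bool.false_eq_true, mem_setOf_eq,
        Set.mem_prod, mem_Ici, mem_Iic] <;> tauto

lemma isClosed_quadrant (v : Point) (sx sy : Bool) : IsClosed (quadrant v sx sy) := by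
  rw [quadrant_eq_prod]
  apply IsClosed.prod <;> cases sx <;> cases sy <;>
    first
      | exact isClosed_Ici
      | exact isClosed_Iic

lemma interior_quadrant (v : Point) (sx sy : Bool) :
    interior (quadrant v sx sy) =
      (if sx then Ioi v.1 else Iio v.1) ×ˢ (if sy then Ioi v.2 else Iio v.2) := by
  rw [quadrant_eq_prod, interior_prod_eq]
  cases sx <;> cases sy <;> simp [interior_Ici, interior_Iic]

lemma closure_interior_quadrant (v : Point) (sx sy : Bool) :
    closure (interior (quadrant v sx sy)) = quadrant v sx sy := by
  rw [interior_quadrant, closure_prod_eq, quadrant_eq_prod]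
  cases sx <;> cases sy <;> simp [closure_Ioi, closure_Iio]

lemma frontier_quadrant_subset (v : Point) (sx sy : Bool) :
    frontier (quadrant v sx sy) ⊆ quadrant v sx sy :=
  (isClosed_quadrant v sx sy).frontier_subset

lemma mem_frontier_quadrant {v : Point} {sx sy : Bool} {z : Point} :
    z ∈ frontier (quadrant v sx sy) ↔ z ∈ quadrant v sx sy ∧ (z.1 = v.1 ∨ z.2 = v.2) := by
  rw [frontier, (isClosed_quadrant v sx sy).closure_eq, interior_quadrant]
  constructor
  · rintro ⟨hq, hn⟩
    refine ⟨hq, ?_⟩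
    by_contra hcon
    push_neg at hcon
    apply hn
    rw [Set.mem_prod]
    have hq' := (quadrant_eq_prod v sx sy) ▸ hq
    rw [Set.mem_prod] at hq'
    constructor
    · cases sx <;> simp_all <;> first | exact lt_of_le_of_ne hq'.1 hcon.1 | exact lt_of_le_of_ne hq'.1 (Ne.symm hcon.1)
    · cases sy <;> simp_all <;> first | exact lt_of_le_of_ne hq'.2 hcon.2 | exact lt_of_le_of_ne hq'.2 (Ne.symm hcon.2)
  · rintro ⟨hq, hor⟩
    refine ⟨hq, ?_⟩
    intro hmem
    rw [Set.mem_prod] at hmem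
    rcases hor with h | h
    · cases sx <;> simp_all <;> exact absurd hmem.1 (by simp [h])
    · cases sy <;> simp_all <;> exact absurd hmem.2 (by simp [h])

/-- If two sets agree on an open ball, their frontiers agree there. -/
lemma frontier_congr_ball {S T : Set Point} {c : Point} {ε : ℝ}
    (h : ∀ z ∈ ball c ε, (z ∈ S ↔ z ∈ T)) :
    ∀ z ∈ ball c ε, (z ∈ frontier S ↔ z ∈ frontier T) := by
  have key : ∀ S T : Set Point, (∀ z ∈ ball c ε, (z ∈ S ↔ z ∈ T)) →
      ∀ z ∈ ball c ε, z ∈ frontier S → z ∈ frontier T := by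
    intro S T h z hz hfr
    rw [frontier] at hfr ⊢
    obtain ⟨hcl, hni⟩ := hfr
    constructor
    · rw [_root_.mem_closure_iff] at hcl ⊢
      intro o ho hzo
      obtain ⟨w, hw⟩ := hcl (o ∩ ball c ε) (ho.inter isOpen_ball) ⟨hzo, hz⟩
      exact ⟨w, hw.1.1, (h w hw.1.2).mp hw.2⟩
    · intro hiT
      apply hni
      rw [mem_interior_iff_mem_nhds] at hiT ⊢
      have : T ∩ ball c ε ∈ nhds z := Filter.inter_mem hiT (isOpen_ball.mem_nhds hz)
      apply Filter.mem_of_superset this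
      rintro w ⟨hw1, hw2⟩
      exact (h w hw2).mpr hw1
  intro z hz
  exact ⟨key S T h z hz, key T S (fun w hw => (h w hw).symm) z hz⟩

/-- Local frontier description at a convex or reflex vertex. -/
lemma vertex_frontier_local {S : Set Point} {v : Point} {sx sy : Bool} {ε : ℝ}
    (hg : (∀ z ∈ ball v ε, (z ∈ S ↔ z ∈ quadrant v sx sy)) ∨
          (∀ z ∈ ball v ε, (z ∈ S ↔ z ∉ interior (quadrant v sx sy)))) :
    ∀ z ∈ ball v ε, (z ∈ frontier S ↔ z ∈ frontier (quadrant v sx sy)) := by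
  rcases hg with hg | hg
  · exact frontier_congr_ball hg
  · intro z hz
    have h1 := frontier_congr_ball (S := S) (T := (interior (quadrant v sx sy))ᶜ)
      (fun w hw => by rw [hg w hw]; rfl) z hz
    rw [h1, frontier_compl]
    have : frontier (interior (quadrant v sx sy)) = frontier (quadrant v sx sy) := by
      rw [frontier, frontier, closure_interior_quadrant, interior_interior,
        (isClosed_quadrant v sx sy).closure_eq]
    rw [this]

/-- A vertex (convex or reflex) of `S` cannot have boundary points of `S`
horizontally on both sides arbitrarily close. -/
lemma no_bidir_horiz {S : Set Point} {v : Point}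
    (hv : IsConvexVertex S v ∨ IsReflexVertex S v) {δ₀ : ℝ} (hδ₀ : 0 < δ₀)
    (hl : ∀ δ ∈ Ioo (0:ℝ) δ₀, ((v.1 - δ, v.2) : Point) ∈ frontier S)
    (hr : ∀ δ ∈ Ioo (0:ℝ) δ₀, ((v.1 + δ, v.2) : Point) ∈ frontier S) : False := by
  obtain ⟨sx, sy, ε, hε, hg⟩ :
      ∃ sx sy : Bool, ∃ ε > (0:ℝ),
        (∀ z ∈ ball v ε, (z ∈ S ↔ z ∈ quadrant v sx sy)) ∨
        (∀ z ∈ ball v ε, (z ∈ S ↔ z ∉ interior (quadrant v sx sy))) := by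
    rcases hv with ⟨sx, sy, ε, hε, hg⟩ | ⟨sx, sy, ε, hε, hg⟩
    exacts [⟨sx, sy, ε, hε, Or.inl hg⟩, ⟨sx, sy, ε, hε, Or.inr hg⟩]
  set δ := min δ₀ ε / 2 with hδdef
  have hδpos : 0 < δ := by positivity
  have hδδ₀ : δ < δ₀ := by
    have := min_le_left δ₀ ε; linarith
  have hδε : δ < ε := by
    have := min_le_right δ₀ ε; linarith
  have hball : ∀ s : ℝ, |s| = δ → ((v.1 + s, v.2) : Point) ∈ ball v ε := by
    intro s hs
    rw [mem_ball_pt]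
    constructor
    · simp only [add_sub_cancel_left]
      rw [hs]; exact hδε
    · simp only [sub_self, abs_zero]; exact hε
  have hfl := vertex_frontier_local hg
  have hLq : ((v.1 - δ, v.2) : Point) ∈ quadrant v sx sy := by
    have hmem : ((v.1 - δ, v.2) : Point) ∈ ball v ε := by
      have := hball (-δ) (by rw [abs_neg, abs_of_pos hδpos])
      simpa [sub_eq_add_neg] using this
    have := (hfl _ hmem).mp (hl δ ⟨hδpos, hδδ₀⟩)
    exact frontier_quadrant_subset v sx sy this
  have hRq : ((v.1 + δ, v.2) : Point) ∈ quadrant v sx sy := by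
    have hmem : ((v.1 + δ, v.2) : Point) ∈ ball v ε := hball δ (abs_of_pos hδpos)
    have := (hfl _ hmem).mp (hr δ ⟨hδpos, hδδ₀⟩)
    exact frontier_quadrant_subset v sx sy this
  cases sx
  · simp only [quadrant, if_false, Bool.false_eq_true, mem_setOf_eq] at hRq
    linarith [hRq.1]
  · simp only [quadrant, if_true, mem_setOf_eq] at hLq
    linarith [hLq.1]

lemma no_bidir_vert {S : Set Point} {v : Point}
    (hv : IsConvexVertex S v ∨ IsReflexVertex S v) {δ₀ : ℝ} (hδ₀ : 0 < δ₀)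
    (hl : ∀ δ ∈ Ioo (0:ℝ) δ₀, ((v.1, v.2 - δ) : Point) ∈ frontier S)
    (hr : ∀ δ ∈ Ioo (0:ℝ) δ₀, ((v.1, v.2 + δ) : Point) ∈ frontier S) : False := by
  obtain ⟨sx, sy, ε, hε, hg⟩ :
      ∃ sx sy : Bool, ∃ ε > (0:ℝ),
        (∀ z ∈ ball v ε, (z ∈ S ↔ z ∈ quadrant v sx sy)) ∨
        (∀ z ∈ ball v ε, (z ∈ S ↔ z ∉ interior (quadrant v sx sy))) := by
    rcases hv with ⟨sx, sy, ε, hε, hg⟩ | ⟨sx, sy, ε, hε, hg⟩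
    exacts [⟨sx, sy, ε, hε, Or.inl hg⟩, ⟨sx, sy, ε, hε, Or.inr hg⟩]
  set δ := min δ₀ ε / 2 with hδdef
  have hδpos : 0 < δ := by positivity
  have hδδ₀ : δ < δ₀ := by
    have := min_le_left δ₀ ε; linarith
  have hδε : δ < ε := by
    have := min_le_right δ₀ ε; linarith
  have hball : ∀ s : ℝ, |s| = δ → ((v.1, v.2 + s) : Point) ∈ ball v ε := by
    intro s hs
    rw [mem_ball_pt]
    constructor
    · simp only [sub_self, abs_zero]; exact hε
    · simp only [add_sub_cancel_left]
      rw [hs]; exact hδε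
  have hfl := vertex_frontier_local hg
  have hLq : ((v.1, v.2 - δ) : Point) ∈ quadrant v sx sy := by
    have hmem : ((v.1, v.2 - δ) : Point) ∈ ball v ε := by
      have := hball (-δ) (by rw [abs_neg, abs_of_pos hδpos])
      simpa [sub_eq_add_neg] using this
    have := (hfl _ hmem).mp (hl δ ⟨hδpos, hδδ₀⟩)
    exact frontier_quadrant_subset v sx sy this
  have hRq : ((v.1, v.2 + δ) : Point) ∈ quadrant v sx sy := by
    have hmem : ((v.1, v.2 + δ) : Point) ∈ ball v ε := hball δ (abs_of_pos hδpos)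
    have := (hfl _ hmem).mp (hr δ ⟨hδpos, hδδ₀⟩)
    exact frontier_quadrant_subset v sx sy this
  cases sy
  · simp only [quadrant, if_false, Bool.false_eq_true, mem_setOf_eq] at hRq
    linarith [hRq.2]
  · simp only [quadrant, if_true, mem_setOf_eq] at hLq
    linarith [hLq.2]

end Helpers


section Extraction
open Metric

variable {P : RectPoly}

lemma region_isClosed {k : ℕ} (Q : KCutSub P k) : IsClosed Q.region :=
  Q.rectilinear.1.isClosed

lemma frontier_region_subset {k : ℕ} (Q : KCutSub P k) : frontier Q.region ⊆ Q.region :=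
  (region_isClosed Q).frontier_subset

lemma interior_rectCC (o p : Point) :
    interior (rectCC o p) =
      Ioo (min o.1 p.1) (max o.1 p.1) ×ˢ Ioo (min o.2 p.2) (max o.2 p.2) := by
  rw [rectCC, interior_prod_eq, interior_Icc, interior_Icc]

lemma mem_rectCC {o p z : Point} :
    z ∈ rectCC o p ↔ (min o.1 p.1 ≤ z.1 ∧ z.1 ≤ max o.1 p.1) ∧
      (min o.2 p.2 ≤ z.2 ∧ z.2 ≤ max o.2 p.2) := by
  rw [rectCC]
  exact Iff.rfl

lemma rect_nondeg {o p : Point} (h : IsRectilinearRegion (rectCC o p)) :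
    o.1 ≠ p.1 ∧ o.2 ≠ p.2 := by
  constructor
  · intro he
    have h1 : interior (rectCC o p) = ∅ := by
      rw [interior_rectCC, he, min_self, max_self]
      simp
    have h2 := h.2.1
    rw [h1, closure_empty] at h2
    have : ((min o.1 p.1, min o.2 p.2) : Point) ∈ rectCC o p := by
      rw [mem_rectCC]
      exact ⟨⟨le_refl _, min_le_max⟩, ⟨le_refl _, min_le_max⟩⟩
    rw [h2] at this
    exact this
  · intro he
    have h1 : interior (rectCC o p) = ∅ := by
      rw [interior_rectCC, he, min_self, max_self]
      simp
    have h2 := h.2.1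
    rw [h1, closure_empty] at h2
    have : ((min o.1 p.1, min o.2 p.2) : Point) ∈ rectCC o p := by
      rw [mem_rectCC]
      exact ⟨⟨le_refl _, min_le_max⟩, ⟨le_refl _, min_le_max⟩⟩
    rw [h2] at this
    exact this

private lemma cut_vert_data (c : Cut) (o : Point) (hend : c.a = o ∨ c.b = o)
    (habove : ∀ z ∈ Cut.openSeg c, o.2 < z.2) :
    ∃ v : Point, (v = c.a ∨ v = c.b) ∧ v ≠ o ∧ v.1 = o.1 ∧ o.2 < v.2 ∧
      Cut.closedSeg c = {w : Point | w.1 = o.1 ∧ w.2 ∈ Icc o.2 v.2} ∧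
      Cut.openSeg c = {w : Point | w.1 = o.1 ∧ w.2 ∈ Ioo o.2 v.2} := by
  have hmid : (((c.a.1 + c.b.1)/2, (c.a.2 + c.b.2)/2) : Point) ∈ Cut.openSeg c := by
    refine ⟨1/2, 1/2, by norm_num, by norm_num, by norm_num, ?_⟩
    apply Prod.ext
    · show (1:ℝ)/2 * c.a.1 + 1/2 * c.b.1 = (c.a.1 + c.b.1)/2
      ring
    · show (1:ℝ)/2 * c.a.2 + 1/2 * c.b.2 = (c.a.2 + c.b.2)/2
      ring
  have hmid2 := habove _ hmid
  rcases hend with he | he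
  · -- c.a = o, v := c.b
    have hax : c.a.1 = c.b.1 := by
      rcases c.axis with h | h
      · exact h
      · exfalso
        rw [he] at h hmid2
        simp only at hmid2
        rw [← h] at hmid2
        linarith
    have hv2 : o.2 < c.b.2 := by
      rw [he] at hmid2 hax
      simp only at hmid2
      linarith
    refine ⟨c.b, Or.inr rfl, ?_, by rw [← hax, he], hv2, ?_, ?_⟩
    · intro hco
      rw [hco] at hv2
      exact lt_irrefl _ hv2
    · rw [Cut.closedSeg]
      ext w
      rw [mem_seg_vert hax]
      rw [he]
      constructor
      · rintro ⟨h1, h2⟩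
        refine ⟨h1, ?_⟩
        rwa [min_eq_left hv2.le, max_eq_right hv2.le] at h2
      · rintro ⟨h1, h2⟩
        refine ⟨h1, ?_⟩
        rwa [min_eq_left hv2.le, max_eq_right hv2.le]
    · rw [Cut.openSeg]
      ext w
      have := mem_oseg_vert (p := c.a) (q := c.b) hax (by rw [he]; exact hv2) (z := w)
      rw [this, he]
      exact Iff.rfl
  · -- c.b = o, v := c.a
    have hax : c.a.1 = c.b.1 := by
      rcases c.axis with h | h
      · exact h
      · exfalso
        rw [he] at h hmid2
        simp only at hmid2
        rw [h] at hmid2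
        linarith
    have hv2 : o.2 < c.a.2 := by
      rw [he] at hmid2 hax
      simp only at hmid2
      linarith
    refine ⟨c.a, Or.inl rfl, ?_, by rw [hax, he], hv2, ?_, ?_⟩
    · intro hco
      rw [hco] at hv2
      exact lt_irrefl _ hv2
    · rw [Cut.closedSeg, segment_symm]
      ext w
      rw [mem_seg_vert hax.symm]
      rw [he]
      constructor
      · rintro ⟨h1, h2⟩
        refine ⟨h1, ?_⟩
        rwa [min_eq_left hv2.le, max_eq_right hv2.le] at h2
      · rintro ⟨h1, h2⟩
        refine ⟨h1, ?_⟩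
        rwa [min_eq_left hv2.le, max_eq_right hv2.le]
    · rw [Cut.openSeg, openSegment_symm]
      ext w
      have := mem_oseg_vert (p := c.b) (q := c.a) hax.symm (by rw [he]; exact hv2) (z := w)
      rw [this, he]
      exact Iff.rfl

private lemma cut_horiz_data (c : Cut) (o : Point) (hend : c.a = o ∨ c.b = o)
    (hright : ∀ z ∈ Cut.openSeg c, o.1 < z.1) :
    ∃ v : Point, (v = c.a ∨ v = c.b) ∧ v ≠ o ∧ v.2 = o.2 ∧ o.1 < v.1 ∧
      Cut.closedSeg c = {w : Point | w.2 = o.2 ∧ w.1 ∈ Icc o.1 v.1} ∧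
      Cut.openSeg c = {w : Point | w.2 = o.2 ∧ w.1 ∈ Ioo o.1 v.1} := by
  have hmid : (((c.a.1 + c.b.1)/2, (c.a.2 + c.b.2)/2) : Point) ∈ Cut.openSeg c := by
    refine ⟨1/2, 1/2, by norm_num, by norm_num, by norm_num, ?_⟩
    apply Prod.ext
    · show (1:ℝ)/2 * c.a.1 + 1/2 * c.b.1 = (c.a.1 + c.b.1)/2
      ring
    · show (1:ℝ)/2 * c.a.2 + 1/2 * c.b.2 = (c.a.2 + c.b.2)/2
      ring
  have hmid2 := hright _ hmid
  rcases hend with he | he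
  · have hax : c.a.2 = c.b.2 := by
      rcases c.axis with h | h
      · exfalso
        rw [he] at h hmid2
        simp only at hmid2
        rw [← h] at hmid2
        linarith
      · exact h
    have hv1 : o.1 < c.b.1 := by
      rw [he] at hmid2 hax
      simp only at hmid2
      linarith
    refine ⟨c.b, Or.inr rfl, ?_, by rw [← hax, he], hv1, ?_, ?_⟩
    · intro hco
      rw [hco] at hv1
      exact lt_irrefl _ hv1
    · rw [Cut.closedSeg]
      ext w
      rw [mem_seg_horiz hax]
      rw [he]
      constructor
      · rintro ⟨h1, h2⟩
        refine ⟨h1, ?_⟩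
        rwa [min_eq_left hv1.le, max_eq_right hv1.le] at h2
      · rintro ⟨h1, h2⟩
        refine ⟨h1, ?_⟩
        rwa [min_eq_left hv1.le, max_eq_right hv1.le]
    · rw [Cut.openSeg]
      ext w
      have := mem_oseg_horiz (p := c.a) (q := c.b) hax (by rw [he]; exact hv1) (z := w)
      rw [this, he]
      exact Iff.rfl
  · have hax : c.a.2 = c.b.2 := by
      rcases c.axis with h | h
      · exfalso
        rw [he] at h hmid2
        simp only at hmid2
        rw [h] at hmid2
        linarith
      · exact h
    have hv1 : o.1 < c.a.1 := by
      rw [he] at hmid2 hax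
      simp only at hmid2
      linarith
    refine ⟨c.a, Or.inl rfl, ?_, by rw [hax, he], hv1, ?_, ?_⟩
    · intro hco
      rw [hco] at hv1
      exact lt_irrefl _ hv1
    · rw [Cut.closedSeg, segment_symm]
      ext w
      rw [mem_seg_horiz hax.symm]
      rw [he]
      constructor
      · rintro ⟨h1, h2⟩
        refine ⟨h1, ?_⟩
        rwa [min_eq_left hv1.le, max_eq_right hv1.le] at h2
      · rintro ⟨h1, h2⟩
        refine ⟨h1, ?_⟩
        rwa [min_eq_left hv1.le, max_eq_right hv1.le]
    · rw [Cut.openSeg, openSegment_symm]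
      ext w
      have := mem_oseg_horiz (p := c.b) (q := c.a) hax.symm (by rw [he]; exact hv1) (z := w)
      rw [this, he]
      exact Iff.rfl

/-- Structure of the two cuts of an up-right 2-cut subpolygon. -/
lemma cut_data (Q : KCutSub P 2) (hur : UpRight Q) :
    ∃ hh ww : ℝ, Q.origin.2 < hh ∧ Q.origin.1 < ww ∧
      ((Q.origin.1, hh) : Point) ∈ frontier P.carrier ∧
      ((ww, Q.origin.2) : Point) ∈ frontier P.carrier ∧
      {w : Point | w.1 = Q.origin.1 ∧ w.2 ∈ Icc Q.origin.2 hh} ⊆ frontier Q.region ∧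
      {w : Point | w.2 = Q.origin.2 ∧ w.1 ∈ Icc Q.origin.1 ww} ⊆ frontier Q.region ∧
      {w : Point | w.1 = Q.origin.1 ∧ w.2 ∈ Ioo Q.origin.2 hh} ⊆ interior P.carrier ∧
      {w : Point | w.2 = Q.origin.2 ∧ w.1 ∈ Ioo Q.origin.1 ww} ⊆ interior P.carrier ∧
      frontier Q.region ⊆ frontier P.carrier ∪
        ({w : Point | w.1 = Q.origin.1 ∧ w.2 ∈ Icc Q.origin.2 hh} ∪
         {w : Point | w.2 = Q.origin.2 ∧ w.1 ∈ Icc Q.origin.1 ww}) := by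
  set o := Q.origin with ho
  have hb0 : (Q.cuts 0).b = o := rfl
  have hchain : (Q.cuts 0).b = (Q.cuts 1).a := by
    have := Q.chain 0 (by norm_num)
    convert this using 2
    rfl
  have hends := Q.ends_bd (by norm_num)
  have hea : (Q.cuts 0).a ∈ frontier P.carrier := hends.1
  have heb : (Q.cuts 1).b ∈ frontier P.carrier := by
    have := hends.2
    convert this using 2
    rfl
  have hunion : (⋃ i, Cut.closedSeg (Q.cuts i)) =
      Cut.closedSeg (Q.cuts 0) ∪ Cut.closedSeg (Q.cuts 1) := by
    ext w
    simp only [Set.mem_iUnion, Set.mem_union]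
    constructor
    · rintro ⟨i, hi⟩
      fin_cases i
      · exact Or.inl hi
      · exact Or.inr hi
    · rintro (h | h)
      exacts [⟨0, h⟩, ⟨1, h⟩]
  rcases hur with ⟨hup, hright⟩ | ⟨hright, hup⟩
  · -- cuts 0 vertical (above), cuts 1 horizontal (right)
    obtain ⟨v, hvor, hvno, hv1, hv2, hcs, hos⟩ :=
      cut_vert_data (Q.cuts 0) o (Or.inr hb0) hup
    obtain ⟨u, huor, huno, hu2, hu1, hcs', hos'⟩ :=
      cut_horiz_data (Q.cuts 1) o (Or.inl hchain.symm) hright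
    have hva : v = (Q.cuts 0).a := by
      rcases hvor with h | h
      · exact h
      · exact absurd (h.trans hb0) hvno
    have hub : u = (Q.cuts 1).b := by
      rcases huor with h | h
      · exact absurd (h.trans hchain.symm) huno
      · exact h
    refine ⟨v.2, u.1, hv2, hu1, ?_, ?_, ?_, ?_, ?_, ?_, ?_⟩
    · have : ((o.1, v.2) : Point) = v := by
        apply Prod.ext
        · exact hv1.symm
        · rfl
      rw [this, hva]; exact hea
    · have : ((u.1, o.2) : Point) = u := by
        apply Prod.ext
        · rfl
        · exact hu2.symm
      rw [this, hub]; exact heb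
    · rw [← hcs]; exact Q.cuts_bd 0
    · rw [← hcs']; exact Q.cuts_bd 1
    · rw [← hos]; exact Q.cuts_interior 0
    · rw [← hos']; exact Q.cuts_interior 1
    · intro w hw
      rcases Q.bd_rest hw with h | h
      · exact Or.inl h
      · rw [hunion, hcs, hcs'] at h
        exact Or.inr h
  · -- cuts 0 horizontal (right), cuts 1 vertical (above)
    obtain ⟨v, hvor, hvno, hv1, hv2, hcs, hos⟩ :=
      cut_vert_data (Q.cuts 1) o (Or.inl hchain.symm) hup
    obtain ⟨u, huor, huno, hu2, hu1, hcs', hos'⟩ :=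
      cut_horiz_data (Q.cuts 0) o (Or.inr hb0) hright
    have hva : v = (Q.cuts 1).b := by
      rcases hvor with h | h
      · exact absurd (h.trans hchain.symm) hvno
      · exact h
    have hub : u = (Q.cuts 0).a := by
      rcases huor with h | h
      · exact h
      · exact absurd (h.trans hb0) huno
    refine ⟨v.2, u.1, hv2, hu1, ?_, ?_, ?_, ?_, ?_, ?_, ?_⟩
    · have : ((o.1, v.2) : Point) = v := by
        apply Prod.ext
        · exact hv1.symm
        · rfl
      rw [this, hva]; exact heb
    · have : ((u.1, o.2) : Point) = u := by
        apply Prod.ext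
        · rfl
        · exact hu2.symm
      rw [this, hub]; exact hea
    · rw [← hcs]; exact Q.cuts_bd 1
    · rw [← hcs']; exact Q.cuts_bd 0
    · rw [← hos]; exact Q.cuts_interior 1
    · rw [← hos']; exact Q.cuts_interior 0
    · intro w hw
      rcases Q.bd_rest hw with h | h
      · exact Or.inl h
      · rw [hunion, hcs, hcs'] at h
        exact Or.inr h.symm

/-- Near its origin, an up-right type-2C subpolygon looks like the top-right
quadrant at the origin. -/
lemma origin_TR (Q : KCutSub P 2) (h2c : Type2C Q) {hh ww : ℝ}
    (hhh : Q.origin.2 < hh) (hww : Q.origin.1 < ww)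
    (hcv : {w : Point | w.1 = Q.origin.1 ∧ w.2 ∈ Icc Q.origin.2 hh} ⊆ frontier Q.region)
    (hch : {w : Point | w.2 = Q.origin.2 ∧ w.1 ∈ Icc Q.origin.1 ww} ⊆ frontier Q.region) :
    ∃ ε > 0, ∀ z ∈ ball Q.origin ε,
      (z ∈ Q.region ↔ Q.origin.1 ≤ z.1 ∧ Q.origin.2 ≤ z.2) := by
  obtain ⟨sx, sy, ε, hε, hg⟩ := h2c
  set o := Q.origin with ho
  have hsy : sy = true := by
    set m := min ε (hh - o.2) / 2 with hm
    have hm0 : 0 < m := by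
      apply div_pos _ (by norm_num)
      exact lt_min hε (by linarith)
    have hmε : m < ε := by
      have := min_le_left ε (hh - o.2); linarith
    have hmh : m ≤ hh - o.2 := by
      have := min_le_right ε (hh - o.2); linarith
    have hz : ((o.1, o.2 + m) : Point) ∈ Q.region := by
      apply frontier_region_subset Q
      apply hcv
      exact ⟨rfl, by constructor <;> simp <;> linarith⟩
    have hzb : ((o.1, o.2 + m) : Point) ∈ ball o ε := by
      rw [mem_ball_pt]
      constructor
      · simp [hε]
      · simp [abs_of_pos hm0, hmε]
    have := (hg _ hzb).mp hz
    cases sy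
    · exfalso
      simp only [quadrant, if_false, Bool.false_eq_true, mem_setOf_eq] at this
      have h2 := this.2
      linarith
    · rfl
  have hsx : sx = true := by
    set m := min ε (ww - o.1) / 2 with hm
    have hm0 : 0 < m := by
      apply div_pos _ (by norm_num)
      exact lt_min hε (by linarith)
    have hmε : m < ε := by
      have := min_le_left ε (ww - o.1); linarith
    have hmh : m ≤ ww - o.1 := by
      have := min_le_right ε (ww - o.1); linarith
    have hz : ((o.1 + m, o.2) : Point) ∈ Q.region := by
      apply frontier_region_subset Q
      apply hch
      exact ⟨rfl, by constructor <;> simp <;> linarith⟩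
    have hzb : ((o.1 + m, o.2) : Point) ∈ ball o ε := by
      rw [mem_ball_pt]
      constructor
      · simp [abs_of_pos hm0, hmε]
      · simp [hε]
    have := (hg _ hzb).mp hz
    cases sx
    · exfalso
      simp only [quadrant, if_false, Bool.false_eq_true, mem_setOf_eq] at this
      have h2 := this.1
      linarith
    · rfl
  subst hsx hsy
  refine ⟨ε, hε, fun z hz => ?_⟩
  rw [hg z hz]
  simp [quadrant]

lemma cand_basic (Q : KCutSub P 2) {p : Point} (hc : Candidate2C P Q p) :
    rectCC Q.origin p ⊆ Q.region ∧ IsRectilinearRegion (rectCC Q.origin p) := by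
  obtain ⟨_, ⟨_, hsub, U, _⟩, _⟩ := hc
  exact ⟨hsub, U.pieces_rectilinear _ U.rect_mem⟩

lemma cand_dims (Q : KCutSub P 2) {p : Point} {ε : ℝ} (hε : 0 < ε)
    (hTR : ∀ z ∈ ball Q.origin ε,
      (z ∈ Q.region ↔ Q.origin.1 ≤ z.1 ∧ Q.origin.2 ≤ z.2))
    (hsub : rectCC Q.origin p ⊆ Q.region)
    (hnd : IsRectilinearRegion (rectCC Q.origin p)) :
    Q.origin.1 < p.1 ∧ Q.origin.2 < p.2 := by
  set o := Q.origin with ho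
  obtain ⟨hne1, hne2⟩ := rect_nondeg hnd
  constructor
  · rcases lt_or_gt_of_ne hne1 with h | h
    · exact h
    · exfalso
      set m := min ε (o.1 - p.1) / 2 with hm
      have hm0 : 0 < m := by
        apply div_pos _ (by norm_num)
        exact lt_min hε (by linarith)
      have hmε : m < ε := by
        have := min_le_left ε (o.1 - p.1); linarith
      have hmd : m ≤ o.1 - p.1 := by
        have := min_le_right ε (o.1 - p.1); linarith
      have hz : ((o.1 - m, o.2) : Point) ∈ rectCC o p := by
        rw [mem_rectCC]
        constructor
        · constructor
          · simp only
            rcases min_le_iff.mpr (Or.inr (le_refl p.1)) with _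
            have : min o.1 p.1 = p.1 := min_eq_right h.le
            rw [this]; linarith
          · have : max o.1 p.1 = o.1 := max_eq_left h.le
            rw [this]; simp only; linarith
        · exact ⟨min_le_left _ _, le_max_left _ _⟩
      have hzr := hsub hz
      have hzb : ((o.1 - m, o.2) : Point) ∈ ball o ε := by
        rw [mem_ball_pt]
        constructor
        · simp only [sub_sub_cancel_left, abs_neg, abs_of_pos hm0]
          exact hmε
        · simp [hε]
      have := ((hTR _ hzb).mp hzr).1
      simp only at this
      linarith
  · rcases lt_or_gt_of_ne hne2 with h | h
    · exact h
    · exfalso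
      set m := min ε (o.2 - p.2) / 2 with hm
      have hm0 : 0 < m := by
        apply div_pos _ (by norm_num)
        exact lt_min hε (by linarith)
      have hmε : m < ε := by
        have := min_le_left ε (o.2 - p.2); linarith
      have hmd : m ≤ o.2 - p.2 := by
        have := min_le_right ε (o.2 - p.2); linarith
      have hz : ((o.1, o.2 - m) : Point) ∈ rectCC o p := by
        rw [mem_rectCC]
        constructor
        · exact ⟨min_le_left _ _, le_max_left _ _⟩
        · constructor
          · have : min o.2 p.2 = p.2 := min_eq_right h.le
            rw [this]; simp only; linarith
          · have : max o.2 p.2 = o.2 := max_eq_left h.le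
            rw [this]; simp only; linarith
      have hzr := hsub hz
      have hzb : ((o.1, o.2 - m) : Point) ∈ ball o ε := by
        rw [mem_ball_pt]
        constructor
        · simp [hε]
        · simp only [sub_sub_cancel_left, abs_neg, abs_of_pos hm0]
          exact hmε
      have := ((hTR _ hzb).mp hzr).2
      simp only at this
      linarith

end Extraction


section Chain
open Metric

/-- Main chain: if both triplets are candidates and `Q`'s origin is strictly
below `Q'`'s origin (on the same vertical line), we get a contradiction. -/
lemma chain_lt (P : RectPoly) (Q Q' : KCutSub P 2)
    (h2co' : Type2Co Q')
    (hur : UpRight Q) (hur' : UpRight Q')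
    (hline : Q.origin.1 = Q'.origin.1)
    (κ' : Point) (hκ' : IsKittyCornerAt Q'.region Q'.origin κ')
    (p : Point) (hq' : κ'.1 ≤ p.1)
    (hc : Candidate2C P Q p) (hc' : Candidate2C P Q' p)
    (holt : Q.origin.2 < Q'.origin.2) : False := by
  obtain ⟨hsub, hnd⟩ := cand_basic Q hc
  obtain ⟨hsub', hnd'⟩ := cand_basic Q' hc'
  obtain ⟨hh, ww, hhh, hww, hvP, hwP, hcv, hch, hov, hoh, hbd⟩ := cut_data Q hur
  obtain ⟨hh', ww', hhh', hww', hvP', hwP', hcv', hch', hov', hoh', hbd'⟩ := cut_data Q' hur'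
  obtain ⟨ε, hε, hTR⟩ := origin_TR Q hc.1 hhh hww hcv hch
  obtain ⟨ε', hε', hTR'⟩ := origin_TR Q' hc'.1 hhh' hww' hcv' hch'
  obtain ⟨hp1, hp2⟩ := cand_dims Q hε hTR hsub hnd
  obtain ⟨hp1', hp2'⟩ := cand_dims Q' hε' hTR' hsub' hnd'
  set o := Q.origin with hodef
  set o' := Q'.origin with hodef'
  -- rectangle membership helpers
  have hRmem : ∀ w : Point, o.1 ≤ w.1 → w.1 ≤ p.1 → o.2 ≤ w.2 → w.2 ≤ p.2 →
      w ∈ Q.region := by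
    intro w h1 h2 h3 h4
    apply hsub
    rw [mem_rectCC, min_eq_left hp1.le, max_eq_right hp1.le,
      min_eq_left hp2.le, max_eq_right hp2.le]
    exact ⟨⟨h1, h2⟩, h3, h4⟩
  have hRmem' : ∀ w : Point, o'.1 ≤ w.1 → w.1 ≤ p.1 → o'.2 ≤ w.2 → w.2 ≤ p.2 →
      w ∈ Q'.region := by
    intro w h1 h2 h3 h4
    apply hsub'
    rw [mem_rectCC, min_eq_left hp1'.le, max_eq_right hp1'.le,
      min_eq_left hp2'.le, max_eq_right hp2'.le]
    exact ⟨⟨h1, h2⟩, h3, h4⟩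
  obtain ⟨hκne1, hκne2, hksegH, hksegV, hvt, hvt'⟩ := hκ'
  -- (a) o'.1 < κ'.1
  have hkX : o'.1 < κ'.1 := by
    rcases lt_or_gt_of_ne hκne1 with hlt | hgt
    · exfalso
      set m := min ε' (o'.1 - κ'.1) / 2 with hm
      have hm0 : 0 < m := by
        apply div_pos _ (by norm_num)
        exact lt_min hε' (by linarith)
      have hmε : m < ε' := by have := min_le_left ε' (o'.1 - κ'.1); linarith
      have hmd : m ≤ o'.1 - κ'.1 := by have := min_le_right ε' (o'.1 - κ'.1); linarith
      have hz : ((o'.1 - m, o'.2) : Point) ∈ Q'.region := by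
        apply frontier_region_subset Q'
        apply hksegH
        rw [mem_seg_horiz (p := o') (q := ((κ'.1, o'.2) : Point)) rfl]
        refine ⟨rfl, ?_, ?_⟩
        · have : min o'.1 κ'.1 = κ'.1 := min_eq_right hlt.le
          rw [this]; simp only; linarith
        · have : max o'.1 κ'.1 = o'.1 := max_eq_left hlt.le
          rw [this]; simp only; linarith
      have hzb : ((o'.1 - m, o'.2) : Point) ∈ ball o' ε' := by
        rw [mem_ball_pt]
        constructor
        · simp only [sub_sub_cancel_left, abs_neg, abs_of_pos hm0]; exact hmε
        · simp [hε']
      have := ((hTR' _ hzb).mp hz).1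
      simp only at this
      linarith
    · exact hgt
  -- kitty horizontal segment as a product set
  have hksegH' : {w : Point | w.2 = o'.2 ∧ w.1 ∈ Icc o'.1 κ'.1} ⊆ frontier Q'.region := by
    intro w hw
    apply hksegH
    rw [mem_seg_horiz (p := o') (q := ((κ'.1, o'.2) : Point)) rfl,
      min_eq_left hkX.le, max_eq_right hkX.le]
    exact ⟨hw.1, hw.2⟩
  -- (b) p.1 ≤ ww'
  have hwwp : p.1 ≤ ww' := by
    by_contra hcon
    push_neg at hcon
    have hmem : ((ww', o'.2) : Point) ∈ interior (rectCC o p) := by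
      rw [interior_rectCC, min_eq_left hp1.le, max_eq_right hp1.le,
        min_eq_left hp2.le, max_eq_right hp2.le]
      constructor
      · constructor
        · simp only
          rw [hline]; exact hww'
        · exact hcon
      · exact ⟨holt, hp2'⟩
    have h2 := interior_mono (hsub.trans Q.sub) hmem
    exact hwP'.2 h2
  -- (c) ww' ≤ κ'.1
  have hkw : ww' ≤ κ'.1 := by
    by_contra hcon
    push_neg at hcon
    apply no_bidir_horiz (v := ((κ'.1, o'.2) : Point)) hvt
      (δ₀ := min (κ'.1 - o'.1) (ww' - κ'.1))
      (lt_min (by linarith) (by linarith))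
    · intro δ hδ
      have hδ1 : δ < κ'.1 - o'.1 := lt_of_lt_of_le hδ.2 (min_le_left _ _)
      apply hksegH'
      refine ⟨rfl, ?_, ?_⟩
      · simp only; linarith
      · simp only; linarith [hδ.1]
    · intro δ hδ
      have hδ2 : δ < ww' - κ'.1 := lt_of_lt_of_le hδ.2 (min_le_right _ _)
      apply hch'
      refine ⟨rfl, ?_, ?_⟩
      · simp only; linarith [hδ.1, hkX]
      · simp only; linarith
  have hkp : κ'.1 = p.1 := le_antisymm hq' (hwwp.trans hkw)
  have hwwp' : ww' = p.1 := le_antisymm (hkw.trans hq') hwwp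
  set t : Point := ((p.1, o'.2) : Point) with htdef
  have htP : t ∈ frontier P.carrier := by
    rw [htdef, ← hwwp']
    exact hwP'
  have hvtT : IsConvexVertex Q'.region t ∨ IsReflexVertex Q'.region t := by
    rw [htdef, ← hkp]
    exact hvt
  have hksegH'' : {w : Point | w.2 = o'.2 ∧ w.1 ∈ Icc o'.1 p.1} ⊆ frontier Q'.region := by
    rw [← hkp]
    exact hksegH'
  have hXp : o'.1 < p.1 := hp1'
  have hXp2 : o.1 < p.1 := hp1
  -- classification: the vertex at t is convex with top-left quadrant
  have germTL : ∃ ε₂ > (0:ℝ), ∀ z ∈ ball t ε₂,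
      (z ∈ Q'.region ↔ (z.1 ≤ p.1 ∧ o'.2 ≤ z.2)) := by
    rcases hvtT with ⟨sx, sy, ε₂, hε₂, hg⟩ | ⟨sx, sy, ε₂, hε₂, hg⟩
    · -- convex case
      set m := min ε₂ (min (p.1 - o'.1) (p.2 - o'.2)) / 2 with hm
      have hm0 : 0 < m := by
        apply div_pos _ (by norm_num)
        exact lt_min hε₂ (lt_min (by linarith) (by linarith))
      have hmε : m < ε₂ := by have := min_le_left ε₂ (min (p.1 - o'.1) (p.2 - o'.2)); linarith
      have hm1 : m ≤ (p.1 - o'.1)/2 := by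
        have h1 := min_le_right ε₂ (min (p.1 - o'.1) (p.2 - o'.2))
        have h2 := min_le_left (p.1 - o'.1) (p.2 - o'.2)
        rw [hm]; linarith
      have hm2 : m ≤ (p.2 - o'.2)/2 := by
        have h1 := min_le_right ε₂ (min (p.1 - o'.1) (p.2 - o'.2))
        have h2 := min_le_right (p.1 - o'.1) (p.2 - o'.2)
        rw [hm]; linarith
      have hz1 : ((p.1 - m, o'.2 + m) : Point) ∈ Q'.region := by
        apply hRmem' <;> simp only <;> linarith
      have hz1b : ((p.1 - m, o'.2 + m) : Point) ∈ ball t ε₂ := by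
        rw [mem_ball_pt]
        constructor
        · simp only [htdef, sub_sub_cancel_left, abs_neg, abs_of_pos hm0]; exact hmε
        · simp only [htdef, add_sub_cancel_left, abs_of_pos hm0]; exact hmε
      have hq1 := (hg _ hz1b).mp hz1
      have hsx : sx = false := by
        cases sx
        · rfl
        · exfalso
          simp only [quadrant, if_true, mem_setOf_eq] at hq1
          have := hq1.1
          simp only [htdef] at this
          linarith
      have hsy : sy = true := by
        cases sy
        · exfalso
          simp only [quadrant, if_false, Bool.false_eq_true, mem_setOf_eq] at hq1
          have := hq1.2
          simp only [htdef] at this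
          linarith
        · rfl
      subst hsx hsy
      refine ⟨ε₂, hε₂, fun z hz => ?_⟩
      rw [hg z hz]
      simp [quadrant, htdef]
    · -- reflex case : impossible
      exfalso
      set m := min ε₂ (min (p.1 - o'.1) (p.2 - o'.2)) / 2 with hm
      have hm0 : 0 < m := by
        apply div_pos _ (by norm_num)
        exact lt_min hε₂ (lt_min (by linarith) (by linarith))
      have hmε : m < ε₂ := by have := min_le_left ε₂ (min (p.1 - o'.1) (p.2 - o'.2)); linarith
      have hm1 : m ≤ (p.1 - o'.1)/2 := by
        have h1 := min_le_right ε₂ (min (p.1 - o'.1) (p.2 - o'.2))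
        have h2 := min_le_left (p.1 - o'.1) (p.2 - o'.2)
        rw [hm]; linarith
      have hm2 : m ≤ (p.2 - o'.2)/2 := by
        have h1 := min_le_right ε₂ (min (p.1 - o'.1) (p.2 - o'.2))
        have h2 := min_le_right (p.1 - o'.1) (p.2 - o'.2)
        rw [hm]; linarith
      -- boundary point on the left side of t
      have hz2 : ((p.1 - m, o'.2) : Point) ∈ frontier Q'.region := by
        apply hksegH''
        refine ⟨rfl, ?_, ?_⟩ <;> simp only <;> linarith
      have hz2b : ((p.1 - m, o'.2) : Point) ∈ ball t ε₂ := by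
        rw [mem_ball_pt]
        constructor
        · simp only [htdef, sub_sub_cancel_left, abs_neg, abs_of_pos hm0]; exact hmε
        · simp [htdef, hε₂]
      have hfq := (vertex_frontier_local (Or.inr hg) _ hz2b).mp hz2
      have hq2 := frontier_quadrant_subset t sx sy hfq
      have hsx : sx = false := by
        cases sx
        · rfl
        · exfalso
          simp only [quadrant, if_true, mem_setOf_eq] at hq2
          have := hq2.1
          simp only [htdef] at this
          linarith
      subst hsx
      -- interior point of R' above-left of t
      have hz1 : ((p.1 - m, o'.2 + m) : Point) ∈ Q'.region := by
        apply hRmem' <;> simp only <;> linarith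
      have hz1b : ((p.1 - m, o'.2 + m) : Point) ∈ ball t ε₂ := by
        rw [mem_ball_pt]
        constructor
        · simp only [htdef, sub_sub_cancel_left, abs_neg, abs_of_pos hm0]; exact hmε
        · simp only [htdef, add_sub_cancel_left, abs_of_pos hm0]; exact hmε
      have hnint := (hg _ hz1b).mp hz1
      have hsy : sy = false := by
        cases sy
        · rfl
        · exfalso
          apply hnint
          rw [interior_quadrant]
          simp only [if_false, if_true, Bool.false_eq_true]
          constructor
          · simp only [htdef, mem_Iio]; linarith
          · simp only [htdef, mem_Ioi]; linarith
      subst hsy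
      -- now the reflex opens bottom-left: a full ball at t is inside P
      set r := min ε₂ (min (p.1 - o.1) (min (o'.2 - o.2) (p.2 - o'.2))) / 2 with hr
      have hr0 : 0 < r := by
        apply div_pos _ (by norm_num)
        exact lt_min hε₂ (lt_min (by linarith) (lt_min (by linarith) (by linarith)))
      have hrε : r ≤ ε₂ := by
        have := min_le_left ε₂ (min (p.1 - o.1) (min (o'.2 - o.2) (p.2 - o'.2)))
        rw [hr]; linarith
      have hr1 : r ≤ (p.1 - o.1)/2 := by
        have h1 := min_le_right ε₂ (min (p.1 - o.1) (min (o'.2 - o.2) (p.2 - o'.2)))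
        have h2 := min_le_left (p.1 - o.1) (min (o'.2 - o.2) (p.2 - o'.2))
        rw [hr]; linarith
      have hr2 : r ≤ (o'.2 - o.2)/2 := by
        have h1 := min_le_right ε₂ (min (p.1 - o.1) (min (o'.2 - o.2) (p.2 - o'.2)))
        have h2 := min_le_right (p.1 - o.1) (min (o'.2 - o.2) (p.2 - o'.2))
        have h3 := min_le_left (o'.2 - o.2) (p.2 - o'.2)
        rw [hr]; linarith
      have hr3 : r ≤ (p.2 - o'.2)/2 := by
        have h1 := min_le_right ε₂ (min (p.1 - o.1) (min (o'.2 - o.2) (p.2 - o'.2)))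
        have h2 := min_le_right (p.1 - o.1) (min (o'.2 - o.2) (p.2 - o'.2))
        have h3 := min_le_right (o'.2 - o.2) (p.2 - o'.2)
        rw [hr]; linarith
      have hball : ball t r ⊆ P.carrier := by
        intro z hz
        rw [mem_ball_pt] at hz
        simp only [htdef] at hz
        obtain ⟨hz1', hz2'⟩ := hz
        rw [abs_lt] at hz1' hz2'
        by_cases hzq : z ∈ interior (quadrant t false false)
        · rw [interior_quadrant] at hzq
          simp only [if_false, Bool.false_eq_true] at hzq
          obtain ⟨hzx, hzy⟩ := hzq
          rw [mem_Iio] at hzx hzy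
          have hzx' : z.1 < p.1 := hzx
          have hzy' : z.2 < o'.2 := hzy
          apply Q.sub
          apply hRmem
          · linarith [hz1'.1]
          · exact hzx'.le
          · linarith [hz2'.1]
          · linarith
        · apply Q'.sub
          have hzb : z ∈ ball t ε₂ := by
            rw [mem_ball_pt]
            constructor
            · rw [abs_lt]; constructor <;> simp only [htdef] <;> linarith [hz1'.1, hz1'.2]
            · rw [abs_lt]; constructor <;> simp only [htdef] <;> linarith [hz2'.1, hz2'.2]
          exact (hg z hzb).mpr hzq
      have : t ∈ interior P.carrier :=
        mem_interior.mpr ⟨ball t r, hball, isOpen_ball, mem_ball_self hr0⟩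
      exact htP.2 this
  obtain ⟨ε₂, hε₂, hgTL⟩ := germTL
  -- Use Type 2Co of Q' : reflex vertex at (κ₀.1, o'.2)
  obtain ⟨_, κ₀, hκ₀, hrT, hrT'⟩ := h2co'
  obtain ⟨hκ₀ne1, _, hk0segH, _, _, _⟩ := hκ₀
  rcases lt_trichotomy κ₀.1 p.1 with hlt | heq | hgt
  · rcases lt_or_gt_of_ne hκ₀ne1 with hlt2 | hgt2
    · -- κ₀.1 < o'.1 : impossible by the TR germ at o'
      set m := min ε' (o'.1 - κ₀.1) / 2 with hm
      have hm0 : 0 < m := by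
        apply div_pos _ (by norm_num)
        exact lt_min hε' (by linarith)
      have hmε : m < ε' := by have := min_le_left ε' (o'.1 - κ₀.1); linarith
      have hmd : m ≤ o'.1 - κ₀.1 := by have := min_le_right ε' (o'.1 - κ₀.1); linarith
      have hz : ((o'.1 - m, o'.2) : Point) ∈ Q'.region := by
        apply frontier_region_subset Q'
        apply hk0segH
        rw [mem_seg_horiz (p := o') (q := ((κ₀.1, o'.2) : Point)) rfl]
        refine ⟨rfl, ?_, ?_⟩
        · have : min o'.1 κ₀.1 = κ₀.1 := min_eq_right hlt2.le
          rw [this]; simp only; linarith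
        · have : max o'.1 κ₀.1 = o'.1 := max_eq_left hlt2.le
          rw [this]; simp only; linarith
      have hzb : ((o'.1 - m, o'.2) : Point) ∈ ball o' ε' := by
        rw [mem_ball_pt]
        constructor
        · simp only [sub_sub_cancel_left, abs_neg, abs_of_pos hm0]; exact hmε
        · simp [hε']
      have := ((hTR' _ hzb).mp hz).1
      simp only at this
      linarith
    · -- o'.1 < κ₀.1 < p.1 : bidirectional boundary at the reflex vertex
      apply no_bidir_horiz (v := ((κ₀.1, o'.2) : Point)) (Or.inr hrT)
        (δ₀ := min (κ₀.1 - o'.1) (p.1 - κ₀.1))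
        (lt_min (by linarith) (by linarith))
      · intro δ hδ
        have hδ1 : δ < κ₀.1 - o'.1 := lt_of_lt_of_le hδ.2 (min_le_left _ _)
        apply hksegH''
        refine ⟨rfl, ?_, ?_⟩ <;> simp only <;> [linarith; linarith [hδ.1, hlt]]
      · intro δ hδ
        have hδ2 : δ < p.1 - κ₀.1 := lt_of_lt_of_le hδ.2 (min_le_right _ _)
        apply hksegH''
        refine ⟨rfl, ?_, ?_⟩ <;> simp only <;> [linarith [hδ.1, hgt2]; linarith]
  · -- κ₀.1 = p.1 : reflex at t contradicts the convex TL germ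
    have hrt : IsReflexVertex Q'.region t := by
      have : ((κ₀.1, o'.2) : Point) = t := by rw [htdef, heq]
      rw [← this]
      exact hrT
    obtain ⟨sx₃, sy₃, ε₃, hε₃, hg₃⟩ := hrt
    set m := min ε₂ ε₃ / 2 with hm
    have hm0 : 0 < m := by
      apply div_pos _ (by norm_num)
      exact lt_min hε₂ hε₃
    have hmε₂ : m < ε₂ := by have := min_le_left ε₂ ε₃; linarith
    have hmε₃ : m < ε₃ := by have := min_le_right ε₂ ε₃; linarith
    have hz1b₂ : ((p.1 + m, o'.2 + m) : Point) ∈ ball t ε₂ := by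
      rw [mem_ball_pt]
      constructor <;> simp only [htdef, add_sub_cancel_left, abs_of_pos hm0] <;> assumption
    have hz1b₃ : ((p.1 + m, o'.2 + m) : Point) ∈ ball t ε₃ := by
      rw [mem_ball_pt]
      constructor <;> simp only [htdef, add_sub_cancel_left, abs_of_pos hm0] <;> assumption
    have hz1n : ((p.1 + m, o'.2 + m) : Point) ∉ Q'.region := by
      intro hmem
      have := ((hgTL _ hz1b₂).mp hmem).1
      simp only at this
      linarith
    have hz1int : ((p.1 + m, o'.2 + m) : Point) ∈ interior (quadrant t sx₃ sy₃) := by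
      by_contra hno
      exact hz1n ((hg₃ _ hz1b₃).mpr hno)
    rw [interior_quadrant] at hz1int
    obtain ⟨hx3, hy3⟩ := hz1int
    have hsx₃ : sx₃ = true := by
      cases sx₃
      · exfalso
        simp only [if_false, Bool.false_eq_true, mem_Iio, htdef] at hx3
        linarith
      · rfl
    have hsy₃ : sy₃ = true := by
      cases sy₃
      · exfalso
        simp only [if_false, Bool.false_eq_true, mem_Iio, htdef] at hy3
        linarith
      · rfl
    subst hsx₃ hsy₃
    have hz2b₂ : ((p.1 - m, o'.2 - m) : Point) ∈ ball t ε₂ := by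
      rw [mem_ball_pt]
      constructor <;>
        simp only [htdef, sub_sub_cancel_left, abs_neg, abs_of_pos hm0] <;> assumption
    have hz2b₃ : ((p.1 - m, o'.2 - m) : Point) ∈ ball t ε₃ := by
      rw [mem_ball_pt]
      constructor <;>
        simp only [htdef, sub_sub_cancel_left, abs_neg, abs_of_pos hm0] <;> assumption
    have hz2n : ((p.1 - m, o'.2 - m) : Point) ∉ Q'.region := by
      intro hmem
      have := ((hgTL _ hz2b₂).mp hmem).2
      simp only at this
      linarith
    have hz2int : ((p.1 - m, o'.2 - m) : Point) ∈ interior (quadrant t true true) := by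
      by_contra hno
      exact hz2n ((hg₃ _ hz2b₃).mpr hno)
    rw [interior_quadrant] at hz2int
    obtain ⟨hx3', _⟩ := hz2int
    simp only [if_true, mem_Ioi, htdef] at hx3'
    linarith
  · -- p.1 < κ₀.1 : boundary of Q' to the right of t, impossible by the TL germ
    have hloc := frontier_congr_ball (S := Q'.region) (T := Iic p.1 ×ˢ Ici o'.2)
      (c := t) (ε := ε₂)
      (fun z hz => by
        rw [hgTL z hz]
        exact Iff.rfl)
    set m := min ε₂ (κ₀.1 - p.1) / 2 with hm
    have hm0 : 0 < m := by
      apply div_pos _ (by norm_num)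
      exact lt_min hε₂ (by linarith)
    have hmε : m < ε₂ := by have := min_le_left ε₂ (κ₀.1 - p.1); linarith
    have hmd : m ≤ κ₀.1 - p.1 := by have := min_le_right ε₂ (κ₀.1 - p.1); linarith
    have hzfr : ((p.1 + m, o'.2) : Point) ∈ frontier Q'.region := by
      apply hk0segH
      rw [mem_seg_horiz (p := o') (q := ((κ₀.1, o'.2) : Point)) rfl]
      refine ⟨rfl, ?_, ?_⟩
      · have : min o'.1 κ₀.1 = o'.1 := min_eq_left (by linarith)
        rw [this]; simp only; linarith
      · have : max o'.1 κ₀.1 = κ₀.1 := max_eq_right (by linarith)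
        rw [this]; simp only; linarith
    have hzb : ((p.1 + m, o'.2) : Point) ∈ ball t ε₂ := by
      rw [mem_ball_pt]
      constructor
      · simp only [htdef, add_sub_cancel_left, abs_of_pos hm0]; exact hmε
      · simp [htdef, hε₂]
    have hzT := (hloc _ hzb).mp hzfr
    have := (isClosed_Iic.prod isClosed_Ici).frontier_subset hzT
    have hle : p.1 + m ≤ p.1 := this.1
    linarith

end Chain


section SameOriginPrep
open Metric

/-- Dichotomy: a preconnected set avoiding the frontier of a closed set is
inside its interior or misses it. -/
private lemma clopen_dichotomy {T : Set Point} (hTcl : IsClosed T)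
    {D : Set Point} (hD : IsPreconnected D) (hfr : ∀ w ∈ D, w ∉ frontier T) :
    D ⊆ interior T ∨ D ∩ T = ∅ := by
  have hsub : D ⊆ interior T ∪ Tᶜ := by
    intro w hw
    by_cases hwT : w ∈ T
    · left
      by_contra hni
      exact hfr w hw ⟨subset_closure hwT, hni⟩
    · right; exact hwT
  by_cases h1 : (D ∩ interior T).Nonempty
  · left
    intro w hw
    rcases hsub hw with h | h
    · exact h
    · exfalso
      obtain ⟨u, hu⟩ := hD (interior T) Tᶜ isOpen_interior hTcl.isOpen_compl hsub h1 ⟨w, hw, h⟩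
      exact hu.2.2 (interior_subset hu.2.1)
  · right
    rw [Set.eq_empty_iff_forall_notMem]
    rintro w ⟨hw, hwT⟩
    rcases hsub hw with h | h
    · exact h1 ⟨w, hw, h⟩
    · exact h hwT

/-- The edge set of `P`. -/
private def esegP (P : RectPoly) (i : ZMod P.n) : Set Point :=
  segment ℝ (P.vtx i) (P.vtx (i + 1))

private lemma esegP_closed (P : RectPoly) (i : ZMod P.n) : IsClosed (esegP P i) := by
  rw [esegP, segment_eq_image]
  apply IsCompact.isClosed
  apply isCompact_Icc.image
  fun_prop

private lemma esegP_sub_frontier (P : RectPoly) (i : ZMod P.n) :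
    esegP P i ⊆ frontier P.carrier := by
  rw [P.boundary']
  exact subset_iUnion (fun j => segment ℝ (P.vtx j) (P.vtx (j + 1))) i

/-- The boundary of `P` is preconnected. -/
lemma frontierP_preconnected (P : RectPoly) : IsPreconnected (frontier P.carrier) := by
  haveI : NeZero P.n := ⟨by have := P.n_ge; omega⟩
  have hval : ∀ i : ZMod P.n, ((ZMod.val i : ℕ) : ZMod P.n) = i := fun i =>
    (ZMod.natCast_val i).trans (ZMod.cast_id P.n i)
  have key : ∀ k : ℕ, k + 1 ≤ P.n →
      IsPreconnected (⋃ (i : ℕ) (_ : i < k + 1), esegP P (i : ZMod P.n)) := by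
    intro k
    induction k with
    | zero =>
      intro _
      have he : (⋃ (i : ℕ) (_ : i < 1), esegP P (i : ZMod P.n)) = esegP P 0 := by
        ext w
        simp only [Set.mem_iUnion]
        constructor
        · rintro ⟨i, hi, hw⟩
          interval_cases i
          simpa using hw
        · intro hw
          exact ⟨0, by norm_num, by simpa using hw⟩
      rw [he, esegP]
      exact (convex_segment _ _).isPreconnected
    | succ k ih =>
      intro hk
      have split : (⋃ (i : ℕ) (_ : i < k + 2), esegP P (i : ZMod P.n)) =
          (⋃ (i : ℕ) (_ : i < k + 1), esegP P (i : ZMod P.n)) ∪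
            esegP P ((k + 1 : ℕ) : ZMod P.n) := by
        ext w
        simp only [Set.mem_iUnion, Set.mem_union]
        constructor
        · rintro ⟨i, hi, hw⟩
          rcases Nat.lt_succ_iff_lt_or_eq.mp hi with h | h
          · exact Or.inl ⟨i, h, hw⟩
          · subst h; exact Or.inr hw
        · rintro (⟨i, hi, hw⟩ | hw)
          · exact ⟨i, by omega, hw⟩
          · exact ⟨k + 1, by omega, hw⟩
      rw [split]
      apply IsPreconnected.union (P.vtx ((k + 1 : ℕ) : ZMod P.n))
      · rw [Set.mem_iUnion]
        refine ⟨k, ?_⟩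
        rw [Set.mem_iUnion]
        refine ⟨by omega, ?_⟩
        rw [esegP]
        have hcast : ((k : ℕ) : ZMod P.n) + 1 = ((k + 1 : ℕ) : ZMod P.n) := by
          push_cast
          ring
        rw [hcast]
        exact right_mem_segment ℝ _ _
      · rw [esegP]
        exact left_mem_segment ℝ _ _
      · exact ih (by omega)
      · rw [esegP]
        exact (convex_segment _ _).isPreconnected
  have final : frontier P.carrier =
      ⋃ (i : ℕ) (_ : i < (P.n - 1) + 1), esegP P (i : ZMod P.n) := by
    rw [P.boundary']
    have hn1 : P.n - 1 + 1 = P.n := by have := P.n_ge; omega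
    ext w
    simp only [Set.mem_iUnion]
    constructor
    · rintro ⟨i, hw⟩
      refine ⟨ZMod.val i, by rw [hn1]; exact ZMod.val_lt i, ?_⟩
      rw [hval]
      exact hw
    · rintro ⟨i, _, hw⟩
      exact ⟨_, hw⟩
  rw [final]
  exact key (P.n - 1) (by have := P.n_ge; omega)

private lemma isLinear_fst_mul (d : ℝ) : IsLinearMap ℝ (fun w : Point => d * w.1) := by
  constructor
  · intro a b
    show d * (a + b).1 = _
    rw [Prod.fst_add]
    ring
  · intro c a
    show d * (c • a).1 = c • (d * a.1)
    rw [Prod.smul_fst, smul_eq_mul, smul_eq_mul]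
    ring

private lemma isLinear_snd_mul (d : ℝ) : IsLinearMap ℝ (fun w : Point => d * w.2) := by
  constructor
  · intro a b
    show d * (a + b).2 = _
    rw [Prod.snd_add]
    ring
  · intro c a
    show d * (c • a).2 = c • (d * a.2)
    rw [Prod.smul_snd, smul_eq_mul, smul_eq_mul]
    ring

private lemma convex_pos_mul_x (d c : ℝ) : Convex ℝ {w : Point | 0 < d * (w.1 - c)} := by
  have he : {w : Point | 0 < d * (w.1 - c)} = {w : Point | d * c < d * w.1} := by
    ext w
    constructor <;> intro h <;> simp only [mem_setOf_eq] at * <;> nlinarith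
  rw [he]
  exact convex_halfSpace_gt (isLinear_fst_mul d) (d * c)

private lemma convex_pos_mul_y (d c : ℝ) : Convex ℝ {w : Point | 0 < d * (w.2 - c)} := by
  have he : {w : Point | 0 < d * (w.2 - c)} = {w : Point | d * c < d * w.2} := by
    ext w
    constructor <;> intro h <;> simp only [mem_setOf_eq] at * <;> nlinarith
  rw [he]
  exact convex_halfSpace_gt (isLinear_snd_mul d) (d * c)

/-- Isolation radius: a ball around `z` avoiding all edges not containing `z`. -/
private lemma edge_isolation (P : RectPoly) (z : Point) :
    ∃ r > 0, ∀ i : ZMod P.n, z ∉ esegP P i → ∀ w ∈ ball z r, w ∉ esegP P i := by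
  haveI : NeZero P.n := ⟨by have := P.n_ge; omega⟩
  have pick : ∀ i : ZMod P.n, ∃ r, 0 < r ∧ (z ∉ esegP P i → ∀ w ∈ ball z r, w ∉ esegP P i) := by
    intro i
    by_cases h : z ∈ esegP P i
    · exact ⟨1, one_pos, fun hcon => (hcon h).elim⟩
    · obtain ⟨r, hr, hball⟩ := Metric.isOpen_iff.mp (esegP_closed P i).isOpen_compl z h
      exact ⟨r, hr, fun _ w hw => hball hw⟩
  choose g hg0 hgP using pick
  refine ⟨Finset.univ.inf' ⟨0, Finset.mem_univ 0⟩ g, ?_, ?_⟩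
  · refine (Finset.lt_inf'_iff _).2 ?_
    exact fun i _ => hg0 i
  · intro i hi w hw
    apply hgP i hi w
    exact ball_subset_ball (Finset.inf'_le g (Finset.mem_univ i)) hw

/-- Two edges through a common point are equal or adjacent. -/
private lemma adj_of_mem (P : RectPoly) {z : Point} {k m : ZMod P.n}
    (hzk : z ∈ esegP P k) (hzm : z ∈ esegP P m) :
    k = m ∨ k = m + 1 ∨ m = k + 1 := by
  by_contra hcon
  push_neg at hcon
  obtain ⟨h1, h2, h3⟩ := hcon
  have := P.simple k m h1 h3 h2
  exact (Set.disjoint_left.mp this hzk) hzm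

end SameOriginPrep


section LocalStruct
open Metric

private lemma arm_vert {a z : Point} (hax : a.1 = z.1) {dy : ℝ}
    (hdy : (dy = 1 ∧ z.2 < a.2) ∨ (dy = -1 ∧ a.2 < z.2)) {r : ℝ}
    (hr : r ≤ |a.2 - z.2|) :
    ∀ w ∈ ball z r, (w ∈ segment ℝ z a ↔ (w.1 = z.1 ∧ 0 ≤ dy * (w.2 - z.2))) := by
  intro w hwb
  rw [mem_ball_pt] at hwb
  have hb2 := abs_lt.mp hwb.2
  rw [mem_seg_vert (show z.1 = a.1 from hax.symm)]
  rcases hdy with ⟨hd, hlt⟩ | ⟨hd, hlt⟩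
  · subst hd
    rw [abs_of_pos (by linarith)] at hr
    rw [min_eq_left hlt.le, max_eq_right hlt.le]
    constructor
    · rintro ⟨h1, h2⟩
      exact ⟨h1, by rw [one_mul]; linarith [h2.1]⟩
    · rintro ⟨h1, h2⟩
      rw [one_mul] at h2
      exact ⟨h1, by linarith, by linarith [hb2.2]⟩
  · subst hd
    rw [abs_of_neg (by linarith)] at hr
    rw [min_eq_right hlt.le, max_eq_left hlt.le]
    constructor
    · rintro ⟨h1, h2⟩
      refine ⟨h1, by nlinarith [h2.2]⟩
    · rintro ⟨h1, h2⟩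
      have h2' : w.2 ≤ z.2 := by nlinarith
      exact ⟨h1, by linarith [hb2.1], h2'⟩

private lemma arm_horiz {a z : Point} (hax : a.2 = z.2) {dx : ℝ}
    (hdx : (dx = 1 ∧ z.1 < a.1) ∨ (dx = -1 ∧ a.1 < z.1)) {r : ℝ}
    (hr : r ≤ |a.1 - z.1|) :
    ∀ w ∈ ball z r, (w ∈ segment ℝ z a ↔ (w.2 = z.2 ∧ 0 ≤ dx * (w.1 - z.1))) := by
  intro w hwb
  rw [mem_ball_pt] at hwb
  have hb1 := abs_lt.mp hwb.1
  rw [mem_seg_horiz (show z.2 = a.2 from hax.symm)]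
  rcases hdx with ⟨hd, hlt⟩ | ⟨hd, hlt⟩
  · subst hd
    rw [abs_of_pos (by linarith)] at hr
    rw [min_eq_left hlt.le, max_eq_right hlt.le]
    constructor
    · rintro ⟨h1, h2⟩
      exact ⟨h1, by rw [one_mul]; linarith [h2.1]⟩
    · rintro ⟨h1, h2⟩
      rw [one_mul] at h2
      exact ⟨h1, by linarith, by linarith [hb1.2]⟩
  · subst hd
    rw [abs_of_neg (by linarith)] at hr
    rw [min_eq_right hlt.le, max_eq_left hlt.le]
    constructor
    · rintro ⟨h1, h2⟩
      refine ⟨h1, by nlinarith [h2.2]⟩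
    · rintro ⟨h1, h2⟩
      have h2' : w.1 ≤ z.1 := by nlinarith
      exact ⟨h1, by linarith [hb1.1], h2'⟩

/-- Local description of the boundary of `P` near a boundary point: a chord
through the point, or an `L` formed by two perpendicular arms. -/
private lemma boundary_local (P : RectPoly) (z : Point) (hz : z ∈ frontier P.carrier) :
    ∃ r > 0, ∃ L : Set Point,
      frontier P.carrier ∩ ball z r = L ∩ ball z r ∧
      (L = {w : Point | w.1 = z.1} ∨ L = {w : Point | w.2 = z.2} ∨
        ∃ dx dy : ℝ, (dx = 1 ∨ dx = -1) ∧ (dy = 1 ∨ dy = -1) ∧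
          L = {w : Point | (w.1 = z.1 ∧ 0 ≤ dy * (w.2 - z.2)) ∨
                            (w.2 = z.2 ∧ 0 ≤ dx * (w.1 - z.1))}) := by
  haveI : NeZero P.n := ⟨by have := P.n_ge; omega⟩
  haveI : Fact (1 < P.n) := ⟨by have := P.n_ge; omega⟩
  obtain ⟨r₀, hr₀, hiso⟩ := edge_isolation P z
  have hzb := hz
  rw [P.boundary', Set.mem_iUnion] at hzb
  obtain ⟨i₀, hzi₀⟩ := hzb
  have hzi₀ : z ∈ esegP P i₀ := hzi₀
  have hmem_edge : ∀ w ∈ ball z r₀, w ∈ frontier P.carrier →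
      ∃ k, z ∈ esegP P k ∧ w ∈ esegP P k := by
    intro w hwb hwf
    rw [P.boundary', Set.mem_iUnion] at hwf
    obtain ⟨k, hk⟩ := hwf
    have hk : w ∈ esegP P k := hk
    by_cases hzk : z ∈ esegP P k
    · exact ⟨k, hzk, hk⟩
    · exact absurd hk (hiso k hzk w hwb)
  by_cases hmulti : ∃ j, j ≠ i₀ ∧ z ∈ esegP P j
  · -- two edges, z is a vertex
    obtain ⟨j, hjne, hzj⟩ := hmulti
    obtain ⟨i, hzi, hzi1⟩ : ∃ i, z ∈ esegP P i ∧ z ∈ esegP P (i + 1) := by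
      rcases adj_of_mem P hzi₀ hzj with h | h | h
      · exact absurd h.symm hjne
      · exact ⟨j, hzj, by rw [← h]; exact hzi₀⟩
      · exact ⟨i₀, hzi₀, by rw [← h]; exact hzj⟩
    have h3ne : ((3 : ℕ) : ZMod P.n) ≠ 0 := by
      intro hcon
      rw [ZMod.natCast_eq_zero_iff] at hcon
      have h1 := Nat.le_of_dvd (by norm_num) hcon
      have := P.n_ge
      omega
    have huniq : ∀ k, z ∈ esegP P k → k = i ∨ k = i + 1 := by
      intro k hk
      rcases adj_of_mem P hk hzi with h | h | h
      · exact Or.inl h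
      · exact Or.inr h
      · rcases adj_of_mem P hk hzi1 with h' | h' | h'
        · exact Or.inr h'
        · exfalso
          apply h3ne
          have h'' : i = i + 3 := by linear_combination h + h' 
          push_cast
          linear_combination -h''
        · exact Or.inl (add_right_cancel h'.symm)
    have hii1 : i ≠ i + 1 := by
      intro hcon
      apply one_ne_zero (α := ZMod P.n)
      linear_combination -hcon
    have hi1i2 : i + 1 ≠ i + 2 := by
      intro hcon
      apply one_ne_zero (α := ZMod P.n)
      linear_combination -hcon
    have hii2 : i ≠ i + 2 := by
      intro hcon
      have h2ne : ((2 : ℕ) : ZMod P.n) ≠ 0 := by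
        intro hcon
        rw [ZMod.natCast_eq_zero_iff] at hcon
        have h1 := Nat.le_of_dvd (by norm_num) hcon
        have := P.n_ge
        omega
      apply h2ne
      push_cast
      linear_combination -hcon
    have hi12 : (i + 1) + 1 = i + 2 := by ring
    -- orientation case split
    rcases P.edge_axis i with haxi | haxi
    · -- edge i vertical, edge i+1 horizontal
      have haxi1 : (P.vtx (i + 1)).2 = (P.vtx (i + 2)).2 := by
        rcases P.edge_axis (i + 1) with h | h
        · exfalso
          apply P.edge_alt i
          rw [hi12] at h
          exact ⟨fun _ => h, fun _ => haxi⟩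
        · rw [hi12] at h
          exact h
      have hz1 : z.1 = (P.vtx i).1 := by
        have := seg_fst_eq (p := P.vtx i) (q := P.vtx (i + 1)) haxi hzi
        exact this
      have hz2 : z.2 = (P.vtx (i + 1)).2 := by
        have h' : (P.vtx (i + 1)).2 = (P.vtx ((i + 1) + 1)).2 := by rw [hi12]; exact haxi1
        exact seg_snd_eq (p := P.vtx (i + 1)) (q := P.vtx ((i + 1) + 1)) h' hzi1
      have hzv : P.vtx (i + 1) = z := by
        apply Prod.ext
        · rw [← haxi, ← hz1]
        · rw [← hz2]
      set a := P.vtx i with hadef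
      set c := P.vtx (i + 2) with hcdef
      have ha_ne : a ≠ z := by
        rw [← hzv]
        exact P.inj.ne hii1
      have hc_ne : c ≠ z := by
        rw [← hzv]
        intro hcon
        exact hi1i2 (P.inj hcon.symm)
      have ha2 : a.2 ≠ z.2 := by
        intro hcon
        exact ha_ne (Prod.ext hz1.symm hcon)
      have hcz2 : c.2 = z.2 := by
        have h1 : c.2 = (P.vtx (i + 1)).2 := haxi1.symm
        rw [h1, ← hz2]
      have hc1 : c.1 ≠ z.1 := by
        intro hcon
        exact hc_ne (Prod.ext hcon hcz2)
      set dy : ℝ := if z.2 < a.2 then 1 else -1 with hdydef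
      set dx : ℝ := if z.1 < c.1 then 1 else -1 with hdxdef
      have hdy : (dy = 1 ∧ z.2 < a.2) ∨ (dy = -1 ∧ a.2 < z.2) := by
        rcases lt_or_gt_of_ne ha2 with h | h
        · right
          rw [hdydef, if_neg (by linarith)]
          exact ⟨rfl, h⟩
        · left
          rw [hdydef, if_pos h]
          exact ⟨rfl, h⟩
      have hdx : (dx = 1 ∧ z.1 < c.1) ∨ (dx = -1 ∧ c.1 < z.1) := by
        rcases lt_or_gt_of_ne hc1 with h | h
        · right
          rw [hdxdef, if_neg (by linarith)]
          exact ⟨rfl, h⟩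
        · left
          rw [hdxdef, if_pos h]
          exact ⟨rfl, h⟩
      set r := min r₀ (min |a.2 - z.2| |c.1 - z.1|) with hrdef
      have hra : r ≤ |a.2 - z.2| := le_trans (min_le_right _ _) (min_le_left _ _)
      have hrc : r ≤ |c.1 - z.1| := le_trans (min_le_right _ _) (min_le_right _ _)
      have hr : 0 < r := by
        apply lt_min hr₀
        apply lt_min
        · exact abs_pos.mpr (sub_ne_zero.mpr ha2)
        · exact abs_pos.mpr (sub_ne_zero.mpr hc1)
      have hsegi : esegP P i = segment ℝ z a := by
        rw [esegP, hzv, ← hadef, segment_symm]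
      have hsegi1 : esegP P (i + 1) = segment ℝ z c := by
        rw [esegP, hzv, hi12, ← hcdef]
      have harm1 := arm_vert (a := a) (z := z) hz1.symm hdy hra
      have harm2 := arm_horiz (a := c) (z := z) hcz2 hdx hrc
      refine ⟨r, hr, _, ?_, Or.inr (Or.inr ⟨dx, dy, ?_, ?_, rfl⟩)⟩
      · ext w
        constructor
        · rintro ⟨hwf, hwb⟩
          refine ⟨?_, hwb⟩
          obtain ⟨k, hzk, hwk⟩ := hmem_edge w
            (ball_subset_ball (le_trans hrdef.le (min_le_left _ _) : r ≤ r₀) hwb) hwf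
          rcases huniq k hzk with rfl | rfl
          · left
            rw [hsegi] at hwk
            exact (harm1 w hwb).mp hwk
          · right
            rw [hsegi1] at hwk
            exact (harm2 w hwb).mp hwk
        · rintro ⟨hwL, hwb⟩
          refine ⟨?_, hwb⟩
          rcases hwL with h | h
          · apply esegP_sub_frontier P i
            rw [hsegi]
            exact (harm1 w hwb).mpr h
          · apply esegP_sub_frontier P (i + 1)
            rw [hsegi1]
            exact (harm2 w hwb).mpr h
      · rcases hdx with ⟨h, _⟩ | ⟨h, _⟩
        · exact Or.inl h
        · exact Or.inr h
      · rcases hdy with ⟨h, _⟩ | ⟨h, _⟩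
        · exact Or.inl h
        · exact Or.inr h
    · -- edge i horizontal, edge i+1 vertical
      have hVi_false : ¬ (P.vtx i).1 = (P.vtx (i + 1)).1 := by
        intro hcon
        exact hii1 (P.inj (Prod.ext hcon haxi))
      have haxi1 : (P.vtx (i + 1)).1 = (P.vtx (i + 2)).1 := by
        rcases P.edge_axis (i + 1) with h | h
        · rw [hi12] at h
          exact h
        · rw [hi12] at h
          exfalso
          have hVi1_false : ¬ (P.vtx (i + 1)).1 = (P.vtx (i + 2)).1 := by
            intro hcon
            exact hi1i2 (P.inj (Prod.ext hcon h))
          exact P.edge_alt i (iff_of_false hVi_false hVi1_false)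
      have hz2 : z.2 = (P.vtx i).2 :=
        seg_snd_eq (p := P.vtx i) (q := P.vtx (i + 1)) haxi hzi
      have hz1 : z.1 = (P.vtx (i + 1)).1 := by
        have h' : (P.vtx (i + 1)).1 = (P.vtx ((i + 1) + 1)).1 := by rw [hi12]; exact haxi1
        exact seg_fst_eq (p := P.vtx (i + 1)) (q := P.vtx ((i + 1) + 1)) h' hzi1
      have hzv : P.vtx (i + 1) = z := by
        apply Prod.ext
        · rw [← hz1]
        · rw [← haxi, ← hz2]
      set a := P.vtx i with hadef
      set c := P.vtx (i + 2) with hcdef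
      have ha_ne : a ≠ z := by
        rw [← hzv]
        exact P.inj.ne hii1
      have hc_ne : c ≠ z := by
        rw [← hzv]
        intro hcon
        exact hi1i2 (P.inj hcon.symm)
      have ha1 : a.1 ≠ z.1 := by
        intro hcon
        exact ha_ne (Prod.ext hcon hz2.symm)
      have hcz1 : c.1 = z.1 := by
        have h1 : c.1 = (P.vtx (i + 1)).1 := haxi1.symm
        rw [h1, ← hz1]
      have hc2 : c.2 ≠ z.2 := by
        intro hcon
        exact hc_ne (Prod.ext hcz1 hcon)
      set dy : ℝ := if z.2 < c.2 then 1 else -1 with hdydef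
      set dx : ℝ := if z.1 < a.1 then 1 else -1 with hdxdef
      have hdy : (dy = 1 ∧ z.2 < c.2) ∨ (dy = -1 ∧ c.2 < z.2) := by
        rcases lt_or_gt_of_ne hc2 with h | h
        · right
          rw [hdydef, if_neg (by linarith)]
          exact ⟨rfl, h⟩
        · left
          rw [hdydef, if_pos h]
          exact ⟨rfl, h⟩
      have hdx : (dx = 1 ∧ z.1 < a.1) ∨ (dx = -1 ∧ a.1 < z.1) := by
        rcases lt_or_gt_of_ne ha1 with h | h
        · right
          rw [hdxdef, if_neg (by linarith)]
          exact ⟨rfl, h⟩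
        · left
          rw [hdxdef, if_pos h]
          exact ⟨rfl, h⟩
      set r := min r₀ (min |c.2 - z.2| |a.1 - z.1|) with hrdef
      have hrc : r ≤ |c.2 - z.2| := le_trans (min_le_right _ _) (min_le_left _ _)
      have hra : r ≤ |a.1 - z.1| := le_trans (min_le_right _ _) (min_le_right _ _)
      have hr : 0 < r := by
        apply lt_min hr₀
        apply lt_min
        · exact abs_pos.mpr (sub_ne_zero.mpr hc2)
        · exact abs_pos.mpr (sub_ne_zero.mpr ha1)
      have hsegi : esegP P i = segment ℝ z a := by
        rw [esegP, hzv, ← hadef, segment_symm]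
      have hsegi1 : esegP P (i + 1) = segment ℝ z c := by
        rw [esegP, hzv, hi12, ← hcdef]
      have harm1 := arm_vert (a := c) (z := z) hcz1 hdy hrc
      have harm2 := arm_horiz (a := a) (z := z) hz2.symm hdx hra
      refine ⟨r, hr, _, ?_, Or.inr (Or.inr ⟨dx, dy, ?_, ?_, rfl⟩)⟩
      · ext w
        constructor
        · rintro ⟨hwf, hwb⟩
          refine ⟨?_, hwb⟩
          obtain ⟨k, hzk, hwk⟩ := hmem_edge w
            (ball_subset_ball (le_trans hrdef.le (min_le_left _ _) : r ≤ r₀) hwb) hwf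
          rcases huniq k hzk with rfl | rfl
          · right
            rw [hsegi] at hwk
            exact (harm2 w hwb).mp hwk
          · left
            rw [hsegi1] at hwk
            exact (harm1 w hwb).mp hwk
        · rintro ⟨hwL, hwb⟩
          refine ⟨?_, hwb⟩
          rcases hwL with h | h
          · apply esegP_sub_frontier P (i + 1)
            rw [hsegi1]
            exact (harm1 w hwb).mpr h
          · apply esegP_sub_frontier P i
            rw [hsegi]
            exact (harm2 w hwb).mpr h
      · rcases hdx with ⟨h, _⟩ | ⟨h, _⟩
        · exact Or.inl h
        · exact Or.inr h
      · rcases hdy with ⟨h, _⟩ | ⟨h, _⟩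
        · exact Or.inl h
        · exact Or.inr h
  · -- single edge : chord case
    have hz_only : ∀ k, z ∈ esegP P k → k = i₀ := by
      intro k hk
      by_contra hne
      exact hmulti ⟨k, hne, hk⟩
    have hza : z ≠ P.vtx i₀ := by
      intro he
      apply hmulti
      refine ⟨i₀ - 1, ?_, ?_⟩
      · intro hcon
        apply one_ne_zero (α := ZMod P.n)
        linear_combination -hcon
      · rw [esegP]
        have he2 : i₀ - 1 + 1 = i₀ := by ring
        rw [he2, he]
        exact right_mem_segment ℝ _ _
    have hzb' : z ≠ P.vtx (i₀ + 1) := by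
      intro he
      apply hmulti
      refine ⟨i₀ + 1, ?_, ?_⟩
      · intro hcon
        apply one_ne_zero (α := ZMod P.n)
        linear_combination hcon
      · rw [esegP, he]
        exact left_mem_segment ℝ _ _
    set a := P.vtx i₀ with hadef
    set b := P.vtx (i₀ + 1) with hbdef
    rcases P.edge_axis i₀ with hax | hax
    · -- vertical chord
      obtain ⟨hch1, hch2⟩ := (mem_seg_vert (p := a) (q := b) hax (z := z)).mp hzi₀
      have hz2a : z.2 ≠ a.2 := by
        intro he
        exact hza (Prod.ext hch1 he)
      have hz2b : z.2 ≠ b.2 := by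
        intro he
        exact hzb' (Prod.ext (hch1.trans hax) he)
      have hminlt : min a.2 b.2 < z.2 := by
        rcases min_cases a.2 b.2 with ⟨h, _⟩ | ⟨h, _⟩
        · rw [h]; exact lt_of_le_of_ne (h ▸ hch2.1) (fun hh => hz2a hh.symm)
        · rw [h]; exact lt_of_le_of_ne (h ▸ hch2.1) (fun hh => hz2b hh.symm)
      have hmaxgt : z.2 < max a.2 b.2 := by
        rcases max_cases a.2 b.2 with ⟨h, _⟩ | ⟨h, _⟩
        · rw [h]; exact lt_of_le_of_ne (h ▸ hch2.2) hz2a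
        · rw [h]; exact lt_of_le_of_ne (h ▸ hch2.2) hz2b
      set r := min r₀ (min (z.2 - min a.2 b.2) (max a.2 b.2 - z.2)) with hrdef
      have hr : 0 < r := lt_min hr₀ (lt_min (by linarith) (by linarith))
      refine ⟨r, hr, {w : Point | w.1 = z.1}, ?_, Or.inl rfl⟩
      ext w
      constructor
      · rintro ⟨hwf, hwb⟩
        refine ⟨?_, hwb⟩
        obtain ⟨k, hzk, hwk⟩ := hmem_edge w
          (ball_subset_ball (min_le_left _ _) hwb) hwf
        rw [hz_only k hzk] at hwk
        have := seg_fst_eq (p := a) (q := b) hax hwk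
        rw [mem_setOf_eq, this, hch1]
      · rintro ⟨hwL, hwb⟩
        rw [mem_setOf_eq] at hwL
        refine ⟨?_, hwb⟩
        apply esegP_sub_frontier P i₀
        rw [esegP, ← hadef, ← hbdef]
        rw [mem_seg_vert hax]
        rw [mem_ball_pt] at hwb
        have hb2 := abs_lt.mp hwb.2
        have hrm1 : r ≤ z.2 - min a.2 b.2 := le_trans (min_le_right _ _) (min_le_left _ _)
        have hrm2 : r ≤ max a.2 b.2 - z.2 := le_trans (min_le_right _ _) (min_le_right _ _)
        exact ⟨hwL.trans hch1, by constructor <;> linarith [hb2.1, hb2.2]⟩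
    · -- horizontal chord
      obtain ⟨hch1, hch2⟩ := (mem_seg_horiz (p := a) (q := b) hax (z := z)).mp hzi₀
      have hz1a : z.1 ≠ a.1 := by
        intro he
        exact hza (Prod.ext he hch1)
      have hz1b : z.1 ≠ b.1 := by
        intro he
        exact hzb' (Prod.ext he (hch1.trans hax))
      have hminlt : min a.1 b.1 < z.1 := by
        rcases min_cases a.1 b.1 with ⟨h, _⟩ | ⟨h, _⟩
        · rw [h]; exact lt_of_le_of_ne (h ▸ hch2.1) (fun hh => hz1a hh.symm)
        · rw [h]; exact lt_of_le_of_ne (h ▸ hch2.1) (fun hh => hz1b hh.symm)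
      have hmaxgt : z.1 < max a.1 b.1 := by
        rcases max_cases a.1 b.1 with ⟨h, _⟩ | ⟨h, _⟩
        · rw [h]; exact lt_of_le_of_ne (h ▸ hch2.2) hz1a
        · rw [h]; exact lt_of_le_of_ne (h ▸ hch2.2) hz1b
      set r := min r₀ (min (z.1 - min a.1 b.1) (max a.1 b.1 - z.1)) with hrdef
      have hr : 0 < r := lt_min hr₀ (lt_min (by linarith) (by linarith))
      refine ⟨r, hr, {w : Point | w.2 = z.2}, ?_, Or.inr (Or.inl rfl)⟩
      ext w
      constructor
      · rintro ⟨hwf, hwb⟩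
        refine ⟨?_, hwb⟩
        obtain ⟨k, hzk, hwk⟩ := hmem_edge w
          (ball_subset_ball (min_le_left _ _) hwb) hwf
        rw [hz_only k hzk] at hwk
        have := seg_snd_eq (p := a) (q := b) hax hwk
        rw [mem_setOf_eq, this, hch1]
      · rintro ⟨hwL, hwb⟩
        rw [mem_setOf_eq] at hwL
        refine ⟨?_, hwb⟩
        apply esegP_sub_frontier P i₀
        rw [esegP, ← hadef, ← hbdef]
        rw [mem_seg_horiz hax]
        rw [mem_ball_pt] at hwb
        have hb1 := abs_lt.mp hwb.1
        have hrm1 : r ≤ z.1 - min a.1 b.1 := le_trans (min_le_right _ _) (min_le_left _ _)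
        have hrm2 : r ≤ max a.1 b.1 - z.1 := le_trans (min_le_right _ _) (min_le_right _ _)
        exact ⟨hwL.trans hch1, by constructor <;> linarith [hb1.1, hb1.2]⟩

end LocalStruct


section LocalStruct2
open Metric

/-- Generic two-piece argument: if the boundary of `P` near `z` is `L`, and
`A`, `B` are relatively clopen pieces covering the ball minus `L`, then the
interior of `P` near `z` is exactly one of the pieces. -/
private lemma two_piece (P : RectPoly) {z : Point} {r : ℝ} (hz : z ∈ frontier P.carrier)
    (hr : 0 < r) {L A B : Set Point}
    (hfr : frontier P.carrier ∩ ball z r = L ∩ ball z r)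
    (hA : IsPreconnected (A ∩ ball z r)) (hB : IsPreconnected (B ∩ ball z r))
    (hAL : ∀ w ∈ A, w ∉ L) (hBL : ∀ w ∈ B, w ∉ L)
    (hcover : ∀ w ∈ ball z r, w ∉ L → w ∈ A ∨ w ∈ B) :
    interior P.carrier ∩ ball z r = A ∩ ball z r ∨
    interior P.carrier ∩ ball z r = B ∩ ball z r := by
  have hPcl : IsClosed P.carrier := P.compact'.isClosed
  have hnofr : ∀ (D : Set Point), (∀ w ∈ D, w ∉ L) → ∀ w ∈ D ∩ ball z r,
      w ∉ frontier P.carrier := by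
    intro D hD w hw hwf
    have : w ∈ L ∩ ball z r := hfr ▸ ⟨hwf, hw.2⟩
    exact hD w hw.1 this.1
  have dichA := clopen_dichotomy hPcl hA (hnofr A hAL)
  have dichB := clopen_dichotomy hPcl hB (hnofr B hBL)
  -- some interior point near z
  have hzP : z ∈ P.carrier := hPcl.closure_eq ▸ frontier_subset_closure hz
  have hzcl : z ∈ closure (interior P.carrier) := by
    rw [← P.regular']
    exact hzP
  obtain ⟨w₀, hw₀b, hw₀i⟩ : ∃ w₀, w₀ ∈ ball z r ∧ w₀ ∈ interior P.carrier := by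
    rw [_root_.mem_closure_iff] at hzcl
    obtain ⟨w₀, hw₀⟩ := hzcl (ball z r) isOpen_ball (mem_ball_self hr)
    exact ⟨w₀, hw₀.1, hw₀.2⟩
  have hnotL : ∀ w ∈ ball z r, w ∈ interior P.carrier → w ∉ L := by
    intro w hwb hwi hwL
    have : w ∈ frontier P.carrier ∩ ball z r := hfr ▸ ⟨hwL, hwb⟩
    exact this.1.2 hwi
  have hLP : ∀ w ∈ L ∩ ball z r, w ∈ P.carrier := by
    intro w hw
    have : w ∈ frontier P.carrier ∩ ball z r := hfr ▸ hw
    exact hPcl.closure_eq ▸ frontier_subset_closure this.1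
  -- not both pieces inside the interior
  have hnotboth : ¬ ((A ∩ ball z r ⊆ interior P.carrier) ∧
      (B ∩ ball z r ⊆ interior P.carrier)) := by
    rintro ⟨hA', hB'⟩
    have hball : ball z r ⊆ P.carrier := by
      intro w hw
      by_cases hwL : w ∈ L
      · exact hLP w ⟨hwL, hw⟩
      · rcases hcover w hw hwL with h | h
        · exact interior_subset (hA' ⟨h, hw⟩)
        · exact interior_subset (hB' ⟨h, hw⟩)
    exact hz.2 (mem_interior.mpr ⟨ball z r, hball, isOpen_ball, mem_ball_self hr⟩)
  -- the piece containing w₀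
  have hw₀nL : w₀ ∉ L := hnotL w₀ hw₀b hw₀i
  have main : ∀ (C D : Set Point), (∀ w ∈ C, w ∉ L) →
      (C ∩ ball z r ⊆ interior P.carrier) → (D ∩ ball z r) ∩ P.carrier = ∅ →
      (∀ w ∈ ball z r, w ∉ L → w ∈ C ∨ w ∈ D) →
      interior P.carrier ∩ ball z r = C ∩ ball z r := by
    intro C D hCL hCi hDe hcov
    ext w
    constructor
    · rintro ⟨hwi, hwb⟩
      have hwnL : w ∉ L := hnotL w hwb hwi
      rcases hcov w hwb hwnL with h | h
      · exact ⟨h, hwb⟩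
      · exfalso
        have : w ∈ (D ∩ ball z r) ∩ P.carrier := ⟨⟨h, hwb⟩, interior_subset hwi⟩
        rw [hDe] at this
        exact this
    · intro hw
      exact ⟨hCi hw, hw.2⟩
  rcases hcover w₀ hw₀b hw₀nL with h0 | h0
  · -- w₀ ∈ A forces A ∩ ball ⊆ interior P
    have hAi : A ∩ ball z r ⊆ interior P.carrier := by
      rcases dichA with h | h
      · exact h
      · exfalso
        have : w₀ ∈ (A ∩ ball z r) ∩ P.carrier :=
          ⟨⟨h0, hw₀b⟩, interior_subset hw₀i⟩
        rw [h] at this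
        exact this
    rcases dichB with h | h
    · exact absurd ⟨hAi, h⟩ hnotboth
    · exact Or.inl (main A B hAL hAi h hcover)
  · have hBi : B ∩ ball z r ⊆ interior P.carrier := by
      rcases dichB with h | h
      · exact h
      · exfalso
        have : w₀ ∈ (B ∩ ball z r) ∩ P.carrier :=
          ⟨⟨h0, hw₀b⟩, interior_subset hw₀i⟩
        rw [h] at this
        exact this
    rcases dichA with h | h
    · exact absurd ⟨h, hBi⟩ hnotboth
    · exact Or.inr (main B A hBL hBi h (fun w hw hwL => (hcover w hw hwL).symm))

/-- Local structure of the interior of `P` near a boundary point. -/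
private lemma local_struct (P : RectPoly) (z : Point) (hz : z ∈ frontier P.carrier) :
    ∃ r > 0,
      (∃ d : ℝ, (d = 1 ∨ d = -1) ∧
        interior P.carrier ∩ ball z r = {w : Point | 0 < d * (w.1 - z.1)} ∩ ball z r) ∨
      (∃ d : ℝ, (d = 1 ∨ d = -1) ∧
        interior P.carrier ∩ ball z r = {w : Point | 0 < d * (w.2 - z.2)} ∩ ball z r) ∨
      (∃ dx dy : ℝ, (dx = 1 ∨ dx = -1) ∧ (dy = 1 ∨ dy = -1) ∧
        interior P.carrier ∩ ball z r =
          {w : Point | 0 < dx * (w.1 - z.1) ∧ 0 < dy * (w.2 - z.2)} ∩ ball z r) ∨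
      (∃ dx dy : ℝ, (dx = 1 ∨ dx = -1) ∧ (dy = 1 ∨ dy = -1) ∧
        interior P.carrier ∩ ball z r =
          {w : Point | 0 < dx * (w.1 - z.1) ∨ 0 < dy * (w.2 - z.2)} ∩ ball z r) := by
  obtain ⟨r, hr, L, hfr, hforms⟩ := boundary_local P z hz
  rcases hforms with hL | hL | ⟨dx, dy, hdx, hdy, hL⟩
  · -- vertical chord
    subst hL
    have := two_piece P hz hr (A := {w : Point | 0 < 1 * (w.1 - z.1)})
      (B := {w : Point | 0 < (-1) * (w.1 - z.1)}) hfr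
      ((convex_pos_mul_x 1 z.1).inter (convex_ball z r)).isPreconnected
      ((convex_pos_mul_x (-1) z.1).inter (convex_ball z r)).isPreconnected
      (by intro w hw hL; rw [mem_setOf_eq] at hw hL; rw [hL] at hw; simp at hw)
      (by intro w hw hL; rw [mem_setOf_eq] at hw hL; rw [hL] at hw; simp at hw)
      (by
        intro w _ hwL
        rw [mem_setOf_eq] at hwL
        rcases lt_or_gt_of_ne (fun h : w.1 - z.1 = 0 => hwL (by linarith)) with h | h
        · right; rw [mem_setOf_eq]; linarith
        · left; rw [mem_setOf_eq]; linarith)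
    rcases this with h | h
    · exact ⟨r, hr, Or.inl ⟨1, Or.inl rfl, h⟩⟩
    · exact ⟨r, hr, Or.inl ⟨-1, Or.inr rfl, h⟩⟩
  · -- horizontal chord
    subst hL
    have := two_piece P hz hr (A := {w : Point | 0 < 1 * (w.2 - z.2)})
      (B := {w : Point | 0 < (-1) * (w.2 - z.2)}) hfr
      ((convex_pos_mul_y 1 z.2).inter (convex_ball z r)).isPreconnected
      ((convex_pos_mul_y (-1) z.2).inter (convex_ball z r)).isPreconnected
      (by intro w hw hL; rw [mem_setOf_eq] at hw hL; rw [hL] at hw; simp at hw)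
      (by intro w hw hL; rw [mem_setOf_eq] at hw hL; rw [hL] at hw; simp at hw)
      (by
        intro w _ hwL
        rw [mem_setOf_eq] at hwL
        rcases lt_or_gt_of_ne (fun h : w.2 - z.2 = 0 => hwL (by linarith)) with h | h
        · right; rw [mem_setOf_eq]; linarith
        · left; rw [mem_setOf_eq]; linarith)
    rcases this with h | h
    · exact ⟨r, hr, Or.inr (Or.inl ⟨1, Or.inl rfl, h⟩)⟩
    · exact ⟨r, hr, Or.inr (Or.inl ⟨-1, Or.inr rfl, h⟩)⟩
  · -- L-shaped boundary
    subst hL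
    have hdx2 : dx * dx = 1 := by rcases hdx with rfl | rfl <;> norm_num
    have hdy2 : dy * dy = 1 := by rcases hdy with rfl | rfl <;> norm_num
    have hdxne : dx ≠ 0 := by rcases hdx with rfl | rfl <;> norm_num
    have hdyne : dy ≠ 0 := by rcases hdy with rfl | rfl <;> norm_num
    have habsx : |dx| = 1 := by rcases hdx with rfl | rfl <;> norm_num
    have habsy : |dy| = 1 := by rcases hdy with rfl | rfl <;> norm_num
    set A : Set Point := {w : Point | 0 < dx * (w.1 - z.1) ∧ 0 < dy * (w.2 - z.2)} with hAdef
    set B : Set Point :=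
      {w : Point | 0 < -dx * (w.1 - z.1) ∨ 0 < -dy * (w.2 - z.2)} with hBdef
    have hBsplit : B ∩ ball z r =
        ({w : Point | 0 < -dx * (w.1 - z.1)} ∩ ball z r) ∪
        ({w : Point | 0 < -dy * (w.2 - z.2)} ∩ ball z r) := by
      ext w
      rw [hBdef]
      simp only [Set.mem_inter_iff, Set.mem_union, mem_setOf_eq]
      tauto
    have hBpre : IsPreconnected (B ∩ ball z r) := by
      rw [hBsplit]
      apply IsPreconnected.union ((z.1 - dx * (r/2), z.2 - dy * (r/2)) : Point)
      · refine ⟨?_, ?_⟩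
        · rw [mem_setOf_eq]
          have : (z.1 - dx * (r/2)) - z.1 = -(dx * (r/2)) := by ring
          rw [this]
          have : -dx * -(dx * (r/2)) = dx * dx * (r/2) := by ring
          rw [this, hdx2]
          linarith
        · rw [mem_ball_pt]
          constructor
          · have : z.1 - dx * (r/2) - z.1 = -(dx * (r/2)) := by ring
            rw [this, abs_neg, abs_mul, habsx, one_mul, abs_of_pos (by linarith)]
            linarith
          · have : z.2 - dy * (r/2) - z.2 = -(dy * (r/2)) := by ring
            rw [this, abs_neg, abs_mul, habsy, one_mul, abs_of_pos (by linarith)]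
            linarith
      · refine ⟨?_, ?_⟩
        · rw [mem_setOf_eq]
          have : (z.2 - dy * (r/2)) - z.2 = -(dy * (r/2)) := by ring
          rw [this]
          have : -dy * -(dy * (r/2)) = dy * dy * (r/2) := by ring
          rw [this, hdy2]
          linarith
        · rw [mem_ball_pt]
          constructor
          · have : z.1 - dx * (r/2) - z.1 = -(dx * (r/2)) := by ring
            rw [this, abs_neg, abs_mul, habsx, one_mul, abs_of_pos (by linarith)]
            linarith
          · have : z.2 - dy * (r/2) - z.2 = -(dy * (r/2)) := by ring
            rw [this, abs_neg, abs_mul, habsy, one_mul, abs_of_pos (by linarith)]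
            linarith
      · exact ((convex_pos_mul_x (-dx) z.1).inter (convex_ball z r)).isPreconnected
      · exact ((convex_pos_mul_y (-dy) z.2).inter (convex_ball z r)).isPreconnected
    have hApre : IsPreconnected (A ∩ ball z r) := by
      rw [hAdef]
      have : {w : Point | 0 < dx * (w.1 - z.1) ∧ 0 < dy * (w.2 - z.2)} =
          {w : Point | 0 < dx * (w.1 - z.1)} ∩ {w : Point | 0 < dy * (w.2 - z.2)} := rfl
      rw [this]
      exact (((convex_pos_mul_x dx z.1).inter (convex_pos_mul_y dy z.2)).inter
        (convex_ball z r)).isPreconnected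
    have hAL : ∀ w ∈ A, w ∉
        {w : Point | (w.1 = z.1 ∧ 0 ≤ dy * (w.2 - z.2)) ∨
          (w.2 = z.2 ∧ 0 ≤ dx * (w.1 - z.1))} := by
      intro w hw hwL
      rw [hAdef, mem_setOf_eq] at hw
      rcases hwL with ⟨h1, _⟩ | ⟨h1, _⟩
      · have : dx * (w.1 - z.1) = 0 := by rw [h1]; ring
        linarith [hw.1]
      · have : dy * (w.2 - z.2) = 0 := by rw [h1]; ring
        linarith [hw.2]
    have hBL : ∀ w ∈ B, w ∉
        {w : Point | (w.1 = z.1 ∧ 0 ≤ dy * (w.2 - z.2)) ∨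
          (w.2 = z.2 ∧ 0 ≤ dx * (w.1 - z.1))} := by
      intro w hw hwL
      rw [hBdef, mem_setOf_eq] at hw
      rcases hwL with ⟨h1, h2⟩ | ⟨h1, h2⟩
      · rcases hw with h | h
        · have : -dx * (w.1 - z.1) = 0 := by rw [h1]; ring
          linarith
        · nlinarith
      · rcases hw with h | h
        · nlinarith
        · have : -dy * (w.2 - z.2) = 0 := by rw [h1]; ring
          linarith
    have hcover : ∀ w ∈ ball z r, w ∉
        {w : Point | (w.1 = z.1 ∧ 0 ≤ dy * (w.2 - z.2)) ∨
          (w.2 = z.2 ∧ 0 ≤ dx * (w.1 - z.1))} → w ∈ A ∨ w ∈ B := by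
      intro w _ hwL
      rw [mem_setOf_eq] at hwL
      push_neg at hwL
      obtain ⟨hc1, hc2⟩ := hwL
      by_cases hB1 : 0 < -dx * (w.1 - z.1)
      · right; rw [hBdef, mem_setOf_eq]; exact Or.inl hB1
      · by_cases hB2 : 0 < -dy * (w.2 - z.2)
        · right; rw [hBdef, mem_setOf_eq]; exact Or.inr hB2
        · left
          rw [hAdef, mem_setOf_eq]
          push_neg at hB1 hB2
          have hx0 : 0 ≤ dx * (w.1 - z.1) := by nlinarith
          have hy0 : 0 ≤ dy * (w.2 - z.2) := by nlinarith
          constructor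
          · rcases lt_or_eq_of_le hx0 with h | h
            · exact h
            · exfalso
              have hw1 : w.1 = z.1 := by
                have : w.1 - z.1 = 0 := by
                  rcases mul_eq_zero.mp h.symm with h' | h'
                  · exact absurd h' hdxne
                  · exact h'
                linarith
              exact absurd hy0 (not_le.mpr (hc1 hw1))
          · rcases lt_or_eq_of_le hy0 with h | h
            · exact h
            · exfalso
              have hw2 : w.2 = z.2 := by
                have : w.2 - z.2 = 0 := by
                  rcases mul_eq_zero.mp h.symm with h' | h'
                  · exact absurd h' hdyne
                  · exact h'
                linarith
              exact absurd hx0 (not_le.mpr (hc2 hw2))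
    have := two_piece P hz hr hfr hApre hBpre hAL hBL hcover
    rcases this with h | h
    · exact ⟨r, hr, Or.inr (Or.inr (Or.inl ⟨dx, dy, hdx, hdy, h⟩))⟩
    · refine ⟨r, hr, Or.inr (Or.inr (Or.inr ⟨-dx, -dy, ?_, ?_, h⟩))⟩
      · rcases hdx with rfl | rfl
        · exact Or.inr (by norm_num)
        · exact Or.inl (by norm_num)
      · rcases hdy with rfl | rfl
        · exact Or.inr (by norm_num)
        · exact Or.inl (by norm_num)

end LocalStruct2


section SideConst
open Metric

/-- Along the open vertical cut, the region lies (locally) exactly on the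
right side. -/
lemma side_const_vert (P : RectPoly) {T : Set Point} {o : Point} {hh ww : ℝ}
    (hTcl : IsClosed T) (hhh : o.2 < hh) (hww : o.1 < ww)
    (hvseg : {w : Point | w.1 = o.1 ∧ w.2 ∈ Icc o.2 hh} ⊆ frontier T)
    (hbd : frontier T ⊆ frontier P.carrier ∪
      ({w : Point | w.1 = o.1 ∧ w.2 ∈ Icc o.2 hh} ∪
       {w : Point | w.2 = o.2 ∧ w.1 ∈ Icc o.1 ww}))
    (hov : {w : Point | w.1 = o.1 ∧ w.2 ∈ Ioo o.2 hh} ⊆ interior P.carrier)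
    {ε : ℝ} (hε : 0 < ε)
    (hTR : ∀ z ∈ ball o ε, (z ∈ T ↔ o.1 ≤ z.1 ∧ o.2 ≤ z.2)) :
    ∀ y ∈ Ioo o.2 hh, ∃ r > 0,
      (∀ w ∈ ball ((o.1, y) : Point) r, o.1 < w.1 → w ∈ T) ∧
      (∀ w ∈ ball ((o.1, y) : Point) r, w.1 < o.1 → w ∉ T) := by
  classical
  set U : Set ℝ :=
    {y | ∃ r > 0, ∀ w ∈ ball ((o.1, y) : Point) r, o.1 < w.1 → w ∈ T} with hUdef
  set V : Set ℝ :=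
    {y | ∃ r > 0, ∀ w ∈ ball ((o.1, y) : Point) r, o.1 < w.1 → w ∉ T} with hVdef
  have shrink : ∀ (y y' r : ℝ), |y' - y| < r / 2 →
      ∀ w ∈ ball ((o.1, y') : Point) (r / 2), w ∈ ball ((o.1, y) : Point) r := by
    intro y y' r hy' w hw
    rw [mem_ball_pt] at hw ⊢
    have h1 := abs_lt.mp hw.1
    have h2 := abs_lt.mp hw.2
    have h3 := abs_lt.mp hy'
    simp only at h1 h2 ⊢
    constructor
    · rw [abs_lt]; constructor <;> linarith
    · rw [abs_lt]; constructor <;> linarith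
  have hUopen : IsOpen U := by
    rw [Metric.isOpen_iff]
    rintro y ⟨r, hr, hy⟩
    refine ⟨r / 2, by linarith, ?_⟩
    intro y' hy'
    rw [mem_ball, Real.dist_eq] at hy'
    exact ⟨r / 2, by linarith, fun w hw hw1 => hy w (shrink y y' r hy' w hw) hw1⟩
  have hVopen : IsOpen V := by
    rw [Metric.isOpen_iff]
    rintro y ⟨r, hr, hy⟩
    refine ⟨r / 2, by linarith, ?_⟩
    intro y' hy'
    rw [mem_ball, Real.dist_eq] at hy'
    exact ⟨r / 2, by linarith, fun w hw hw1 => hy w (shrink y y' r hy' w hw) hw1⟩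
  have hUV : ∀ y, ¬(y ∈ U ∧ y ∈ V) := by
    rintro y ⟨⟨r, hr, hyU⟩, ⟨r', hr', hyV⟩⟩
    have hmin : 0 < min r r' := lt_min hr hr'
    set w : Point := (o.1 + min r r' / 2, y) with hwdef
    have hwb : ∀ s, min r r' ≤ s → w ∈ ball ((o.1, y) : Point) s := by
      intro s hs
      rw [mem_ball_pt]
      constructor
      · simp only [hwdef, add_sub_cancel_left]
        rw [abs_of_pos (by positivity)]
        linarith
      · simp only [hwdef, sub_self, abs_zero]
        linarith
    have hgt : o.1 < w.1 := by
      simp only [hwdef]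
      linarith
    exact hyV w (hwb r' (min_le_right r r')) hgt (hyU w (hwb r (min_le_left r r')) hgt)
  -- the building block: dichotomy for one-sided disks
  have hdich : ∀ y ∈ Ioo o.2 hh, ∀ d : ℝ, (d = 1 ∨ d = -1) →
      ∃ r > 0, ({w : Point | 0 < d * (w.1 - o.1)} ∩ ball ((o.1, y) : Point) r
          ⊆ interior T) ∨
        ({w : Point | 0 < d * (w.1 - o.1)} ∩ ball ((o.1, y) : Point) r) ∩ T = ∅ := by
    intro y hy d hd
    set z : Point := (o.1, y) with hzdef
    have hzint : z ∈ interior P.carrier := hov ⟨rfl, hy⟩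
    obtain ⟨r₁, hr₁, hball₁⟩ := Metric.isOpen_iff.mp isOpen_interior z hzint
    set r := min r₁ (min (y - o.2) (hh - y)) with hrdef
    have hr : 0 < r := lt_min hr₁ (lt_min (by linarith [hy.1]) (by linarith [hy.2]))
    have hrr₁ : r ≤ r₁ := min_le_left _ _
    have hry : r ≤ y - o.2 := le_trans (min_le_right _ _) (min_le_left _ _)
    have hdne : d ≠ 0 := by rcases hd with rfl | rfl <;> norm_num
    set D : Set Point := {w : Point | 0 < d * (w.1 - o.1)} ∩ ball z r with hDdef
    have hDpre : IsPreconnected D :=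
      ((convex_pos_mul_x d o.1).inter (convex_ball z r)).isPreconnected
    have hDfr : ∀ w ∈ D, w ∉ frontier T := by
      rintro w ⟨hw1, hwb⟩ hwf
      rw [mem_setOf_eq] at hw1
      have hw1' : w.1 ≠ o.1 := by
        intro hcon
        rw [hcon] at hw1
        simp at hw1
      rcases hbd hwf with h | h | h
      · exact h.2 (hball₁ (ball_subset_ball hrr₁ hwb))
      · rw [mem_setOf_eq] at h
        exact hw1' h.1
      · rw [mem_setOf_eq] at h
        rw [mem_ball_pt] at hwb
        have h2 := abs_lt.mp hwb.2
        simp only [hzdef] at h2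
        linarith [h.1.symm ▸ h2.1, hy.1]
    exact ⟨r, hr, clopen_dichotomy hTcl hDpre hDfr⟩
  have hcover : Ioo o.2 hh ⊆ U ∪ V := by
    intro y hy
    obtain ⟨r, hr, hdi⟩ := hdich y hy 1 (Or.inl rfl)
    rcases hdi with h | h
    · left
      exact ⟨r, hr, fun w hw hw1 =>
        interior_subset (h ⟨by rw [mem_setOf_eq, one_mul]; linarith, hw⟩)⟩
    · right
      refine ⟨r, hr, fun w hw hw1 hwT => ?_⟩
      have : w ∈ ({w : Point | 0 < 1 * (w.1 - o.1)} ∩ ball ((o.1, y) : Point) r) ∩ T :=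
        ⟨⟨by rw [mem_setOf_eq, one_mul]; linarith, hw⟩, hwT⟩
      rw [h] at this
      exact this
  -- a point of U near the bottom of the cut
  have hU0 : ∃ y₀ ∈ Ioo o.2 hh, y₀ ∈ U := by
    set m := min ε (hh - o.2) / 2 with hmdef
    have hm0 : 0 < m := by
      apply div_pos _ (by norm_num)
      exact lt_min hε (by linarith)
    have hmε : m < ε := by have := min_le_left ε (hh - o.2); linarith
    have hmh : m ≤ (hh - o.2) / 2 := by have := min_le_right ε (hh - o.2); linarith
    set y₀ := o.2 + m with hy₀def
    refine ⟨y₀, ⟨by linarith, by linarith⟩, min m (ε - m), lt_min hm0 (by linarith), ?_⟩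
    intro w hw hw1
    rw [mem_ball_pt] at hw
    have h1 := abs_lt.mp hw.1
    have h2 := abs_lt.mp hw.2
    simp only at h1 h2
    have hmm1 : min m (ε - m) ≤ m := min_le_left _ _
    have hmm2 : min m (ε - m) ≤ ε - m := min_le_right _ _
    have hwball : w ∈ ball o ε := by
      rw [mem_ball_pt]
      constructor
      · rw [abs_lt]; constructor <;> linarith [h1.1, h1.2]
      · rw [abs_lt]
        constructor
        · simp only [hy₀def] at h2
          linarith [h2.1]
        · simp only [hy₀def] at h2
          linarith [h2.2]
    rw [hTR w hwball]
    constructor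
    · linarith
    · simp only [hy₀def] at h2
      linarith [h2.1]
  -- all of the interval is in U
  have hallU : ∀ y ∈ Ioo o.2 hh, y ∈ U := by
    intro y hy
    by_contra hyU
    have hyV : y ∈ V := by
      rcases hcover hy with h | h
      · exact absurd h hyU
      · exact h
    obtain ⟨y₀, hy₀I, hy₀U⟩ := hU0
    obtain ⟨u, hu⟩ := isPreconnected_Ioo (a := o.2) (b := hh) U V hUopen hVopen hcover
      ⟨y₀, hy₀I, hy₀U⟩ ⟨y, hy, hyV⟩
    exact hUV u ⟨hu.2.1, hu.2.2⟩
  -- final assembly, including the left side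
  intro y hy
  obtain ⟨rU, hrU, hUy⟩ := hallU y hy
  obtain ⟨rL, hrL, hdiL⟩ := hdich y hy (-1) (Or.inr rfl)
  rcases hdiL with hL | hL
  · -- left disk inside T : contradiction with the cut being on the frontier
    exfalso
    set rr := min rU rL with hrrdef
    have hrr : 0 < rr := lt_min hrU hrL
    have hball : ball ((o.1, y) : Point) rr ⊆ T := by
      intro w hw
      have hwU : w ∈ ball ((o.1, y) : Point) rU := ball_subset_ball (min_le_left _ _) hw
      have hwL : w ∈ ball ((o.1, y) : Point) rL := ball_subset_ball (min_le_right _ _) hw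
      rcases lt_trichotomy w.1 o.1 with h | h | h
      · exact interior_subset (hL ⟨by rw [mem_setOf_eq]; linarith, hwL⟩)
      · -- on the line : limit of right-side points
        have : w ∈ closure T := by
          rw [_root_.mem_closure_iff]
          intro O hO hwO
          obtain ⟨τ, hτ, hτball⟩ := Metric.isOpen_iff.mp hO w hwO
          rw [mem_ball_pt] at hwU
          have h2 := abs_lt.mp hwU.2
          set m₂ := rU - |w.2 - y| with hm₂def
          have hm₂ : 0 < m₂ := by
            rw [hm₂def]
            have := abs_lt.mpr h2
            simp only at this ⊢
            linarith [abs_lt.mp hwU.2]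
          set w' : Point := (o.1 + min τ m₂ / 2, w.2) with hw'def
          have hminτ : 0 < min τ m₂ := lt_min hτ hm₂
          refine ⟨w', hτball ?_, ?_⟩
          · rw [mem_ball_pt]
            constructor
            · simp only [hw'def]
              rw [h, add_sub_cancel_left, abs_of_pos (by positivity)]
              have := min_le_left τ m₂
              linarith
            · simp only [hw'def, sub_self, abs_zero]
              exact hτ
          · apply hUy
            · rw [mem_ball_pt]
              constructor
              · simp only [hw'def, add_sub_cancel_left]
                rw [abs_of_pos (by positivity)]
                have h5 := min_le_right τ m₂
                have h6 := abs_nonneg (w.2 - y)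
                simp only [hm₂def] at h5
                linarith
              · simp only [hw'def]
                exact hwU.2
            · simp only [hw'def]
              linarith
        rwa [hTcl.closure_eq] at this
      · exact hUy w hwU h
    have : ((o.1, y) : Point) ∈ interior T :=
      mem_interior.mpr ⟨_, hball, isOpen_ball, mem_ball_self hrr⟩
    have hfrz : ((o.1, y) : Point) ∈ frontier T := hvseg ⟨rfl, hy.1.le, hy.2.le⟩
    exact hfrz.2 this
  · -- left disk misses T : done
    refine ⟨min rU rL, lt_min hrU hrL, ?_, ?_⟩
    · intro w hw hw1
      exact hUy w (ball_subset_ball (min_le_left _ _) hw) hw1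
    · intro w hw hw1 hwT
      have : w ∈ ({w : Point | 0 < (-1) * (w.1 - o.1)} ∩ ball ((o.1, y) : Point) rL) ∩ T :=
        ⟨⟨by rw [mem_setOf_eq]; linarith, ball_subset_ball (min_le_right _ _) hw⟩, hwT⟩
      rw [hL] at this
      exact this

end SideConst


section SideConstH
open Metric

/-- Along the open horizontal cut, the region lies (locally) exactly on the
upper side. -/
lemma side_const_horiz (P : RectPoly) {T : Set Point} {o : Point} {hh ww : ℝ}
    (hTcl : IsClosed T) (hhh : o.2 < hh) (hww : o.1 < ww)
    (hhseg : {w : Point | w.2 = o.2 ∧ w.1 ∈ Icc o.1 ww} ⊆ frontier T)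
    (hbd : frontier T ⊆ frontier P.carrier ∪
      ({w : Point | w.1 = o.1 ∧ w.2 ∈ Icc o.2 hh} ∪
       {w : Point | w.2 = o.2 ∧ w.1 ∈ Icc o.1 ww}))
    (hoh : {w : Point | w.2 = o.2 ∧ w.1 ∈ Ioo o.1 ww} ⊆ interior P.carrier)
    {ε : ℝ} (hε : 0 < ε)
    (hTR : ∀ z ∈ ball o ε, (z ∈ T ↔ o.1 ≤ z.1 ∧ o.2 ≤ z.2)) :
    ∀ x ∈ Ioo o.1 ww, ∃ r > 0,
      (∀ w ∈ ball ((x, o.2) : Point) r, o.2 < w.2 → w ∈ T) ∧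
      (∀ w ∈ ball ((x, o.2) : Point) r, w.2 < o.2 → w ∉ T) := by
  classical
  set U : Set ℝ :=
    {x | ∃ r > 0, ∀ w ∈ ball ((x, o.2) : Point) r, o.2 < w.2 → w ∈ T} with hUdef
  set V : Set ℝ :=
    {x | ∃ r > 0, ∀ w ∈ ball ((x, o.2) : Point) r, o.2 < w.2 → w ∉ T} with hVdef
  have shrink : ∀ (x x' r : ℝ), |x' - x| < r / 2 →
      ∀ w ∈ ball ((x', o.2) : Point) (r / 2), w ∈ ball ((x, o.2) : Point) r := by
    intro x x' r hx' w hw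
    rw [mem_ball_pt] at hw ⊢
    have h1 := abs_lt.mp hw.1
    have h2 := abs_lt.mp hw.2
    have h3 := abs_lt.mp hx'
    simp only at h1 h2 ⊢
    constructor
    · rw [abs_lt]; constructor <;> linarith
    · rw [abs_lt]; constructor <;> linarith
  have hUopen : IsOpen U := by
    rw [Metric.isOpen_iff]
    rintro x ⟨r, hr, hx⟩
    refine ⟨r / 2, by linarith, ?_⟩
    intro x' hx'
    rw [mem_ball, Real.dist_eq] at hx'
    exact ⟨r / 2, by linarith, fun w hw hw2 => hx w (shrink x x' r hx' w hw) hw2⟩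
  have hVopen : IsOpen V := by
    rw [Metric.isOpen_iff]
    rintro x ⟨r, hr, hx⟩
    refine ⟨r / 2, by linarith, ?_⟩
    intro x' hx'
    rw [mem_ball, Real.dist_eq] at hx'
    exact ⟨r / 2, by linarith, fun w hw hw2 => hx w (shrink x x' r hx' w hw) hw2⟩
  have hUV : ∀ x, ¬(x ∈ U ∧ x ∈ V) := by
    rintro x ⟨⟨r, hr, hxU⟩, ⟨r', hr', hxV⟩⟩
    have hmin : 0 < min r r' := lt_min hr hr'
    set w : Point := (x, o.2 + min r r' / 2) with hwdef
    have hwb : ∀ s, min r r' ≤ s → w ∈ ball ((x, o.2) : Point) s := by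
      intro s hs
      rw [mem_ball_pt]
      constructor
      · simp only [hwdef, sub_self, abs_zero]
        linarith
      · simp only [hwdef, add_sub_cancel_left]
        rw [abs_of_pos (by positivity)]
        linarith
    have hgt : o.2 < w.2 := by
      simp only [hwdef]
      linarith
    exact hxV w (hwb r' (min_le_right r r')) hgt (hxU w (hwb r (min_le_left r r')) hgt)
  have hdich : ∀ x ∈ Ioo o.1 ww, ∀ d : ℝ, (d = 1 ∨ d = -1) →
      ∃ r > 0, ({w : Point | 0 < d * (w.2 - o.2)} ∩ ball ((x, o.2) : Point) r
          ⊆ interior T) ∨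
        ({w : Point | 0 < d * (w.2 - o.2)} ∩ ball ((x, o.2) : Point) r) ∩ T = ∅ := by
    intro x hx d hd
    set z : Point := (x, o.2) with hzdef
    have hzint : z ∈ interior P.carrier := hoh ⟨rfl, hx⟩
    obtain ⟨r₁, hr₁, hball₁⟩ := Metric.isOpen_iff.mp isOpen_interior z hzint
    set r := min r₁ (min (x - o.1) (ww - x)) with hrdef
    have hr : 0 < r := lt_min hr₁ (lt_min (by linarith [hx.1]) (by linarith [hx.2]))
    have hrr₁ : r ≤ r₁ := min_le_left _ _
    have hrx : r ≤ x - o.1 := le_trans (min_le_right _ _) (min_le_left _ _)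
    set D : Set Point := {w : Point | 0 < d * (w.2 - o.2)} ∩ ball z r with hDdef
    have hDpre : IsPreconnected D :=
      ((convex_pos_mul_y d o.2).inter (convex_ball z r)).isPreconnected
    have hDfr : ∀ w ∈ D, w ∉ frontier T := by
      rintro w ⟨hw2, hwb⟩ hwf
      rw [mem_setOf_eq] at hw2
      have hw2' : w.2 ≠ o.2 := by
        intro hcon
        rw [hcon] at hw2
        simp at hw2
      rcases hbd hwf with h | h | h
      · exact h.2 (hball₁ (ball_subset_ball hrr₁ hwb))
      · rw [mem_setOf_eq] at h
        rw [mem_ball_pt] at hwb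
        have h1 := abs_lt.mp hwb.1
        simp only [hzdef] at h1
        linarith [h.1.symm ▸ h1.1, hx.1]
      · rw [mem_setOf_eq] at h
        exact hw2' h.1
    exact ⟨r, hr, clopen_dichotomy hTcl hDpre hDfr⟩
  have hcover : Ioo o.1 ww ⊆ U ∪ V := by
    intro x hx
    obtain ⟨r, hr, hdi⟩ := hdich x hx 1 (Or.inl rfl)
    rcases hdi with h | h
    · left
      exact ⟨r, hr, fun w hw hw2 =>
        interior_subset (h ⟨by rw [mem_setOf_eq, one_mul]; linarith, hw⟩)⟩
    · right
      refine ⟨r, hr, fun w hw hw2 hwT => ?_⟩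
      have : w ∈ ({w : Point | 0 < 1 * (w.2 - o.2)} ∩ ball ((x, o.2) : Point) r) ∩ T :=
        ⟨⟨by rw [mem_setOf_eq, one_mul]; linarith, hw⟩, hwT⟩
      rw [h] at this
      exact this
  have hU0 : ∃ x₀ ∈ Ioo o.1 ww, x₀ ∈ U := by
    set m := min ε (ww - o.1) / 2 with hmdef
    have hm0 : 0 < m := by
      apply div_pos _ (by norm_num)
      exact lt_min hε (by linarith)
    have hmε : m < ε := by have := min_le_left ε (ww - o.1); linarith
    have hmh : m ≤ (ww - o.1) / 2 := by have := min_le_right ε (ww - o.1); linarith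
    set x₀ := o.1 + m with hx₀def
    refine ⟨x₀, ⟨by linarith, by linarith⟩, min m (ε - m), lt_min hm0 (by linarith), ?_⟩
    intro w hw hw2
    rw [mem_ball_pt] at hw
    have h1 := abs_lt.mp hw.1
    have h2 := abs_lt.mp hw.2
    simp only at h1 h2
    have hmm1 : min m (ε - m) ≤ m := min_le_left _ _
    have hmm2 : min m (ε - m) ≤ ε - m := min_le_right _ _
    have hwball : w ∈ ball o ε := by
      rw [mem_ball_pt]
      constructor
      · rw [abs_lt]
        constructor
        · simp only [hx₀def] at h1
          linarith [h1.1]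
        · simp only [hx₀def] at h1
          linarith [h1.2]
      · rw [abs_lt]; constructor <;> linarith [h2.1, h2.2]
    rw [hTR w hwball]
    constructor
    · simp only [hx₀def] at h1
      linarith [h1.1]
    · linarith
  have hallU : ∀ x ∈ Ioo o.1 ww, x ∈ U := by
    intro x hx
    by_contra hxU
    have hxV : x ∈ V := by
      rcases hcover hx with h | h
      · exact absurd h hxU
      · exact h
    obtain ⟨x₀, hx₀I, hx₀U⟩ := hU0
    obtain ⟨u, hu⟩ := isPreconnected_Ioo (a := o.1) (b := ww) U V hUopen hVopen hcover
      ⟨x₀, hx₀I, hx₀U⟩ ⟨x, hx, hxV⟩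
    exact hUV u ⟨hu.2.1, hu.2.2⟩
  intro x hx
  obtain ⟨rU, hrU, hUx⟩ := hallU x hx
  obtain ⟨rL, hrL, hdiL⟩ := hdich x hx (-1) (Or.inr rfl)
  rcases hdiL with hL | hL
  · exfalso
    set rr := min rU rL with hrrdef
    have hrr : 0 < rr := lt_min hrU hrL
    have hball : ball ((x, o.2) : Point) rr ⊆ T := by
      intro w hw
      have hwU : w ∈ ball ((x, o.2) : Point) rU := ball_subset_ball (min_le_left _ _) hw
      have hwL : w ∈ ball ((x, o.2) : Point) rL := ball_subset_ball (min_le_right _ _) hw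
      rcases lt_trichotomy w.2 o.2 with h | h | h
      · exact interior_subset (hL ⟨by rw [mem_setOf_eq]; linarith, hwL⟩)
      · have : w ∈ closure T := by
          rw [_root_.mem_closure_iff]
          intro O hO hwO
          obtain ⟨τ, hτ, hτball⟩ := Metric.isOpen_iff.mp hO w hwO
          rw [mem_ball_pt] at hwU
          have h1 := abs_lt.mp hwU.1
          set m₂ := rU - |w.1 - x| with hm₂def
          have hm₂ : 0 < m₂ := by
            rw [hm₂def]
            simp only at h1 ⊢
            linarith [abs_lt.mp hwU.1]
          set w' : Point := (w.1, o.2 + min τ m₂ / 2) with hw'def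
          have hminτ : 0 < min τ m₂ := lt_min hτ hm₂
          refine ⟨w', hτball ?_, ?_⟩
          · rw [mem_ball_pt]
            constructor
            · simp only [hw'def, sub_self, abs_zero]
              exact hτ
            · simp only [hw'def]
              rw [h, add_sub_cancel_left, abs_of_pos (by positivity)]
              have := min_le_left τ m₂
              linarith
          · apply hUx
            · rw [mem_ball_pt]
              constructor
              · simp only [hw'def]
                exact hwU.1
              · simp only [hw'def, add_sub_cancel_left]
                rw [abs_of_pos (by positivity)]
                have h5 := min_le_right τ m₂
                have h6 := abs_nonneg (w.1 - x)
                simp only [hm₂def] at h5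
                linarith
            · simp only [hw'def]
              linarith
        rwa [hTcl.closure_eq] at this
      · exact hUx w hwU h
    have : ((x, o.2) : Point) ∈ interior T :=
      mem_interior.mpr ⟨_, hball, isOpen_ball, mem_ball_self hrr⟩
    have hfrz : ((x, o.2) : Point) ∈ frontier T := hhseg ⟨rfl, hx.1.le, hx.2.le⟩
    exact hfrz.2 this
  · refine ⟨min rU rL, lt_min hrU hrL, ?_, ?_⟩
    · intro w hw hw2
      exact hUx w (ball_subset_ball (min_le_left _ _) hw) hw2
    · intro w hw hw2 hwT
      have : w ∈ ({w : Point | 0 < (-1) * (w.2 - o.2)} ∩ ball ((x, o.2) : Point) rL) ∩ T :=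
        ⟨⟨by rw [mem_setOf_eq]; linarith, ball_subset_ball (min_le_right _ _) hw⟩, hwT⟩
      rw [hL] at this
      exact this

end SideConstH


section CutEnd
open Metric

private lemma restrict_ball {X Y : Set Point} {z : Point} {r ρ : ℝ} (hρ : ρ ≤ r)
    (h : X ∩ ball z r = Y ∩ ball z r) : X ∩ ball z ρ = Y ∩ ball z ρ := by
  ext w
  constructor
  · rintro ⟨hw, hwb⟩
    have : w ∈ Y ∩ ball z r := h ▸ ⟨hw, ball_subset_ball hρ hwb⟩
    exact ⟨this.1, hwb⟩
  · rintro ⟨hw, hwb⟩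
    have : w ∈ X ∩ ball z r := h.symm ▸ ⟨hw, ball_subset_ball hρ hwb⟩
    exact ⟨this.1, hwb⟩

set_option maxHeartbeats 2000000 in
/-- Near the top end of the vertical cut, the difference of the two regions is
empty. -/
private lemma vcut_end_clear (P : RectPoly) {S S' : Set Point} {o : Point} {hh ww : ℝ}
    (hScl : IsClosed S) (hS'cl : IsClosed S') (hSP : S ⊆ P.carrier)
    (hhh : o.2 < hh) (hww : o.1 < ww)
    (hbdS : frontier S ⊆ frontier P.carrier ∪
      ({w : Point | w.1 = o.1 ∧ w.2 ∈ Icc o.2 hh} ∪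
       {w : Point | w.2 = o.2 ∧ w.1 ∈ Icc o.1 ww}))
    (hbdS' : frontier S' ⊆ frontier P.carrier ∪
      ({w : Point | w.1 = o.1 ∧ w.2 ∈ Icc o.2 hh} ∪
       {w : Point | w.2 = o.2 ∧ w.1 ∈ Icc o.1 ww}))
    (hCvS : {w : Point | w.1 = o.1 ∧ w.2 ∈ Icc o.2 hh} ⊆ frontier S)
    (hov : {w : Point | w.1 = o.1 ∧ w.2 ∈ Ioo o.2 hh} ⊆ interior P.carrier)
    (hePv : ((o.1, hh) : Point) ∈ frontier P.carrier)
    (hsv : ∀ y ∈ Ioo o.2 hh, ∃ r > 0,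
      (∀ w ∈ ball ((o.1, y) : Point) r, o.1 < w.1 → w ∈ S) ∧
      (∀ w ∈ ball ((o.1, y) : Point) r, w.1 < o.1 → w ∉ S))
    (hsv' : ∀ y ∈ Ioo o.2 hh, ∃ r > 0,
      (∀ w ∈ ball ((o.1, y) : Point) r, o.1 < w.1 → w ∈ S') ∧
      (∀ w ∈ ball ((o.1, y) : Point) r, w.1 < o.1 → w ∉ S')) :
    ∃ ρ > 0, ∀ w ∈ ball ((o.1, hh) : Point) ρ, w ∉ interior S \ S' := by
  set Cv : Set Point := {w : Point | w.1 = o.1 ∧ w.2 ∈ Icc o.2 hh} with hCvdef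
  set Ch : Set Point := {w : Point | w.2 = o.2 ∧ w.1 ∈ Icc o.1 ww} with hChdef
  set e : Point := ((o.1, hh) : Point) with hedef
  obtain ⟨r, hr, hforms⟩ := local_struct P e hePv
  set rS := min r (hh - o.2) with hrSdef
  have hrS : 0 < rS := lt_min hr (by linarith)
  have hrSr : rS ≤ r := min_le_left _ _
  have hrSh : rS ≤ hh - o.2 := min_le_right _ _
  set δ₀ := rS / 2 with hδ₀def
  have hδ₀ : 0 < δ₀ := by positivity
  set y₀ := hh - δ₀ with hy₀def
  have hy₀I : y₀ ∈ Ioo o.2 hh := ⟨by simp only [hy₀def]; linarith, by simp only [hy₀def]; linarith⟩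
  obtain ⟨rV, hrV, hVin, hVout⟩ := hsv y₀ hy₀I
  obtain ⟨rV', hrV', hV'in, hV'out⟩ := hsv' y₀ hy₀I
  set τ := min (min rV rV') rS / 2 with hτdef
  have hτ : 0 < τ := by
    apply div_pos _ (by norm_num)
    exact lt_min (lt_min hrV hrV') hrS
  have hτV : τ < rV := by
    have h1 := min_le_left (min rV rV') rS
    have h2 := min_le_left rV rV'
    rw [hτdef]; linarith
  have hτV' : τ < rV' := by
    have h1 := min_le_left (min rV rV') rS
    have h2 := min_le_right rV rV'
    rw [hτdef]; linarith
  have hτS : τ < rS := by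
    have h1 := min_le_right (min rV rV') rS
    rw [hτdef]; linarith
  -- the key step: a suitable preconnected piece leads to a contradiction
  have key : ∀ s : ℝ, (s = 1 ∨ s = -1) → ∀ D : Set Point, IsPreconnected D →
      D ⊆ interior P.carrier → (∀ u ∈ D, u ∉ Cv ∧ u ∉ Ch) →
      (D ∩ (interior S \ S')).Nonempty →
      ((o.1 + s * τ, y₀) : Point) ∈ D → False := by
    intro s hs D hDpre hDP hDC hDE hwstar
    have hDfrS : ∀ u ∈ D, u ∉ frontier S := by
      intro u hu huf
      rcases hbdS huf with h | h | h
      · exact h.2 (hDP hu)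
      · exact (hDC u hu).1 h
      · exact (hDC u hu).2 h
    have hDfrS' : ∀ u ∈ D, u ∉ frontier S' := by
      intro u hu huf
      rcases hbdS' huf with h | h | h
      · exact h.2 (hDP hu)
      · exact (hDC u hu).1 h
      · exact (hDC u hu).2 h
    obtain ⟨w₀, hw₀D, hw₀E⟩ := hDE
    have hDS : D ⊆ interior S := by
      rcases clopen_dichotomy hScl hDpre hDfrS with h | h
      · exact h
      · exfalso
        have : w₀ ∈ D ∩ S := ⟨hw₀D, interior_subset hw₀E.1⟩
        rw [h] at this
        exact this
    have hDS' : D ∩ S' = ∅ := by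
      rcases clopen_dichotomy hS'cl hDpre hDfrS' with h | h
      · exfalso
        exact hw₀E.2 (interior_subset (h hw₀D))
      · exact h
    set wstar : Point := ((o.1 + s * τ, y₀) : Point) with hwstardef
    have hwb : ∀ ρ', τ < ρ' → wstar ∈ ball ((o.1, y₀) : Point) ρ' := by
      intro ρ' hρ'
      rw [mem_ball_pt]
      constructor
      · simp only [hwstardef, add_sub_cancel_left, abs_mul]
        have : |s| = 1 := by rcases hs with rfl | rfl <;> norm_num
        rw [this, one_mul, abs_of_pos hτ]
        exact hρ'
      · simp only [hwstardef, sub_self, abs_zero]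
        linarith
    rcases hs with rfl | rfl
    · -- right side : wstar ∈ S' contradicts D ∩ S' = ∅
      have : wstar ∈ S' := hV'in wstar (hwb rV' hτV') (by
        simp only [hwstardef, one_mul]
        linarith)
      have : wstar ∈ D ∩ S' := ⟨hwstar, this⟩
      rw [hDS'] at this
      exact this
    · -- left side : wstar ∉ S contradicts D ⊆ interior S
      have hout : wstar ∉ S := hVout wstar (hwb rV hτV) (by
        simp only [hwstardef]
        nlinarith)
      exact hout (interior_subset (hDS hwstar))
  -- now use the local structure of P near e
  refine ⟨rS, hrS, ?_⟩
  intro w hwb hwE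
  have hwP : w ∈ interior P.carrier := interior_mono hSP hwE.1
  have hwbmem := hwb
  rw [mem_ball_pt] at hwbmem
  have hwx := abs_lt.mp hwbmem.1
  have hwy := abs_lt.mp hwbmem.2
  simp only [hedef] at hwx hwy
  -- w is not on the cut line inside Cv, nor at height o.2
  have hwCv : w ∉ Cv := by
    intro hcon
    exact (hCvS hcon).2 hwE.1
  have hwCh : w ∉ Ch := by
    intro hcon
    rw [hChdef, mem_setOf_eq] at hcon
    linarith [hcon.1, hwy.1]
  have hwnot1 : w.2 < hh → w.1 ≠ o.1 := by
    intro hwlt hcon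
    exact hwCv ⟨hcon, by constructor <;> [linarith [hwy.1]; linarith]⟩
  -- the interior point u on the open cut below e
  have hu : ((o.1, y₀) : Point) ∈ interior P.carrier := hov ⟨rfl, hy₀I⟩
  have hub : ((o.1, y₀) : Point) ∈ ball e rS := by
    rw [mem_ball_pt]
    constructor
    · simp only [hedef, sub_self, abs_zero]; exact hrS
    · simp only [hedef, hy₀def]
      rw [show hh - δ₀ - hh = -δ₀ by ring, abs_neg, abs_of_pos hδ₀]
      linarith
  rcases hforms with ⟨d, hd, heq⟩ | ⟨d, hd, heq⟩ | ⟨dx, dy, hdx, hdy, heq⟩ |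
    ⟨dx, dy, hdx, hdy, heq⟩
  · -- vertical chord : impossible (u is on the line)
    have heq' := restrict_ball hrSr heq
    have : ((o.1, y₀) : Point) ∈ {w : Point | 0 < d * (w.1 - e.1)} ∩ ball e rS :=
      heq' ▸ ⟨hu, hub⟩
    have h1 := this.1
    rw [mem_setOf_eq] at h1
    simp only [hedef] at h1
    rw [sub_self, mul_zero] at h1
    exact lt_irrefl 0 h1
  · -- horizontal chord : must be the lower side
    have heq' := restrict_ball hrSr heq
    have hu' : ((o.1, y₀) : Point) ∈ {w : Point | 0 < d * (w.2 - e.2)} ∩ ball e rS :=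
      heq' ▸ ⟨hu, hub⟩
    have h1 := hu'.1
    rw [mem_setOf_eq] at h1
    simp only [hedef, hy₀def] at h1
    rw [show hh - δ₀ - hh = -δ₀ by ring] at h1
    have hd1 : d = -1 := by
      rcases hd with rfl | rfl
      · exfalso; rw [one_mul] at h1; linarith
      · rfl
    subst hd1
    have hwform : w ∈ {w : Point | 0 < (-1) * (w.2 - e.2)} ∩ ball e rS :=
      heq' ▸ ⟨hwP, hwb⟩
    have hwlt : w.2 < hh := by
      have := hwform.1
      rw [mem_setOf_eq] at this
      simp only [hedef] at this
      nlinarith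
    have hwne := hwnot1 hwlt
    rcases lt_or_gt_of_ne hwne with hside | hside
    · -- left of the line
      apply key (-1) (Or.inr rfl)
        ({u : Point | 0 < (-1) * (u.1 - o.1)} ∩
          ({u : Point | 0 < (-1) * (u.2 - hh)} ∩ ball e rS))
        (((convex_pos_mul_x (-1) o.1).inter
          ((convex_pos_mul_y (-1) hh).inter (convex_ball e rS))).isPreconnected)
      · intro u hu'
        have : u ∈ {w : Point | 0 < (-1) * (w.2 - e.2)} ∩ ball e rS := ⟨hu'.2.1, hu'.2.2⟩
        have := heq'.symm ▸ this
        exact this.1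
      · intro u hu'
        constructor
        · intro hcon
          rw [hCvdef, mem_setOf_eq] at hcon
          have := hu'.1
          rw [mem_setOf_eq, hcon.1] at this
          nlinarith
        · intro hcon
          rw [hChdef, mem_setOf_eq] at hcon
          have hub2 := (mem_ball_pt.mp hu'.2.2).2
          have := abs_lt.mp hub2
          simp only [hedef] at this
          linarith [hcon.1, this.1]
      · exact ⟨w, ⟨by rw [mem_setOf_eq]; nlinarith, by rw [mem_setOf_eq]; nlinarith, hwb⟩, hwE⟩
      · refine ⟨by rw [mem_setOf_eq]; simp only; nlinarith, by
          rw [mem_setOf_eq]; simp only [hy₀def]; nlinarith, ?_⟩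
        rw [mem_ball_pt]
        constructor
        · simp only [hedef, add_sub_cancel_left, abs_mul]
          norm_num
          rw [abs_of_pos hτ]
          exact hτS
        · simp only [hedef, hy₀def]
          rw [show hh - δ₀ - hh = -δ₀ by ring, abs_neg, abs_of_pos hδ₀]
          linarith
    · -- right of the line
      apply key 1 (Or.inl rfl)
        ({u : Point | 0 < 1 * (u.1 - o.1)} ∩
          ({u : Point | 0 < (-1) * (u.2 - hh)} ∩ ball e rS))
        (((convex_pos_mul_x 1 o.1).inter
          ((convex_pos_mul_y (-1) hh).inter (convex_ball e rS))).isPreconnected)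
      · intro u hu'
        have : u ∈ {w : Point | 0 < (-1) * (w.2 - e.2)} ∩ ball e rS := ⟨hu'.2.1, hu'.2.2⟩
        have := heq'.symm ▸ this
        exact this.1
      · intro u hu'
        constructor
        · intro hcon
          rw [hCvdef, mem_setOf_eq] at hcon
          have := hu'.1
          rw [mem_setOf_eq, hcon.1] at this
          nlinarith
        · intro hcon
          rw [hChdef, mem_setOf_eq] at hcon
          have hub2 := (mem_ball_pt.mp hu'.2.2).2
          have := abs_lt.mp hub2
          simp only [hedef] at this
          linarith [hcon.1, this.1]
      · exact ⟨w, ⟨by rw [mem_setOf_eq]; nlinarith, by rw [mem_setOf_eq]; nlinarith, hwb⟩, hwE⟩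
      · refine ⟨by rw [mem_setOf_eq]; simp only; nlinarith, by
          rw [mem_setOf_eq]; simp only [hy₀def]; nlinarith, ?_⟩
        rw [mem_ball_pt]
        constructor
        · simp only [hedef, add_sub_cancel_left, abs_mul]
          norm_num
          rw [abs_of_pos hτ]
          exact hτS
        · simp only [hedef, hy₀def]
          rw [show hh - δ₀ - hh = -δ₀ by ring, abs_neg, abs_of_pos hδ₀]
          linarith
  · -- open quadrant : impossible (u is on the line)
    have heq' := restrict_ball hrSr heq
    have : ((o.1, y₀) : Point) ∈
        {w : Point | 0 < dx * (w.1 - e.1) ∧ 0 < dy * (w.2 - e.2)} ∩ ball e rS :=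
      heq' ▸ ⟨hu, hub⟩
    have h1 := this.1.1
    simp only [hedef] at h1
    rw [sub_self, mul_zero] at h1
    exact lt_irrefl 0 h1
  · -- 270 degrees : dy must point down
    have heq' := restrict_ball hrSr heq
    have hu' : ((o.1, y₀) : Point) ∈
        {w : Point | 0 < dx * (w.1 - e.1) ∨ 0 < dy * (w.2 - e.2)} ∩ ball e rS :=
      heq' ▸ ⟨hu, hub⟩
    have h1 := hu'.1
    rw [mem_setOf_eq] at h1
    have hdy1 : dy = -1 := by
      rcases h1 with h | h
      · exfalso
        simp only [hedef] at h
        rw [sub_self, mul_zero] at h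
        exact lt_irrefl 0 h
      · rcases hdy with rfl | rfl
        · exfalso
          simp only [hedef, hy₀def] at h
          rw [one_mul] at h
          linarith
        · rfl
    subst hdy1
    have hwform : w ∈
        {w : Point | 0 < dx * (w.1 - e.1) ∨ 0 < (-1) * (w.2 - e.2)} ∩ ball e rS :=
      heq' ▸ ⟨hwP, hwb⟩
    have hwf1 := hwform.1
    rw [mem_setOf_eq] at hwf1
    -- if w is on the cut line, it is in Cv : contradiction
    have hwne : w.1 ≠ o.1 := by
      intro hcon
      have hwlt : w.2 < hh := by
        rcases hwf1 with h | h
        · exfalso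
          simp only [hedef] at h
          rw [hcon, sub_self, mul_zero] at h
          exact lt_irrefl 0 h
        · simp only [hedef] at h
          nlinarith
      exact hwnot1 hwlt hcon
    rcases lt_or_gt_of_ne hwne with hside | hside
    · -- left of the line
      rcases hdx with rfl | rfl
      · -- dx = 1 : w must satisfy the second disjunct
        have hwlt : w.2 < hh := by
          rcases hwf1 with h | h
          · exfalso
            simp only [hedef] at h
            rw [one_mul] at h
            linarith
          · simp only [hedef] at h
            nlinarith
        apply key (-1) (Or.inr rfl)
          ({u : Point | 0 < (-1) * (u.1 - o.1)} ∩
            ({u : Point | 0 < (-1) * (u.2 - hh)} ∩ ball e rS))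
          (((convex_pos_mul_x (-1) o.1).inter
            ((convex_pos_mul_y (-1) hh).inter (convex_ball e rS))).isPreconnected)
        · intro u hu2
          have : u ∈ {w : Point | 0 < 1 * (w.1 - e.1) ∨ 0 < (-1) * (w.2 - e.2)} ∩
              ball e rS := ⟨Or.inr (by simpa [hedef] using hu2.2.1), hu2.2.2⟩
          have := heq'.symm ▸ this
          exact this.1
        · intro u hu2
          constructor
          · intro hcon
            rw [hCvdef, mem_setOf_eq] at hcon
            have := hu2.1
            rw [mem_setOf_eq, hcon.1] at this
            nlinarith
          · intro hcon
            rw [hChdef, mem_setOf_eq] at hcon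
            have hub2 := (mem_ball_pt.mp hu2.2.2).2
            have := abs_lt.mp hub2
            simp only [hedef] at this
            linarith [hcon.1, this.1]
        · exact ⟨w, ⟨by rw [mem_setOf_eq]; nlinarith,
            by rw [mem_setOf_eq]; nlinarith, hwb⟩, hwE⟩
        · refine ⟨by rw [mem_setOf_eq]; simp only; nlinarith, by
            rw [mem_setOf_eq]; simp only [hy₀def]; nlinarith, ?_⟩
          rw [mem_ball_pt]
          constructor
          · simp only [hedef, add_sub_cancel_left, abs_mul]
            norm_num
            rw [abs_of_pos hτ]
            exact hτS
          · simp only [hedef, hy₀def]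
            rw [show hh - δ₀ - hh = -δ₀ by ring, abs_neg, abs_of_pos hδ₀]
            linarith
      · -- dx = -1 : the whole left half-disk is inside P
        apply key (-1) (Or.inr rfl)
          ({u : Point | 0 < (-1) * (u.1 - o.1)} ∩ ball e rS)
          (((convex_pos_mul_x (-1) o.1).inter (convex_ball e rS)).isPreconnected)
        · intro u hu2
          have : u ∈ {w : Point | 0 < (-1) * (w.1 - e.1) ∨ 0 < (-1) * (w.2 - e.2)} ∩
              ball e rS := ⟨Or.inl (by simpa [hedef] using hu2.1), hu2.2⟩
          have := heq'.symm ▸ this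
          exact this.1
        · intro u hu2
          constructor
          · intro hcon
            rw [hCvdef, mem_setOf_eq] at hcon
            have := hu2.1
            rw [mem_setOf_eq, hcon.1] at this
            nlinarith
          · intro hcon
            rw [hChdef, mem_setOf_eq] at hcon
            have hub2 := (mem_ball_pt.mp hu2.2).2
            have := abs_lt.mp hub2
            simp only [hedef] at this
            linarith [hcon.1, this.1]
        · exact ⟨w, ⟨by rw [mem_setOf_eq]; nlinarith, hwb⟩, hwE⟩
        · refine ⟨by rw [mem_setOf_eq]; simp only; nlinarith, ?_⟩
          rw [mem_ball_pt]
          constructor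
          · simp only [hedef, add_sub_cancel_left, abs_mul]
            norm_num
            rw [abs_of_pos hτ]
            exact hτS
          · simp only [hedef, hy₀def]
            rw [show hh - δ₀ - hh = -δ₀ by ring, abs_neg, abs_of_pos hδ₀]
            linarith
    · -- right of the line
      rcases hdx with rfl | rfl
      · -- dx = 1 : the whole right half-disk is inside P
        apply key 1 (Or.inl rfl)
          ({u : Point | 0 < 1 * (u.1 - o.1)} ∩ ball e rS)
          (((convex_pos_mul_x 1 o.1).inter (convex_ball e rS)).isPreconnected)
        · intro u hu2
          have : u ∈ {w : Point | 0 < 1 * (w.1 - e.1) ∨ 0 < (-1) * (w.2 - e.2)} ∩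
              ball e rS := ⟨Or.inl (by simpa [hedef] using hu2.1), hu2.2⟩
          have := heq'.symm ▸ this
          exact this.1
        · intro u hu2
          constructor
          · intro hcon
            rw [hCvdef, mem_setOf_eq] at hcon
            have := hu2.1
            rw [mem_setOf_eq, hcon.1] at this
            nlinarith
          · intro hcon
            rw [hChdef, mem_setOf_eq] at hcon
            have hub2 := (mem_ball_pt.mp hu2.2).2
            have := abs_lt.mp hub2
            simp only [hedef] at this
            linarith [hcon.1, this.1]
        · exact ⟨w, ⟨by rw [mem_setOf_eq]; nlinarith, hwb⟩, hwE⟩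
        · refine ⟨by rw [mem_setOf_eq]; simp only; nlinarith, ?_⟩
          rw [mem_ball_pt]
          constructor
          · simp only [hedef, add_sub_cancel_left, abs_mul]
            norm_num
            rw [abs_of_pos hτ]
            exact hτS
          · simp only [hedef, hy₀def]
            rw [show hh - δ₀ - hh = -δ₀ by ring, abs_neg, abs_of_pos hδ₀]
            linarith
      · -- dx = -1 : w must satisfy the second disjunct
        have hwlt : w.2 < hh := by
          rcases hwf1 with h | h
          · exfalso
            simp only [hedef] at h
            nlinarith
          · simp only [hedef] at h
            nlinarith
        apply key 1 (Or.inl rfl)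
          ({u : Point | 0 < 1 * (u.1 - o.1)} ∩
            ({u : Point | 0 < (-1) * (u.2 - hh)} ∩ ball e rS))
          (((convex_pos_mul_x 1 o.1).inter
            ((convex_pos_mul_y (-1) hh).inter (convex_ball e rS))).isPreconnected)
        · intro u hu2
          have : u ∈ {w : Point | 0 < (-1) * (w.1 - e.1) ∨ 0 < (-1) * (w.2 - e.2)} ∩
              ball e rS := ⟨Or.inr (by simpa [hedef] using hu2.2.1), hu2.2.2⟩
          have := heq'.symm ▸ this
          exact this.1
        · intro u hu2
          constructor
          · intro hcon
            rw [hCvdef, mem_setOf_eq] at hcon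
            have := hu2.1
            rw [mem_setOf_eq, hcon.1] at this
            nlinarith
          · intro hcon
            rw [hChdef, mem_setOf_eq] at hcon
            have hub2 := (mem_ball_pt.mp hu2.2.2).2
            have := abs_lt.mp hub2
            simp only [hedef] at this
            linarith [hcon.1, this.1]
        · exact ⟨w, ⟨by rw [mem_setOf_eq]; nlinarith,
            by rw [mem_setOf_eq]; nlinarith, hwb⟩, hwE⟩
        · refine ⟨by rw [mem_setOf_eq]; simp only; nlinarith, by
            rw [mem_setOf_eq]; simp only [hy₀def]; nlinarith, ?_⟩
          rw [mem_ball_pt]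
          constructor
          · simp only [hedef, add_sub_cancel_left, abs_mul]
            norm_num
            rw [abs_of_pos hτ]
            exact hτS
          · simp only [hedef, hy₀def]
            rw [show hh - δ₀ - hh = -δ₀ by ring, abs_neg, abs_of_pos hδ₀]
            linarith

end CutEnd


section CutEndH
open Metric

set_option maxHeartbeats 2000000 in
/-- Near the right end of the horizontal cut, the difference of the two
regions is empty. -/
private lemma hcut_end_clear (P : RectPoly) {S S' : Set Point} {o : Point} {hh ww : ℝ}
    (hScl : IsClosed S) (hS'cl : IsClosed S') (hSP : S ⊆ P.carrier)
    (hhh : o.2 < hh) (hww : o.1 < ww)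
    (hbdS : frontier S ⊆ frontier P.carrier ∪
      ({w : Point | w.1 = o.1 ∧ w.2 ∈ Icc o.2 hh} ∪
       {w : Point | w.2 = o.2 ∧ w.1 ∈ Icc o.1 ww}))
    (hbdS' : frontier S' ⊆ frontier P.carrier ∪
      ({w : Point | w.1 = o.1 ∧ w.2 ∈ Icc o.2 hh} ∪
       {w : Point | w.2 = o.2 ∧ w.1 ∈ Icc o.1 ww}))
    (hChS : {w : Point | w.2 = o.2 ∧ w.1 ∈ Icc o.1 ww} ⊆ frontier S)
    (hoh : {w : Point | w.2 = o.2 ∧ w.1 ∈ Ioo o.1 ww} ⊆ interior P.carrier)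
    (hePh : ((ww, o.2) : Point) ∈ frontier P.carrier)
    (hsh : ∀ x ∈ Ioo o.1 ww, ∃ r > 0,
      (∀ w ∈ ball ((x, o.2) : Point) r, o.2 < w.2 → w ∈ S) ∧
      (∀ w ∈ ball ((x, o.2) : Point) r, w.2 < o.2 → w ∉ S))
    (hsh' : ∀ x ∈ Ioo o.1 ww, ∃ r > 0,
      (∀ w ∈ ball ((x, o.2) : Point) r, o.2 < w.2 → w ∈ S') ∧
      (∀ w ∈ ball ((x, o.2) : Point) r, w.2 < o.2 → w ∉ S')) :
    ∃ ρ > 0, ∀ w ∈ ball ((ww, o.2) : Point) ρ, w ∉ interior S \ S' := by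
  set Cv : Set Point := {w : Point | w.1 = o.1 ∧ w.2 ∈ Icc o.2 hh} with hCvdef
  set Ch : Set Point := {w : Point | w.2 = o.2 ∧ w.1 ∈ Icc o.1 ww} with hChdef
  set e : Point := ((ww, o.2) : Point) with hedef
  obtain ⟨r, hr, hforms⟩ := local_struct P e hePh
  set rS := min r (ww - o.1) with hrSdef
  have hrS : 0 < rS := lt_min hr (by linarith)
  have hrSr : rS ≤ r := min_le_left _ _
  have hrSh : rS ≤ ww - o.1 := min_le_right _ _
  set δ₀ := rS / 2 with hδ₀def
  have hδ₀ : 0 < δ₀ := by positivity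
  set x₀ := ww - δ₀ with hx₀def
  have hx₀I : x₀ ∈ Ioo o.1 ww := ⟨by simp only [hx₀def]; linarith, by simp only [hx₀def]; linarith⟩
  obtain ⟨rV, hrV, hVin, hVout⟩ := hsh x₀ hx₀I
  obtain ⟨rV', hrV', hV'in, hV'out⟩ := hsh' x₀ hx₀I
  set τ := min (min rV rV') rS / 2 with hτdef
  have hτ : 0 < τ := by
    apply div_pos _ (by norm_num)
    exact lt_min (lt_min hrV hrV') hrS
  have hτV : τ < rV := by
    have h1 := min_le_left (min rV rV') rS
    have h2 := min_le_left rV rV'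
    rw [hτdef]; linarith
  have hτV' : τ < rV' := by
    have h1 := min_le_left (min rV rV') rS
    have h2 := min_le_right rV rV'
    rw [hτdef]; linarith
  have hτS : τ < rS := by
    have h1 := min_le_right (min rV rV') rS
    rw [hτdef]; linarith
  have key : ∀ s : ℝ, (s = 1 ∨ s = -1) → ∀ D : Set Point, IsPreconnected D →
      D ⊆ interior P.carrier → (∀ u ∈ D, u ∉ Cv ∧ u ∉ Ch) →
      (D ∩ (interior S \ S')).Nonempty →
      ((x₀, o.2 + s * τ) : Point) ∈ D → False := by
    intro s hs D hDpre hDP hDC hDE hwstar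
    have hDfrS : ∀ u ∈ D, u ∉ frontier S := by
      intro u hu huf
      rcases hbdS huf with h | h | h
      · exact h.2 (hDP hu)
      · exact (hDC u hu).1 h
      · exact (hDC u hu).2 h
    have hDfrS' : ∀ u ∈ D, u ∉ frontier S' := by
      intro u hu huf
      rcases hbdS' huf with h | h | h
      · exact h.2 (hDP hu)
      · exact (hDC u hu).1 h
      · exact (hDC u hu).2 h
    obtain ⟨w₀, hw₀D, hw₀E⟩ := hDE
    have hDS : D ⊆ interior S := by
      rcases clopen_dichotomy hScl hDpre hDfrS with h | h
      · exact h
      · exfalso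
        have : w₀ ∈ D ∩ S := ⟨hw₀D, interior_subset hw₀E.1⟩
        rw [h] at this
        exact this
    have hDS' : D ∩ S' = ∅ := by
      rcases clopen_dichotomy hS'cl hDpre hDfrS' with h | h
      · exfalso
        exact hw₀E.2 (interior_subset (h hw₀D))
      · exact h
    set wstar : Point := ((x₀, o.2 + s * τ) : Point) with hwstardef
    have hwb : ∀ ρ', τ < ρ' → wstar ∈ ball ((x₀, o.2) : Point) ρ' := by
      intro ρ' hρ'
      rw [mem_ball_pt]
      constructor
      · simp only [hwstardef, sub_self, abs_zero]
        linarith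
      · simp only [hwstardef, add_sub_cancel_left, abs_mul]
        have : |s| = 1 := by rcases hs with rfl | rfl <;> norm_num
        rw [this, one_mul, abs_of_pos hτ]
        exact hρ'
    rcases hs with rfl | rfl
    · have : wstar ∈ S' := hV'in wstar (hwb rV' hτV') (by
        simp only [hwstardef, one_mul]
        linarith)
      have : wstar ∈ D ∩ S' := ⟨hwstar, this⟩
      rw [hDS'] at this
      exact this
    · have hout : wstar ∉ S := hVout wstar (hwb rV hτV) (by
        simp only [hwstardef]
        nlinarith)
      exact hout (interior_subset (hDS hwstar))
  refine ⟨rS, hrS, ?_⟩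
  intro w hwb hwE
  have hwP : w ∈ interior P.carrier := interior_mono hSP hwE.1
  have hwbmem := hwb
  rw [mem_ball_pt] at hwbmem
  have hwx := abs_lt.mp hwbmem.1
  have hwy := abs_lt.mp hwbmem.2
  simp only [hedef] at hwx hwy
  have hwCh : w ∉ Ch := by
    intro hcon
    exact (hChS hcon).2 hwE.1
  have hwCv : w ∉ Cv := by
    intro hcon
    rw [hCvdef, mem_setOf_eq] at hcon
    linarith [hcon.1, hwx.1]
  have hwnot1 : w.1 < ww → w.2 ≠ o.2 := by
    intro hwlt hcon
    exact hwCh ⟨hcon, by constructor <;> [linarith [hwx.1]; linarith]⟩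
  have hu : ((x₀, o.2) : Point) ∈ interior P.carrier := hoh ⟨rfl, hx₀I⟩
  have hub : ((x₀, o.2) : Point) ∈ ball e rS := by
    rw [mem_ball_pt]
    constructor
    · simp only [hedef, hx₀def]
      rw [show ww - δ₀ - ww = -δ₀ by ring, abs_neg, abs_of_pos hδ₀]
      linarith
    · simp only [hedef, sub_self, abs_zero]; exact hrS
  rcases hforms with ⟨d, hd, heq⟩ | ⟨d, hd, heq⟩ | ⟨dx, dy, hdx, hdy, heq⟩ |
    ⟨dx, dy, hdx, hdy, heq⟩
  · -- vertical chord : must be the left side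
    have heq' := restrict_ball hrSr heq
    have hu' : ((x₀, o.2) : Point) ∈ {w : Point | 0 < d * (w.1 - e.1)} ∩ ball e rS :=
      heq' ▸ ⟨hu, hub⟩
    have h1 := hu'.1
    rw [mem_setOf_eq] at h1
    simp only [hedef, hx₀def] at h1
    rw [show ww - δ₀ - ww = -δ₀ by ring] at h1
    have hd1 : d = -1 := by
      rcases hd with rfl | rfl
      · exfalso; rw [one_mul] at h1; linarith
      · rfl
    subst hd1
    have hwform : w ∈ {w : Point | 0 < (-1) * (w.1 - e.1)} ∩ ball e rS :=
      heq' ▸ ⟨hwP, hwb⟩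
    have hwlt : w.1 < ww := by
      have := hwform.1
      rw [mem_setOf_eq] at this
      simp only [hedef] at this
      nlinarith
    have hwne := hwnot1 hwlt
    rcases lt_or_gt_of_ne hwne with hside | hside
    · apply key (-1) (Or.inr rfl)
        ({u : Point | 0 < (-1) * (u.2 - o.2)} ∩
          ({u : Point | 0 < (-1) * (u.1 - ww)} ∩ ball e rS))
        (((convex_pos_mul_y (-1) o.2).inter
          ((convex_pos_mul_x (-1) ww).inter (convex_ball e rS))).isPreconnected)
      · intro u hu'
        have : u ∈ {w : Point | 0 < (-1) * (w.1 - e.1)} ∩ ball e rS := ⟨hu'.2.1, hu'.2.2⟩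
        have := heq'.symm ▸ this
        exact this.1
      · intro u hu'
        constructor
        · intro hcon
          rw [hCvdef, mem_setOf_eq] at hcon
          have hub2 := (mem_ball_pt.mp hu'.2.2).1
          have := abs_lt.mp hub2
          simp only [hedef] at this
          linarith [hcon.1, this.1]
        · intro hcon
          rw [hChdef, mem_setOf_eq] at hcon
          have := hu'.1
          rw [mem_setOf_eq, hcon.1] at this
          nlinarith
      · exact ⟨w, ⟨by rw [mem_setOf_eq]; nlinarith, by rw [mem_setOf_eq]; nlinarith, hwb⟩, hwE⟩
      · refine ⟨by rw [mem_setOf_eq]; simp only; nlinarith, by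
          rw [mem_setOf_eq]; simp only [hx₀def]; nlinarith, ?_⟩
        rw [mem_ball_pt]
        constructor
        · simp only [hedef, hx₀def]
          rw [show ww - δ₀ - ww = -δ₀ by ring, abs_neg, abs_of_pos hδ₀]
          linarith
        · simp only [hedef, add_sub_cancel_left, abs_mul]
          norm_num
          rw [abs_of_pos hτ]
          exact hτS
    · apply key 1 (Or.inl rfl)
        ({u : Point | 0 < 1 * (u.2 - o.2)} ∩
          ({u : Point | 0 < (-1) * (u.1 - ww)} ∩ ball e rS))
        (((convex_pos_mul_y 1 o.2).inter
          ((convex_pos_mul_x (-1) ww).inter (convex_ball e rS))).isPreconnected)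
      · intro u hu'
        have : u ∈ {w : Point | 0 < (-1) * (w.1 - e.1)} ∩ ball e rS := ⟨hu'.2.1, hu'.2.2⟩
        have := heq'.symm ▸ this
        exact this.1
      · intro u hu'
        constructor
        · intro hcon
          rw [hCvdef, mem_setOf_eq] at hcon
          have hub2 := (mem_ball_pt.mp hu'.2.2).1
          have := abs_lt.mp hub2
          simp only [hedef] at this
          linarith [hcon.1, this.1]
        · intro hcon
          rw [hChdef, mem_setOf_eq] at hcon
          have := hu'.1
          rw [mem_setOf_eq, hcon.1] at this
          nlinarith
      · exact ⟨w, ⟨by rw [mem_setOf_eq]; nlinarith, by rw [mem_setOf_eq]; nlinarith, hwb⟩, hwE⟩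
      · refine ⟨by rw [mem_setOf_eq]; simp only; nlinarith, by
          rw [mem_setOf_eq]; simp only [hx₀def]; nlinarith, ?_⟩
        rw [mem_ball_pt]
        constructor
        · simp only [hedef, hx₀def]
          rw [show ww - δ₀ - ww = -δ₀ by ring, abs_neg, abs_of_pos hδ₀]
          linarith
        · simp only [hedef, add_sub_cancel_left, abs_mul]
          norm_num
          rw [abs_of_pos hτ]
          exact hτS
  · -- horizontal chord : impossible (u is on the line)
    have heq' := restrict_ball hrSr heq
    have : ((x₀, o.2) : Point) ∈ {w : Point | 0 < d * (w.2 - e.2)} ∩ ball e rS :=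
      heq' ▸ ⟨hu, hub⟩
    have h1 := this.1
    rw [mem_setOf_eq] at h1
    simp only [hedef] at h1
    rw [sub_self, mul_zero] at h1
    exact lt_irrefl 0 h1
  · -- open quadrant : impossible (u is on the line)
    have heq' := restrict_ball hrSr heq
    have : ((x₀, o.2) : Point) ∈
        {w : Point | 0 < dx * (w.1 - e.1) ∧ 0 < dy * (w.2 - e.2)} ∩ ball e rS :=
      heq' ▸ ⟨hu, hub⟩
    have h1 := this.1.2
    simp only [hedef] at h1
    rw [sub_self, mul_zero] at h1
    exact lt_irrefl 0 h1
  · -- 270 degrees : dx must point left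
    have heq' := restrict_ball hrSr heq
    have hu' : ((x₀, o.2) : Point) ∈
        {w : Point | 0 < dx * (w.1 - e.1) ∨ 0 < dy * (w.2 - e.2)} ∩ ball e rS :=
      heq' ▸ ⟨hu, hub⟩
    have h1 := hu'.1
    rw [mem_setOf_eq] at h1
    have hdx1 : dx = -1 := by
      rcases h1 with h | h
      · rcases hdx with rfl | rfl
        · exfalso
          simp only [hedef, hx₀def] at h
          rw [one_mul] at h
          linarith
        · rfl
      · exfalso
        simp only [hedef] at h
        rw [sub_self, mul_zero] at h
        exact lt_irrefl 0 h
    subst hdx1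
    have hwform : w ∈
        {w : Point | 0 < (-1) * (w.1 - e.1) ∨ 0 < dy * (w.2 - e.2)} ∩ ball e rS :=
      heq' ▸ ⟨hwP, hwb⟩
    have hwf1 := hwform.1
    rw [mem_setOf_eq] at hwf1
    have hwne : w.2 ≠ o.2 := by
      intro hcon
      have hwlt : w.1 < ww := by
        rcases hwf1 with h | h
        · simp only [hedef] at h
          nlinarith
        · exfalso
          simp only [hedef] at h
          rw [hcon, sub_self, mul_zero] at h
          exact lt_irrefl 0 h
      exact hwnot1 hwlt hcon
    rcases lt_or_gt_of_ne hwne with hside | hside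
    · -- below the line
      rcases hdy with rfl | rfl
      · have hwlt : w.1 < ww := by
          rcases hwf1 with h | h
          · simp only [hedef] at h
            nlinarith
          · exfalso
            simp only [hedef] at h
            rw [one_mul] at h
            linarith
        apply key (-1) (Or.inr rfl)
          ({u : Point | 0 < (-1) * (u.2 - o.2)} ∩
            ({u : Point | 0 < (-1) * (u.1 - ww)} ∩ ball e rS))
          (((convex_pos_mul_y (-1) o.2).inter
            ((convex_pos_mul_x (-1) ww).inter (convex_ball e rS))).isPreconnected)
        · intro u hu2
          have : u ∈ {w : Point | 0 < (-1) * (w.1 - e.1) ∨ 0 < 1 * (w.2 - e.2)} ∩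
              ball e rS := ⟨Or.inl (by simpa [hedef] using hu2.2.1), hu2.2.2⟩
          have := heq'.symm ▸ this
          exact this.1
        · intro u hu2
          constructor
          · intro hcon
            rw [hCvdef, mem_setOf_eq] at hcon
            have hub2 := (mem_ball_pt.mp hu2.2.2).1
            have := abs_lt.mp hub2
            simp only [hedef] at this
            linarith [hcon.1, this.1]
          · intro hcon
            rw [hChdef, mem_setOf_eq] at hcon
            have := hu2.1
            rw [mem_setOf_eq, hcon.1] at this
            nlinarith
        · exact ⟨w, ⟨by rw [mem_setOf_eq]; nlinarith,
            by rw [mem_setOf_eq]; nlinarith, hwb⟩, hwE⟩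
        · refine ⟨by rw [mem_setOf_eq]; simp only; nlinarith, by
            rw [mem_setOf_eq]; simp only [hx₀def]; nlinarith, ?_⟩
          rw [mem_ball_pt]
          constructor
          · simp only [hedef, hx₀def]
            rw [show ww - δ₀ - ww = -δ₀ by ring, abs_neg, abs_of_pos hδ₀]
            linarith
          · simp only [hedef, add_sub_cancel_left, abs_mul]
            norm_num
            rw [abs_of_pos hτ]
            exact hτS
      · apply key (-1) (Or.inr rfl)
          ({u : Point | 0 < (-1) * (u.2 - o.2)} ∩ ball e rS)
          (((convex_pos_mul_y (-1) o.2).inter (convex_ball e rS)).isPreconnected)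
        · intro u hu2
          have : u ∈ {w : Point | 0 < (-1) * (w.1 - e.1) ∨ 0 < (-1) * (w.2 - e.2)} ∩
              ball e rS := ⟨Or.inr (by simpa [hedef] using hu2.1), hu2.2⟩
          have := heq'.symm ▸ this
          exact this.1
        · intro u hu2
          constructor
          · intro hcon
            rw [hCvdef, mem_setOf_eq] at hcon
            have hub2 := (mem_ball_pt.mp hu2.2).1
            have := abs_lt.mp hub2
            simp only [hedef] at this
            linarith [hcon.1, this.1]
          · intro hcon
            rw [hChdef, mem_setOf_eq] at hcon
            have := hu2.1
            rw [mem_setOf_eq, hcon.1] at this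
            nlinarith
        · exact ⟨w, ⟨by rw [mem_setOf_eq]; nlinarith, hwb⟩, hwE⟩
        · refine ⟨by rw [mem_setOf_eq]; simp only; nlinarith, ?_⟩
          rw [mem_ball_pt]
          constructor
          · simp only [hedef, hx₀def]
            rw [show ww - δ₀ - ww = -δ₀ by ring, abs_neg, abs_of_pos hδ₀]
            linarith
          · simp only [hedef, add_sub_cancel_left, abs_mul]
            norm_num
            rw [abs_of_pos hτ]
            exact hτS
    · -- above the line
      rcases hdy with rfl | rfl
      · apply key 1 (Or.inl rfl)
          ({u : Point | 0 < 1 * (u.2 - o.2)} ∩ ball e rS)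
          (((convex_pos_mul_y 1 o.2).inter (convex_ball e rS)).isPreconnected)
        · intro u hu2
          have : u ∈ {w : Point | 0 < (-1) * (w.1 - e.1) ∨ 0 < 1 * (w.2 - e.2)} ∩
              ball e rS := ⟨Or.inr (by simpa [hedef] using hu2.1), hu2.2⟩
          have := heq'.symm ▸ this
          exact this.1
        · intro u hu2
          constructor
          · intro hcon
            rw [hCvdef, mem_setOf_eq] at hcon
            have hub2 := (mem_ball_pt.mp hu2.2).1
            have := abs_lt.mp hub2
            simp only [hedef] at this
            linarith [hcon.1, this.1]
          · intro hcon
            rw [hChdef, mem_setOf_eq] at hcon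
            have := hu2.1
            rw [mem_setOf_eq, hcon.1] at this
            nlinarith
        · exact ⟨w, ⟨by rw [mem_setOf_eq]; nlinarith, hwb⟩, hwE⟩
        · refine ⟨by rw [mem_setOf_eq]; simp only; nlinarith, ?_⟩
          rw [mem_ball_pt]
          constructor
          · simp only [hedef, hx₀def]
            rw [show ww - δ₀ - ww = -δ₀ by ring, abs_neg, abs_of_pos hδ₀]
            linarith
          · simp only [hedef, add_sub_cancel_left, abs_mul]
            norm_num
            rw [abs_of_pos hτ]
            exact hτS
      · have hwlt : w.1 < ww := by
          rcases hwf1 with h | h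
          · simp only [hedef] at h
            nlinarith
          · exfalso
            simp only [hedef] at h
            nlinarith
        apply key 1 (Or.inl rfl)
          ({u : Point | 0 < 1 * (u.2 - o.2)} ∩
            ({u : Point | 0 < (-1) * (u.1 - ww)} ∩ ball e rS))
          (((convex_pos_mul_y 1 o.2).inter
            ((convex_pos_mul_x (-1) ww).inter (convex_ball e rS))).isPreconnected)
        · intro u hu2
          have : u ∈ {w : Point | 0 < (-1) * (w.1 - e.1) ∨ 0 < (-1) * (w.2 - e.2)} ∩
              ball e rS := ⟨Or.inl (by simpa [hedef] using hu2.2.1), hu2.2.2⟩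
          have := heq'.symm ▸ this
          exact this.1
        · intro u hu2
          constructor
          · intro hcon
            rw [hCvdef, mem_setOf_eq] at hcon
            have hub2 := (mem_ball_pt.mp hu2.2.2).1
            have := abs_lt.mp hub2
            simp only [hedef] at this
            linarith [hcon.1, this.1]
          · intro hcon
            rw [hChdef, mem_setOf_eq] at hcon
            have := hu2.1
            rw [mem_setOf_eq, hcon.1] at this
            nlinarith
        · exact ⟨w, ⟨by rw [mem_setOf_eq]; nlinarith,
            by rw [mem_setOf_eq]; nlinarith, hwb⟩, hwE⟩
        · refine ⟨by rw [mem_setOf_eq]; simp only; nlinarith, by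
            rw [mem_setOf_eq]; simp only [hx₀def]; nlinarith, ?_⟩
          rw [mem_ball_pt]
          constructor
          · simp only [hedef, hx₀def]
            rw [show ww - δ₀ - ww = -δ₀ by ring, abs_neg, abs_of_pos hδ₀]
            linarith
          · simp only [hedef, add_sub_cancel_left, abs_mul]
            norm_num
            rw [abs_of_pos hτ]
            exact hτS

end CutEndH


section SameOrigin
open Metric

private lemma notin_closure {E : Set Point} {z : Point} {ρ : ℝ} (hρ : 0 < ρ)
    (h : ∀ w ∈ ball z ρ, w ∉ E) : z ∉ closure E := by
  intro hcl
  rw [_root_.mem_closure_iff] at hcl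
  obtain ⟨w, hw1, hw2⟩ := hcl (ball z ρ) isOpen_ball (mem_ball_self hρ)
  exact h w hw1 hw2

private lemma isClosed_vset (c a b : ℝ) : IsClosed {w : Point | w.1 = c ∧ w.2 ∈ Icc a b} := by
  have : {w : Point | w.1 = c ∧ w.2 ∈ Icc a b} =
      (fun w : Point => w.1) ⁻¹' {c} ∩ (fun w : Point => w.2) ⁻¹' Icc a b := rfl
  rw [this]
  exact (isClosed_singleton.preimage continuous_fst).inter
    (isClosed_Icc.preimage continuous_snd)

private lemma isClosed_hset (c a b : ℝ) : IsClosed {w : Point | w.2 = c ∧ w.1 ∈ Icc a b} := by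
  have : {w : Point | w.2 = c ∧ w.1 ∈ Icc a b} =
      (fun w : Point => w.2) ⁻¹' {c} ∩ (fun w : Point => w.1) ⁻¹' Icc a b := rfl
  rw [this]
  exact (isClosed_singleton.preimage continuous_snd).inter
    (isClosed_Icc.preimage continuous_fst)

set_option maxHeartbeats 2000000 in
/-- Two up-right type-2C subpolygons with the same origin have the same
region (one inclusion). -/
lemma same_origin_sub (P : RectPoly) (Q Q' : KCutSub P 2)
    (h2c : Type2C Q) (h2c' : Type2C Q')
    (hur : UpRight Q) (hur' : UpRight Q')
    (ho : Q.origin = Q'.origin) : Q.region ⊆ Q'.region := by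
  obtain ⟨hh, ww, hhh, hww, hvP, hwP, hcv, hch, hov, hoh, hbd⟩ := cut_data Q hur
  obtain ⟨hh', ww', hhh', hww', hvP', hwP', hcv', hch', hov', hoh', hbd'⟩ := cut_data Q' hur'
  obtain ⟨ε, hε, hTR⟩ := origin_TR Q h2c hhh hww hcv hch
  obtain ⟨ε', hε', hTR'⟩ := origin_TR Q' h2c' hhh' hww' hcv' hch'
  rw [← ho] at hhh' hww' hvP' hwP' hcv' hch' hov' hoh' hbd' hTR'
  set o := Q.origin with hodef
  -- the cut ends agree
  have hhe : hh = hh' := by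
    rcases lt_trichotomy hh hh' with h | h | h
    · exfalso
      exact hvP.2 (hov' ⟨rfl, hhh, h⟩)
    · exact h
    · exfalso
      exact hvP'.2 (hov ⟨rfl, hhh', h⟩)
  have hwe : ww = ww' := by
    rcases lt_trichotomy ww ww' with h | h | h
    · exfalso
      exact hwP.2 (hoh' ⟨rfl, hww, h⟩)
    · exact h
    · exfalso
      exact hwP'.2 (hoh ⟨rfl, hww', h⟩)
  subst hhe hwe
  have hScl : IsClosed Q.region := region_isClosed Q
  have hS'cl : IsClosed Q'.region := region_isClosed Q'
  have sv := side_const_vert P hScl hhh hww hcv hbd hov hε hTR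
  have sh := side_const_horiz P hScl hhh hww hch hbd hoh hε hTR
  have sv' := side_const_vert P hS'cl hhh hww hcv' hbd' hov' hε' hTR'
  have sh' := side_const_horiz P hS'cl hhh hww hch' hbd' hoh' hε' hTR'
  set E : Set Point := interior Q.region \ Q'.region with hEdef
  suffices hE : E = ∅ by
    have hsub : interior Q.region ⊆ Q'.region := by
      rw [← Set.diff_eq_empty]
      exact hE
    intro x hx
    have h1 : x ∈ closure (interior Q.region) := by
      rw [← Q.rectilinear.2.1]
      exact hx
    have h2 := closure_mono hsub h1
    rwa [hS'cl.closure_eq] at h2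
  by_contra hEne
  have hEopen : IsOpen E := isOpen_interior.sdiff hS'cl
  have hEP : E ⊆ interior P.carrier := fun w hw => interior_mono Q.sub hw.1
  -- boundary of E
  have hfrIS : frontier (interior Q.region) = frontier Q.region := by
    rw [frontier, interior_interior, ← Q.rectilinear.2.1, frontier, hScl.closure_eq]
  have hfrE_sub : frontier E ⊆ frontier P.carrier ∪
      ({w : Point | w.1 = o.1 ∧ w.2 ∈ Icc o.2 hh} ∪
       {w : Point | w.2 = o.2 ∧ w.1 ∈ Icc o.1 ww}) := by
    intro z hz
    have h1 : z ∈ frontier (interior Q.region) ∪ frontier (Q'.region)ᶜ := by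
      have h2 := frontier_inter_subset (interior Q.region) (Q'.region)ᶜ
      have h3 : E = interior Q.region ∩ (Q'.region)ᶜ := by rw [hEdef, Set.diff_eq]
      rw [h3] at hz
      rcases h2 hz with h | h
      · exact Or.inl h.1
      · exact Or.inr h.2
    rw [hfrIS, frontier_compl] at h1
    rcases h1 with h | h
    · exact hbd h
    · exact hbd' h
  -- all cut points are away from the closure of E
  have hclo : o ∉ closure E := by
    apply notin_closure (lt_min hε hε')
    intro w hw hwE
    have hwS : w ∈ Q.region := interior_subset hwE.1
    have h1 := (hTR w (ball_subset_ball (min_le_left _ _) hw)).mp hwS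
    have h2 := (hTR' w (ball_subset_ball (min_le_right _ _) hw)).mpr h1
    exact hwE.2 h2
  have hclCv : ∀ y ∈ Ioo o.2 hh, ((o.1, y) : Point) ∉ closure E := by
    intro y hy
    obtain ⟨r1, hr1, hin1, hout1⟩ := sv y hy
    obtain ⟨r1', hr1', hin1', hout1'⟩ := sv' y hy
    set ρ := min (min r1 r1') (min (y - o.2) (hh - y)) with hρdef
    have hρ : 0 < ρ :=
      lt_min (lt_min hr1 hr1') (lt_min (by linarith [hy.1]) (by linarith [hy.2]))
    apply notin_closure hρ
    intro w hw hwE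
    have hw1 : w ∈ ball ((o.1, y) : Point) r1 :=
      ball_subset_ball (le_trans (min_le_left _ _) (min_le_left _ _)) hw
    have hw1' : w ∈ ball ((o.1, y) : Point) r1' :=
      ball_subset_ball (le_trans (min_le_left _ _) (min_le_right _ _)) hw
    rcases lt_trichotomy w.1 o.1 with h | h | h
    · exact hout1 w hw1 h (interior_subset hwE.1)
    · have hwmem := mem_ball_pt.mp hw
      have h2 := abs_lt.mp hwmem.2
      simp only at h2
      have hwCv : w ∈ {w : Point | w.1 = o.1 ∧ w.2 ∈ Icc o.2 hh} := by
        refine ⟨h, ?_, ?_⟩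
        · have := le_trans (min_le_right (min r1 r1') (min (y - o.2) (hh - y)))
            (min_le_left _ _)
          linarith [h2.1]
        · have := le_trans (min_le_right (min r1 r1') (min (y - o.2) (hh - y)))
            (min_le_right _ _)
          linarith [h2.2]
      exact (hcv hwCv).2 hwE.1
    · exact hwE.2 (hin1' w hw1' h)
  have hclCh : ∀ x ∈ Ioo o.1 ww, ((x, o.2) : Point) ∉ closure E := by
    intro x hx
    obtain ⟨r1, hr1, hin1, hout1⟩ := sh x hx
    obtain ⟨r1', hr1', hin1', hout1'⟩ := sh' x hx
    set ρ := min (min r1 r1') (min (x - o.1) (ww - x)) with hρdef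
    have hρ : 0 < ρ :=
      lt_min (lt_min hr1 hr1') (lt_min (by linarith [hx.1]) (by linarith [hx.2]))
    apply notin_closure hρ
    intro w hw hwE
    have hw1 : w ∈ ball ((x, o.2) : Point) r1 :=
      ball_subset_ball (le_trans (min_le_left _ _) (min_le_left _ _)) hw
    have hw1' : w ∈ ball ((x, o.2) : Point) r1' :=
      ball_subset_ball (le_trans (min_le_left _ _) (min_le_right _ _)) hw
    rcases lt_trichotomy w.2 o.2 with h | h | h
    · exact hout1 w hw1 h (interior_subset hwE.1)
    · have hwmem := mem_ball_pt.mp hw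
      have h2 := abs_lt.mp hwmem.1
      simp only at h2
      have hwCh : w ∈ {w : Point | w.2 = o.2 ∧ w.1 ∈ Icc o.1 ww} := by
        refine ⟨h, ?_, ?_⟩
        · have := le_trans (min_le_right (min r1 r1') (min (x - o.1) (ww - x)))
            (min_le_left _ _)
          linarith [h2.1]
        · have := le_trans (min_le_right (min r1 r1') (min (x - o.1) (ww - x)))
            (min_le_right _ _)
          linarith [h2.2]
      exact (hch hwCh).2 hwE.1
    · exact hwE.2 (hin1' w hw1' h)
  have hclev : ((o.1, hh) : Point) ∉ closure E := by
    obtain ⟨ρ, hρ, hclear⟩ :=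
      vcut_end_clear P hScl hS'cl Q.sub hhh hww hbd hbd' hcv hov hvP sv sv'
    exact notin_closure hρ hclear
  have hcleh : ((ww, o.2) : Point) ∉ closure E := by
    obtain ⟨ρ, hρ, hclear⟩ :=
      hcut_end_clear P hScl hS'cl Q.sub hhh hww hbd hbd' hch hoh hwP sh sh'
    exact notin_closure hρ hclear
  -- all cut points avoid the closure of E
  have hCcl : ∀ z ∈ ({w : Point | w.1 = o.1 ∧ w.2 ∈ Icc o.2 hh} ∪
      {w : Point | w.2 = o.2 ∧ w.1 ∈ Icc o.1 ww}), z ∉ closure E := by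
    rintro z (⟨h1, h2⟩ | ⟨h1, h2⟩)
    · rcases eq_or_lt_of_le h2.1 with h3 | h3
      · have : z = o := Prod.ext h1 h3.symm
        rw [this]
        exact hclo
      · rcases eq_or_lt_of_le h2.2 with h3' | h3'
        · have : z = ((o.1, hh) : Point) := Prod.ext h1 h3'
          rw [this]
          exact hclev
        · have : z = ((o.1, z.2) : Point) := Prod.ext h1 rfl
          rw [this]
          exact hclCv z.2 ⟨h3, h3'⟩
    · rcases eq_or_lt_of_le h2.1 with h3 | h3
      · have : z = o := Prod.ext h3.symm h1
        rw [this]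
        exact hclo
      · rcases eq_or_lt_of_le h2.2 with h3' | h3'
        · have : z = ((ww, o.2) : Point) := Prod.ext h3' h1
          rw [this]
          exact hcleh
        · have : z = ((z.1, o.2) : Point) := Prod.ext rfl h1
          rw [this]
          exact hclCh z.1 ⟨h3, h3'⟩
  have hAP : frontier E ⊆ frontier P.carrier := by
    intro z hz
    rcases hfrE_sub hz with h | h
    · exact h
    · exact absurd (frontier_subset_closure hz) (hCcl z h)
  -- a point on the boundary of E
  have hAne : (frontier E).Nonempty := by
    rw [Set.nonempty_iff_ne_empty]
    intro hcon
    rcases frontier_eq_empty_iff.mp hcon with h | h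
    · exact hEne h
    · have : o ∈ E := by rw [h]; trivial
      exact this.2 (frontier_region_subset Q' (hcv' ⟨rfl, le_refl _, hhh.le⟩))
  -- the boundary of E is relatively open in the boundary of P
  have hopen : ∀ z ∈ frontier E, ∃ ρ > 0, ∀ w ∈ ball z ρ,
      w ∈ frontier P.carrier → w ∈ frontier E := by
    intro z hz
    have hzP : z ∈ frontier P.carrier := hAP hz
    have hznC : z ∉ ({w : Point | w.1 = o.1 ∧ w.2 ∈ Icc o.2 hh} ∪
        {w : Point | w.2 = o.2 ∧ w.1 ∈ Icc o.1 ww}) := by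
      intro hcon
      exact hCcl z hcon (frontier_subset_closure hz)
    have hCclosed : IsClosed ({w : Point | w.1 = o.1 ∧ w.2 ∈ Icc o.2 hh} ∪
        {w : Point | w.2 = o.2 ∧ w.1 ∈ Icc o.1 ww}) :=
      (isClosed_vset o.1 o.2 hh).union (isClosed_hset o.2 o.1 ww)
    obtain ⟨ρ₀, hρ₀, hball₀⟩ := Metric.isOpen_iff.mp hCclosed.isOpen_compl z hznC
    obtain ⟨r, hr, hforms⟩ := local_struct P z hzP
    set r' := min r ρ₀ with hr'def
    have hr' : 0 < r' := lt_min hr hρ₀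
    have hr'r : r' ≤ r := min_le_left _ _
    have hr'ρ : r' ≤ ρ₀ := min_le_right _ _
    -- W is preconnected
    have hWpre : IsPreconnected (interior P.carrier ∩ ball z r') := by
      rcases hforms with ⟨d, hd, heq⟩ | ⟨d, hd, heq⟩ | ⟨dx, dy, hdx, hdy, heq⟩ |
        ⟨dx, dy, hdx, hdy, heq⟩
      · rw [restrict_ball hr'r heq]
        exact ((convex_pos_mul_x d z.1).inter (convex_ball z r')).isPreconnected
      · rw [restrict_ball hr'r heq]
        exact ((convex_pos_mul_y d z.2).inter (convex_ball z r')).isPreconnected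
      · rw [restrict_ball hr'r heq]
        have : {w : Point | 0 < dx * (w.1 - z.1) ∧ 0 < dy * (w.2 - z.2)} =
            {w : Point | 0 < dx * (w.1 - z.1)} ∩ {w : Point | 0 < dy * (w.2 - z.2)} := rfl
        rw [this]
        exact (((convex_pos_mul_x dx z.1).inter (convex_pos_mul_y dy z.2)).inter
          (convex_ball z r')).isPreconnected
      · rw [restrict_ball hr'r heq]
        have hsplit : {w : Point | 0 < dx * (w.1 - z.1) ∨ 0 < dy * (w.2 - z.2)} ∩
            ball z r' =
            ({w : Point | 0 < dx * (w.1 - z.1)} ∩ ball z r') ∪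
            ({w : Point | 0 < dy * (w.2 - z.2)} ∩ ball z r') := by
          ext w
          simp only [Set.mem_inter_iff, Set.mem_union, mem_setOf_eq]
          tauto
        rw [hsplit]
        have hdx2 : dx * dx = 1 := by rcases hdx with rfl | rfl <;> norm_num
        have hdy2 : dy * dy = 1 := by rcases hdy with rfl | rfl <;> norm_num
        have habsx : |dx| = 1 := by rcases hdx with rfl | rfl <;> norm_num
        have habsy : |dy| = 1 := by rcases hdy with rfl | rfl <;> norm_num
        apply IsPreconnected.union ((z.1 + dx * (r' / 2), z.2 + dy * (r' / 2)) : Point)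
        · refine ⟨?_, ?_⟩
          · rw [mem_setOf_eq]
            have he : z.1 + dx * (r' / 2) - z.1 = dx * (r' / 2) := by ring
            rw [he, show dx * (dx * (r' / 2)) = dx * dx * (r' / 2) by ring, hdx2]
            linarith
          · rw [mem_ball_pt]
            constructor
            · rw [show z.1 + dx * (r' / 2) - z.1 = dx * (r' / 2) by ring,
                abs_mul, habsx, one_mul, abs_of_pos (by linarith)]
              linarith
            · rw [show z.2 + dy * (r' / 2) - z.2 = dy * (r' / 2) by ring,
                abs_mul, habsy, one_mul, abs_of_pos (by linarith)]
              linarith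
        · refine ⟨?_, ?_⟩
          · rw [mem_setOf_eq]
            have he : z.2 + dy * (r' / 2) - z.2 = dy * (r' / 2) := by ring
            rw [he, show dy * (dy * (r' / 2)) = dy * dy * (r' / 2) by ring, hdy2]
            linarith
          · rw [mem_ball_pt]
            constructor
            · rw [show z.1 + dx * (r' / 2) - z.1 = dx * (r' / 2) by ring,
                abs_mul, habsx, one_mul, abs_of_pos (by linarith)]
              linarith
            · rw [show z.2 + dy * (r' / 2) - z.2 = dy * (r' / 2) by ring,
                abs_mul, habsy, one_mul, abs_of_pos (by linarith)]
              linarith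
        · exact ((convex_pos_mul_x dx z.1).inter (convex_ball z r')).isPreconnected
        · exact ((convex_pos_mul_y dy z.2).inter (convex_ball z r')).isPreconnected
    set W := interior P.carrier ∩ ball z r' with hWdef
    have hWE : (W ∩ E).Nonempty := by
      have hzcl : z ∈ closure E := frontier_subset_closure hz
      rw [_root_.mem_closure_iff] at hzcl
      obtain ⟨w, hw1, hw2⟩ := hzcl (ball z r') isOpen_ball (mem_ball_self hr')
      exact ⟨w, ⟨hEP hw2, hw1⟩, hw2⟩
    have hWC : ∀ u ∈ W, u ∉ ({w : Point | w.1 = o.1 ∧ w.2 ∈ Icc o.2 hh} ∪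
        {w : Point | w.2 = o.2 ∧ w.1 ∈ Icc o.1 ww}) := by
      intro u hu hcon
      exact hball₀ (ball_subset_ball hr'ρ hu.2) hcon
    have hWfrS : ∀ u ∈ W, u ∉ frontier Q.region := by
      intro u hu huf
      rcases hbd huf with h | h
      · exact h.2 hu.1
      · exact hWC u hu h
    have hWfrS' : ∀ u ∈ W, u ∉ frontier Q'.region := by
      intro u hu huf
      rcases hbd' huf with h | h
      · exact h.2 hu.1
      · exact hWC u hu h
    obtain ⟨w₀, hw₀W, hw₀E⟩ := hWE
    have hWS : W ⊆ interior Q.region := by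
      rcases clopen_dichotomy hScl hWpre hWfrS with h | h
      · exact h
      · exfalso
        have : w₀ ∈ W ∩ Q.region := ⟨hw₀W, interior_subset hw₀E.1⟩
        rw [h] at this
        exact this
    have hWS' : W ∩ Q'.region = ∅ := by
      rcases clopen_dichotomy hS'cl hWpre hWfrS' with h | h
      · exfalso
        exact hw₀E.2 (interior_subset (h hw₀W))
      · exact h
    have hWsubE : W ⊆ E := by
      intro u hu
      refine ⟨hWS hu, ?_⟩
      intro hcon
      have : u ∈ W ∩ Q'.region := ⟨hu, hcon⟩
      rw [hWS'] at this
      exact this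
    refine ⟨r' / 2, by linarith, ?_⟩
    intro w hw hwP
    have hwcl : w ∈ closure E := by
      rw [_root_.mem_closure_iff]
      intro O hO hwO
      have hwclP : w ∈ closure (interior P.carrier) := by
        rw [← P.regular']
        exact P.compact'.isClosed.closure_eq ▸ frontier_subset_closure hwP
      rw [_root_.mem_closure_iff] at hwclP
      obtain ⟨v, hv1, hv2⟩ := hwclP (O ∩ ball w (r' / 2))
        (hO.inter isOpen_ball) ⟨hwO, mem_ball_self (by linarith)⟩
      refine ⟨v, hv1.1, hWsubE ⟨hv2, ?_⟩⟩
      have d1 : dist v w < r' / 2 := hv1.2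
      have d2 : dist w z < r' / 2 := hw
      calc dist v z ≤ dist v w + dist w z := dist_triangle v w z
        _ < r' := by linarith
    have hwnE : w ∉ E := fun hcon => (hwP.2) (hEP hcon)
    rw [frontier, hEopen.interior_eq]
    exact ⟨hwcl, hwnE⟩
  -- contradiction with the connectedness of the boundary of P
  choose! ρfun hρfun hprop using hopen
  have hpc := frontierP_preconnected P
  set U : Set Point := ⋃ z ∈ frontier E, ball z (ρfun z) with hUdef
  have hUopen : IsOpen U := isOpen_biUnion (fun z _ => isOpen_ball)
  have hVopen : IsOpen (frontier E)ᶜ := isClosed_frontier.isOpen_compl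
  obtain ⟨u, hu⟩ := hpc U (frontier E)ᶜ hUopen hVopen
    (by
      intro w hw
      by_cases hwf : w ∈ frontier E
      · left
        rw [hUdef, Set.mem_iUnion]
        exact ⟨w, Set.mem_iUnion.mpr ⟨hwf, mem_ball_self (hρfun w hwf)⟩⟩
      · right
        exact hwf)
    (by
      obtain ⟨z₀, hz₀⟩ := hAne
      refine ⟨z₀, hAP hz₀, ?_⟩
      rw [hUdef, Set.mem_iUnion]
      exact ⟨z₀, Set.mem_iUnion.mpr ⟨hz₀, mem_ball_self (hρfun z₀ hz₀)⟩⟩)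
    (by
      refine ⟨((o.1, hh) : Point), hvP, ?_⟩
      intro hcon
      exact hclev (frontier_subset_closure hcon))
  obtain ⟨huP, huU, huV⟩ := hu
  rw [hUdef, Set.mem_iUnion] at huU
  obtain ⟨z, hz⟩ := huU
  rw [Set.mem_iUnion] at hz
  obtain ⟨hzA, hzball⟩ := hz
  exact huV (hprop z hzA u hzball huP)

end SameOrigin

/-- Let `Q` and `Q'` be distinct subpolygons of `P` of type
2Co with up-right cut direction whose origin points lie on the same vertical
grid line of the canonical grid, with kitty corners `κ` of `o` and `κ'` of
`o'`. Then for any fixed grid point `p` in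
`(Q1κ ∪ Q4κ) ∩ (Q1κ' ∪ Q4κ')`, at most one of `(Q, o, p)` and `(Q', o', p)`
is a candidate triplet. -/
theorem at_most_one_candidate_2Co_vertical (P : RectPoly) (Q Q' : KCutSub P 2)
    (h : Type2Co Q) (h' : Type2Co Q')
    (hur : UpRight Q) (hur' : UpRight Q')
    (hline : Q.origin.1 = Q'.origin.1)
    (hne : Q.region ≠ Q'.region)
    (κ κ' : Point)
    (hκ : IsKittyCornerAt Q.region Q.origin κ)
    (hκ' : IsKittyCornerAt Q'.region Q'.origin κ')
    (p : Point) (hp : IsGridPoint P p)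
    (hquad : p ∈ (quadTR κ ∪ quadBR κ) ∩ (quadTR κ' ∪ quadBR κ')) :
    ¬(Candidate2C P Q p ∧ Candidate2C P Q' p) := by
  rintro ⟨hc, hc'⟩
  have hq : κ.1 ≤ p.1 := by
    rcases hquad.1 with h1 | h1
    · exact h1.1
    · exact h1.1
  have hq' : κ'.1 ≤ p.1 := by
    rcases hquad.2 with h1 | h1
    · exact h1.1
    · exact h1.1
  rcases lt_trichotomy Q.origin.2 Q'.origin.2 with holt | heq | hgt
  · exact chain_lt P Q Q' h' hur hur' hline κ' hκ' p hq' hc hc' holt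
  · have ho : Q.origin = Q'.origin := Prod.ext hline heq
    exact hne (Set.Subset.antisymm
      (same_origin_sub P Q Q' h.1 h'.1 hur hur' ho)
      (same_origin_sub P Q' Q h'.1 h.1 hur' hur ho.symm))
  · exact chain_lt P Q' Q h hur' hur hline.symm κ hκ p hq hc' hc hgt
end
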